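/- arXiv:2206.10297 — 5 statements merged into one kernel-verified Lean document; each statement's English description precedes it below -/
import Mathlib

section
/- Under the stated hypotheses on μ, there exists a unique evolution system (ψ_{s,t})_{(s,t)∈Δ_T} of bounded linear operators on Y such that for every (s,t) ∈ Δ_T and every sequence of partitions (π_n) of [s,t] with mesh |π_n| → 0 one has ‖ψ_{s,t} − μ^{π_n}_{s,t}‖_{L(X,Y)} → 0 (the operator norms being taken for the restrictions to X, measured in the Y-norm). -/
open Filter

structure StmtPartition (s t : ℝ) where
  k : ℕ
  hk : 0 < k
  pts : ℕ → ℝ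
  strict : ∀ i < k, pts i < pts (i + 1)
  first : pts 0 = s
  last : pts k = t

noncomputable def StmtPartition.mesh {s t : ℝ} (P : StmtPartition s t) : ℝ :=
  (Finset.range P.k).sup' (Finset.nonempty_range_iff.mpr P.hk.ne') fun i => P.pts (i + 1) - P.pts i

noncomputable def prodOps {Z : Type*} [NormedAddCommGroup Z] [NormedSpace ℝ Z] {s t : ℝ}
    (μ : ℝ → ℝ → (Z →L[ℝ] Z)) (P : StmtPartition s t) : Z →L[ℝ] Z :=
  ((List.range P.k).map fun i => μ (P.pts i) (P.pts (i + 1))).prod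

/-- The real Riemann zeta function `ζ(z) = ∑_{n ≥ 1} n^{-z}`. -/
noncomputable def zetaR (z : ℝ) : ℝ := ∑' n : ℕ, ((n : ℝ) + 1) ^ (-z)

section Blk
variable {Z : Type*} [NormedAddCommGroup Z] [NormedSpace ℝ Z]

noncomputable def blk (μ : ℝ → ℝ → (Z →L[ℝ] Z)) (p : ℕ → ℝ) (a b : ℕ) : Z →L[ℝ] Z :=
  ((List.range (b - a)).map fun i => μ (p (a + i)) (p (a + i + 1))).prod

lemma blk_self (μ : ℝ → ℝ → (Z →L[ℝ] Z)) (p : ℕ → ℝ) (a b : ℕ) (h : b ≤ a) :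
    blk μ p a b = 1 := by
  simp [blk, Nat.sub_eq_zero_of_le h]

lemma blk_cons (μ : ℝ → ℝ → (Z →L[ℝ] Z)) (p : ℕ → ℝ) (a b : ℕ) (h : a < b) :
    blk μ p a b = μ (p a) (p (a + 1)) * blk μ p (a + 1) b := by
  have h1 : b - a = (b - (a+1)) + 1 := by omega
  rw [blk, h1, List.range_succ_eq_map]
  simp only [List.map_cons, List.prod_cons, List.map_map, Nat.add_zero]
  congr 1
  rw [blk]
  congr 1
  apply List.map_congr_left
  intro i _
  simp only [Function.comp_apply, Nat.succ_eq_add_one]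
  congr 2 <;> omega

lemma blk_append (μ : ℝ → ℝ → (Z →L[ℝ] Z)) (p : ℕ → ℝ) (a b c : ℕ) (hab : a ≤ b) (hbc : b ≤ c) :
    blk μ p a c = blk μ p a b * blk μ p b c := by
  have h1 : c - a = (b - a) + (c - b) := by omega
  rw [blk, h1, List.range_add, List.map_append, List.prod_append]
  congr 1
  rw [blk]
  congr 1
  rw [List.map_map]
  apply List.map_congr_left
  intro i _
  simp only [Function.comp_apply]
  congr 2 <;> omega

lemma blk_congr (μ : ℝ → ℝ → (Z →L[ℝ] Z)) (p q : ℕ → ℝ) (a b : ℕ)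
    (h : ∀ i, a ≤ i → i ≤ b → p i = q i) : blk μ p a b = blk μ q a b := by
  rw [blk, blk]
  congr 1
  apply List.map_congr_left
  intro i hi
  rw [List.mem_range] at hi
  rw [h (a+i) (by omega) (by omega), h (a+i+1) (by omega) (by omega)]

lemma blk_shift (μ : ℝ → ℝ → (Z →L[ℝ] Z)) (p : ℕ → ℝ) (m a b : ℕ) :
    blk μ (fun i => p (m + i)) a b = blk μ p (m + a) (m + b) := by
  rw [blk, blk]
  have : (m + b) - (m + a) = b - a := by omega
  rw [this]
  congr 1
  apply List.map_congr_left
  intro i _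
  congr 2 <;> omega

lemma prodOps_eq_blk {s t : ℝ} (μ : ℝ → ℝ → (Z →L[ℝ] Z)) (P : StmtPartition s t) :
    prodOps μ P = blk μ P.pts 0 P.k := by
  rw [prodOps, blk]
  congr 1
  simp

end Blk

lemma chain_mono (p : ℕ → ℝ) (k : ℕ) (h : ∀ i < k, p i ≤ p (i + 1)) :
    ∀ i j, i ≤ j → j ≤ k → p i ≤ p j := by
  intro i j hij hjk
  induction j with
  | zero => simp_all
  | succ n ih =>
    rcases Nat.lt_or_ge i (n+1) with hl | hg
    · exact le_trans (ih (by omega) (by omega)) (h n (by omega))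
    · have : i = n + 1 := by omega
      simp [this]

namespace StmtPartition
variable {s t : ℝ} (P : StmtPartition s t)

lemma pts_mono : ∀ i j, i ≤ j → j ≤ P.k → P.pts i ≤ P.pts j :=
  chain_mono P.pts P.k (fun i hi => (P.strict i hi).le)

lemma pts_ge (i : ℕ) (hi : i ≤ P.k) : s ≤ P.pts i := by
  have := P.pts_mono 0 i (Nat.zero_le _) hi
  rwa [P.first] at this

lemma pts_le (i : ℕ) (hi : i ≤ P.k) : P.pts i ≤ t := by
  have := P.pts_mono i P.k hi le_rfl
  rwa [P.last] at this

lemma s_lt_t' : s < t ∨ P.k = 0 := by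
  left
  have h1 := P.strict 0 P.hk
  have h2 := P.pts_mono 1 P.k P.hk le_rfl
  rw [P.first] at h1
  rw [P.last] at h2
  exact lt_of_lt_of_le h1 h2

lemma s_lt_t (Q : StmtPartition s t) : s < t := (StmtPartition.s_lt_t' Q).resolve_right Q.hk.ne'

lemma len_le_mesh (i : ℕ) (hi : i < P.k) : P.pts (i + 1) - P.pts i ≤ P.mesh := by
  exact Finset.le_sup' (fun i => P.pts (i + 1) - P.pts i) (Finset.mem_range.mpr hi)

end StmtPartition

lemma exists_merge {s t : ℝ} (P Q : StmtPartition s t) :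
    ∃ (N : ℕ) (r : ℕ → ℝ) (mP mQ : ℕ → ℕ),
      0 < N ∧ (∀ i < N, r i < r (i+1)) ∧ r 0 = s ∧ r N = t ∧
      (∀ i < P.k, mP i < mP (i+1)) ∧ mP 0 = 0 ∧ mP P.k = N ∧ (∀ i ≤ P.k, r (mP i) = P.pts i) ∧
      (∀ i < Q.k, mQ i < mQ (i+1)) ∧ mQ 0 = 0 ∧ mQ Q.k = N ∧ (∀ i ≤ Q.k, r (mQ i) = Q.pts i) := by
  classical
  have hst : s < t := StmtPartition.s_lt_t P
  set F : Finset ℝ := ((Finset.range (P.k+1)).image P.pts) ∪ ((Finset.range (Q.k+1)).image Q.pts)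
    with hF
  set L : List ℝ := F.sort (· ≤ ·) with hL
  have hmem : ∀ x : ℝ, x ∈ L ↔ x ∈ F := fun x => Finset.mem_sort _
  have hsort : L.Pairwise (· < ·) := F.sortedLT_sort.pairwise
  have hmemP : ∀ i ≤ P.k, P.pts i ∈ L := by
    intro i hi
    rw [hmem, hF]
    exact Finset.mem_union_left _ (Finset.mem_image.mpr ⟨i, Finset.mem_range.mpr (by omega), rfl⟩)
  have hmemQ : ∀ i ≤ Q.k, Q.pts i ∈ L := by
    intro i hi
    rw [hmem, hF]
    exact Finset.mem_union_right _ (Finset.mem_image.mpr ⟨i, Finset.mem_range.mpr (by omega), rfl⟩)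
  have hs : s ∈ L := P.first ▸ hmemP 0 (Nat.zero_le _)
  have ht : t ∈ L := P.last ▸ hmemP P.k le_rfl
  have hFbound : ∀ x ∈ L, s ≤ x ∧ x ≤ t := by
    intro x hx
    rw [hmem, hF, Finset.mem_union] at hx
    rcases hx with hx | hx <;> rw [Finset.mem_image] at hx <;>
      obtain ⟨i, hi, rfl⟩ := hx <;> rw [Finset.mem_range] at hi
    · exact ⟨P.pts_ge i (by omega), P.pts_le i (by omega)⟩
    · exact ⟨Q.pts_ge i (by omega), Q.pts_le i (by omega)⟩
  have hlen : 1 < L.length := by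
    by_contra h
    push_neg at h
    interval_cases hl : L.length
    · simp [List.eq_nil_of_length_eq_zero hl] at hs
    · obtain ⟨a, ha⟩ := List.length_eq_one_iff.mp hl
      rw [ha] at hs ht
      simp only [List.mem_singleton] at hs ht
      exact absurd (hs.trans ht.symm) hst.ne
  set N : ℕ := L.length - 1 with hN
  have hNlen : N + 1 = L.length := by omega
  set r : ℕ → ℝ := fun i => L.getD i t with hr
  have hget : ∀ i (h : i < L.length), r i = L.get ⟨i, h⟩ := by
    intro i h
    rw [hr]
    simp only [List.getD_eq_getElem L t h]
    rfl
  have hmono := hsort.sortedLT.strictMono_get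
  have hstrict : ∀ i < N, r i < r (i+1) := by
    intro i hi
    rw [hget i (by omega), hget (i+1) (by omega)]
    exact hmono (by simp [Fin.lt_def])
  -- r is monotone on indices < length
  have hrmono : ∀ i j, i ≤ j → j < L.length → r i ≤ r j := by
    intro i j hij hj
    rw [hget i (by omega), hget j hj]
    rcases eq_or_lt_of_le hij with h | h
    · subst h; rfl
    · exact (hmono (by simp [Fin.lt_def, h])).le
  have hr0 : r 0 = s := by
    obtain ⟨⟨j, hj⟩, hjs⟩ := List.mem_iff_get.mp hs
    have h1 : r 0 ≤ s := by rw [← hjs, hget 0 (by omega)]; exact hmono.monotone (by simp)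
    have h2 : s ≤ r 0 := by
      rw [hget 0 (by omega)]
      exact (hFbound _ (List.get_mem L _)).1
    linarith
  have hrN : r N = t := by
    obtain ⟨⟨j, hj⟩, hjt⟩ := List.mem_iff_get.mp ht
    have h1 : t ≤ r N := by
      rw [← hjt, hget N (by omega)]
      exact hmono.monotone (by simp [Fin.le_def]; omega)
    have h2 : r N ≤ t := by
      rw [hget N (by omega)]
      exact (hFbound _ (List.get_mem L _)).2
    linarith
  have hinj : Function.Injective L.get := hmono.injective
  -- index maps
  set mP : ℕ → ℕ := fun i => L.idxOf (P.pts i) with hmP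
  set mQ : ℕ → ℕ := fun i => L.idxOf (Q.pts i) with hmQ
  have hidxP : ∀ i ≤ P.k, mP i < L.length := fun i hi => List.idxOf_lt_length_iff.mpr (hmemP i hi)
  have hidxQ : ∀ i ≤ Q.k, mQ i < L.length := fun i hi => List.idxOf_lt_length_iff.mpr (hmemQ i hi)
  have hrP : ∀ i ≤ P.k, r (mP i) = P.pts i := by
    intro i hi
    rw [hget _ (hidxP i hi)]
    exact List.idxOf_get _
  have hrQ : ∀ i ≤ Q.k, r (mQ i) = Q.pts i := by
    intro i hi
    rw [hget _ (hidxQ i hi)]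
    exact List.idxOf_get _
  have hgetlt : ∀ (a b : ℕ) (ha : a < L.length) (hb : b < L.length),
      L.get ⟨a, ha⟩ < L.get ⟨b, hb⟩ → a < b := by
    intro a b ha hb hab
    by_contra h
    push_neg at h
    have : L.get ⟨b, hb⟩ ≤ L.get ⟨a, ha⟩ := hmono.monotone (by simp [Fin.le_def]; omega)
    linarith
  have hsP : ∀ i < P.k, mP i < mP (i+1) := by
    intro i hi
    apply hgetlt _ _ (hidxP i (by omega)) (hidxP (i+1) (by omega))
    rw [← hget _ (hidxP i (by omega)), ← hget _ (hidxP (i+1) (by omega)), hrP i (by omega),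
      hrP (i+1) (by omega)]
    exact P.strict i hi
  have hsQ : ∀ i < Q.k, mQ i < mQ (i+1) := by
    intro i hi
    apply hgetlt _ _ (hidxQ i (by omega)) (hidxQ (i+1) (by omega))
    rw [← hget _ (hidxQ i (by omega)), ← hget _ (hidxQ (i+1) (by omega)), hrQ i (by omega),
      hrQ (i+1) (by omega)]
    exact Q.strict i hi
  have hgeteq : ∀ (a b : ℕ) (ha : a < L.length) (hb : b < L.length),
      L.get ⟨a, ha⟩ = L.get ⟨b, hb⟩ → a = b := by
    intro a b ha hb hab
    have := hinj hab
    exact congrArg Fin.val this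
  have h0P : mP 0 = 0 := by
    apply hgeteq _ _ (hidxP 0 (Nat.zero_le _)) (by omega)
    rw [← hget _ (hidxP 0 (Nat.zero_le _)), ← hget 0 (by omega), hrP 0 (Nat.zero_le _), P.first,
      hr0]
  have h0Q : mQ 0 = 0 := by
    apply hgeteq _ _ (hidxQ 0 (Nat.zero_le _)) (by omega)
    rw [← hget _ (hidxQ 0 (Nat.zero_le _)), ← hget 0 (by omega), hrQ 0 (Nat.zero_le _), Q.first,
      hr0]
  have hkP : mP P.k = N := by
    apply hgeteq _ _ (hidxP P.k le_rfl) (by omega)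
    rw [← hget _ (hidxP P.k le_rfl), ← hget N (by omega), hrP P.k le_rfl, P.last, hrN]
  have hkQ : mQ Q.k = N := by
    apply hgeteq _ _ (hidxQ Q.k le_rfl) (by omega)
    rw [← hget _ (hidxQ Q.k le_rfl), ← hget N (by omega), hrQ Q.k le_rfl, Q.last, hrN]
  exact ⟨N, r, mP, mQ, by omega, hstrict, hr0, hrN, hsP, h0P, hkP, hrP, hsQ, h0Q, hkQ, hrQ⟩

noncomputable def unif (s t : ℝ) (hst : s < t) (n : ℕ) : StmtPartition s t where
  k := n + 1
  hk := n.succ_pos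
  pts := fun i => s + i * ((t - s) / (n + 1))
  strict := by
    intro i _
    have hd : 0 < (t - s) / (n + 1) := div_pos (by linarith) (by positivity)
    push_cast
    nlinarith
  first := by simp
  last := by field_simp; push_cast; ring

lemma unif_len (s t : ℝ) (hst : s < t) (n i : ℕ) :
    (unif s t hst n).pts (i + 1) - (unif s t hst n).pts i = (t - s) / (n + 1) := by
  simp only [unif]
  push_cast
  ring

lemma unif_mesh (s t : ℝ) (hst : s < t) (n : ℕ) :
    (unif s t hst n).mesh = (t - s) / (n + 1) := by
  apply le_antisymm
  · apply Finset.sup'_le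
    intro i _
    rw [unif_len]
  · have := (unif s t hst n).len_le_mesh 0 (unif s t hst n).hk
    rwa [unif_len] at this

noncomputable def concatP {s u t : ℝ} (P : StmtPartition s u) (Q : StmtPartition u t) : StmtPartition s t where
  k := P.k + Q.k
  hk := Nat.add_pos_left P.hk _
  pts := fun i => if i ≤ P.k then P.pts i else Q.pts (i - P.k)
  strict := by
    intro i hi
    rcases Nat.lt_or_ge (i+1) (P.k+1) with h | h
    · rw [if_pos (by omega), if_pos (by omega)]
      exact P.strict i (by omega)
    · rcases Nat.eq_or_lt_of_le h with h' | h'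
      · have hik : i = P.k := by omega
        have hn : ¬ (i + 1 ≤ P.k) := by omega
        rw [if_pos (by omega), if_neg hn, hik]
        have : P.k + 1 - P.k = 1 := by omega
        rw [this, P.last]
        have hq := Q.strict 0 Q.hk
        rwa [Q.first] at hq
      · have hn1 : ¬ (i ≤ P.k) := by omega
        have hn2 : ¬ (i + 1 ≤ P.k) := by omega
        rw [if_neg hn1, if_neg hn2]
        have h2 : i + 1 - P.k = (i - P.k) + 1 := by omega
        rw [h2]
        exact Q.strict (i - P.k) (by omega)
  first := by simp [P.first]
  last := by
    rcases Nat.eq_zero_or_pos Q.k with h | h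
    · exact absurd h Q.hk.ne'
    · have hQ : ¬ (P.k + Q.k ≤ P.k) := by omega
      rw [if_neg hQ]
      have : P.k + Q.k - P.k = Q.k := by omega
      rw [this, Q.last]

lemma concatP_pts_left {s u t : ℝ} (P : StmtPartition s u) (Q : StmtPartition u t) (i : ℕ) (hi : i ≤ P.k) :
    (concatP P Q).pts i = P.pts i := by
  simp only [concatP, if_pos hi]

lemma concatP_pts_right {s u t : ℝ} (P : StmtPartition s u) (Q : StmtPartition u t) (i : ℕ) :
    (concatP P Q).pts (P.k + i) = Q.pts i := by
  rcases Nat.eq_zero_or_pos i with h | h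
  · subst h
    show (if P.k + 0 ≤ P.k then P.pts (P.k + 0) else Q.pts (P.k + 0 - P.k)) = Q.pts 0
    rw [if_pos (by omega)]
    have h0 : P.k + 0 = P.k := by omega
    rw [h0, P.last, Q.first]
  · show (if P.k + i ≤ P.k then P.pts (P.k + i) else Q.pts (P.k + i - P.k)) = Q.pts i
    have hn : ¬ (P.k + i ≤ P.k) := by omega
    rw [if_neg hn]
    congr 1
    omega

lemma concatP_mesh {s u t : ℝ} (P : StmtPartition s u) (Q : StmtPartition u t) :
    (concatP P Q).mesh ≤ max P.mesh Q.mesh := by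
  apply Finset.sup'_le
  intro i hi
  rw [Finset.mem_range] at hi
  rcases Nat.lt_or_ge i P.k with h | h
  · rw [concatP_pts_left P Q i (by omega), concatP_pts_left P Q (i+1) (by omega)]
    exact le_trans (P.len_le_mesh i h) (le_max_left _ _)
  · obtain ⟨j, rfl⟩ : ∃ j, i = P.k + j := ⟨i - P.k, by omega⟩
    have h2 : P.k + j + 1 = P.k + (j + 1) := by omega
    rw [h2, concatP_pts_right, concatP_pts_right]
    have hj : j < Q.k := by
      have : P.k + j < P.k + Q.k := hi
      omega
    exact le_trans (Q.len_le_mesh j hj) (le_max_right _ _)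

lemma prodOps_concatP {Z : Type*} [NormedAddCommGroup Z] [NormedSpace ℝ Z]
    (μ : ℝ → ℝ → (Z →L[ℝ] Z)) {s u t : ℝ} (P : StmtPartition s u) (Q : StmtPartition u t) :
    prodOps μ (concatP P Q) = prodOps μ P * prodOps μ Q := by
  rw [prodOps_eq_blk, prodOps_eq_blk, prodOps_eq_blk]
  show blk μ (concatP P Q).pts 0 (P.k + Q.k) = _
  rw [blk_append μ _ 0 P.k (P.k + Q.k) (Nat.zero_le _) (Nat.le_add_right _ _)]
  congr 1
  · exact blk_congr μ _ _ 0 P.k (fun i _ hi => concatP_pts_left P Q i hi)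
  · have h1 : blk μ (concatP P Q).pts (P.k + 0) (P.k + Q.k)
        = blk μ (fun i => (concatP P Q).pts (P.k + i)) 0 Q.k := (blk_shift μ _ P.k 0 Q.k).symm
    rw [← Nat.add_zero P.k] at *
    rw [h1]
    exact blk_congr μ _ _ 0 Q.k (fun i _ _ => concatP_pts_right P Q i)

lemma summable_zetaR {z : ℝ} (hz : 1 < z) : Summable (fun n : ℕ => ((n:ℝ)+1) ^ (-z)) := by
  have h1 : Summable (fun n : ℕ => (n:ℝ) ^ (-z)) := Real.summable_nat_rpow.mpr (by linarith)
  have h2 := (summable_nat_add_iff (f := fun n : ℕ => (n:ℝ) ^ (-z)) 1).mpr h1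
  convert h2 using 2 with n
  case e'_3 => rfl
  push_cast
  ring_nf

lemma zetaR_nonneg {z : ℝ} : 0 ≤ zetaR z :=
  tsum_nonneg (fun n => Real.rpow_nonneg (by positivity) _)

lemma partial_le_zetaR {z : ℝ} (hz : 1 < z) (m : ℕ) :
    ∑ i ∈ Finset.range m, ((i:ℝ)+1) ^ (-z) ≤ zetaR z :=
  Summable.sum_le_tsum _ (fun i _ => Real.rpow_nonneg (by positivity) _) (summable_zetaR hz)

lemma rpow_small {w : ℝ} (hw : 0 < w) : ∀ ε : ℝ, 0 < ε → ∃ η : ℝ, 0 < η ∧ η ^ w ≤ ε := by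
  intro ε hε
  rcases le_or_gt 1 ε with h | h
  · exact ⟨1, one_pos, by rw [Real.one_rpow]; exact h⟩
  · refine ⟨ε ^ (1/w), Real.rpow_pos_of_pos hε _, ?_⟩
    rw [← Real.rpow_mul hε.le, one_div, inv_mul_cancel₀ hw.ne', Real.rpow_one]

lemma sum_even_odd (f : ℕ → ℝ) (n : ℕ) :
    ∑ j ∈ Finset.range n, f j =
      (∑ i ∈ Finset.range ((n+1)/2), f (2*i)) + ∑ i ∈ Finset.range (n/2), f (2*i+1) := by
  induction n with
  | zero => simp
  | succ n ih =>
    rw [Finset.sum_range_succ, ih]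
    rcases Nat.even_or_odd n with ⟨m, rfl⟩ | ⟨m, rfl⟩
    · have e1 : (m + m + 1 + 1) / 2 = m + 1 := by omega
      have e2 : (m + m + 1) / 2 = m := by omega
      have e3 : (m + m) / 2 = m := by omega
      rw [e1, e2, e3, Finset.sum_range_succ]
      have e4 : 2 * m = m + m := by omega
      rw [e4]
      ring
    · have e0 : (2 * m + 1 + 1 + 1) / 2 = m + 1 := by omega
      have e1 : (2 * m + 1 + 1) / 2 = m + 1 := by omega
      have e2 : (2 * m + 1) / 2 = m := by omega
      rw [e0, e1, e2, Finset.sum_range_succ (fun i => f (2 * i + 1)) m]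
      ring

set_option maxHeartbeats 4000000 in
theorem stmt0
    {X Y : Type*} [NormedAddCommGroup X] [NormedSpace ℝ X] [CompleteSpace X]
    [NormedAddCommGroup Y] [NormedSpace ℝ Y] [CompleteSpace Y]
    (T : ℝ) (hT : 0 < T)
    (ι : X →L[ℝ] Y) (hι_inj : Function.Injective ι) (hι_dense : DenseRange ι)
    (hι_norm : ∀ x : X, ‖ι x‖ ≤ ‖x‖)
    (μ : ℝ → ℝ → (Y →L[ℝ] Y)) (μX : ℝ → ℝ → (X →L[ℝ] X))
    (hcompat : ∀ s t : ℝ, 0 ≤ s → s ≤ t → t ≤ T → ∀ x : X, μ s t (ι x) = ι (μX s t x))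
    (hidY : ∀ s : ℝ, 0 ≤ s → s ≤ T → μ s s = 1)
    (hidX : ∀ s : ℝ, 0 ≤ s → s ≤ T → μX s s = 1)
    (ε₁ ε₂ : ℝ → ℝ → ℝ)
    (hε₁_cont : ContinuousOn (fun p : ℝ × ℝ => ε₁ p.1 p.2) {p | 0 ≤ p.1 ∧ p.1 ≤ p.2 ∧ p.2 ≤ T})
    (hε₂_cont : ContinuousOn (fun p : ℝ × ℝ => ε₂ p.1 p.2) {p | 0 ≤ p.1 ∧ p.1 ≤ p.2 ∧ p.2 ≤ T})
    (hε₁_nonneg : ∀ s t : ℝ, 0 ≤ s → s ≤ t → t ≤ T → 0 ≤ ε₁ s t)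
    (hε₂_nonneg : ∀ s t : ℝ, 0 ≤ s → s ≤ t → t ≤ T → 0 ≤ ε₂ s t)
    (hε₁_mono : ∀ s s' t t' : ℝ, 0 ≤ s → s ≤ s' → s' ≤ t → t ≤ t' → t' ≤ T → ε₁ s' t ≤ ε₁ s t')
    (hε₂_mono : ∀ s s' t t' : ℝ, 0 ≤ s → s ≤ s' → s' ≤ t → t ≤ t' → t' ≤ T → ε₂ s' t ≤ ε₂ s t')
    (hboundX : ∀ s t : ℝ, 0 ≤ s → s ≤ t → t ≤ T → ∀ P : StmtPartition s t, ‖prodOps μX P‖ ≤ ε₁ s t)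
    (hboundY : ∀ s t : ℝ, 0 ≤ s → s ≤ t → t ≤ T → ∀ P : StmtPartition s t, ‖prodOps μ P‖ ≤ ε₂ s t)
    (χ : ℝ → ℝ → ℝ)
    (hχ_cont : ContinuousOn (fun p : ℝ × ℝ => χ p.1 p.2) {p | 0 ≤ p.1 ∧ p.1 ≤ p.2 ∧ p.2 ≤ T})
    (hχ_nonneg : ∀ s t : ℝ, 0 ≤ s → s ≤ t → t ≤ T → 0 ≤ χ s t)
    (hχ_diag : ∀ s : ℝ, 0 ≤ s → s ≤ T → χ s s = 0)
    (hχ_super : ∀ s u t : ℝ, 0 ≤ s → s ≤ u → u ≤ t → t ≤ T → χ s u + χ u t ≤ χ s t)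
    (z : ℝ) (hz : 1 < z)
    (halmost : ∀ s u t : ℝ, 0 ≤ s → s ≤ u → u ≤ t → t ≤ T →
      ‖(μ s t - μ s u * μ u t).comp ι‖ ≤ χ s t ^ z)
    :
    ∃ ψ : ℝ → ℝ → (Y →L[ℝ] Y),
      ((∀ s : ℝ, 0 ≤ s → s ≤ T → ψ s s = 1) ∧
        (∀ s u t : ℝ, 0 ≤ s → s ≤ u → u ≤ t → t ≤ T → ψ s t = ψ s u * ψ u t) ∧
        (∀ s t : ℝ, 0 ≤ s → s ≤ t → t ≤ T → ∀ π : ℕ → StmtPartition s t,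
          Tendsto (fun n => (π n).mesh) atTop (nhds 0) →
          Tendsto (fun n => ‖(ψ s t - prodOps μ (π n)).comp ι‖) atTop (nhds 0))) ∧
      ∀ ψ' : ℝ → ℝ → (Y →L[ℝ] Y),
        ((∀ s : ℝ, 0 ≤ s → s ≤ T → ψ' s s = 1) ∧
          (∀ s u t : ℝ, 0 ≤ s → s ≤ u → u ≤ t → t ≤ T → ψ' s t = ψ' s u * ψ' u t) ∧
          (∀ s t : ℝ, 0 ≤ s → s ≤ t → t ≤ T → ∀ π : ℕ → StmtPartition s t,
            Tendsto (fun n => (π n).mesh) atTop (nhds 0) →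
            Tendsto (fun n => ‖(ψ' s t - prodOps μ (π n)).comp ι‖) atTop (nhds 0))) →
        ∀ s t : ℝ, 0 ≤ s → s ≤ t → t ≤ T → ψ' s t = ψ s t := by
  classical
  -- global constants
  set E₁ : ℝ := max 1 (ε₁ 0 T) with hE₁def
  set E₂ : ℝ := max 1 (ε₂ 0 T) with hE₂def
  have hE₁ : 1 ≤ E₁ := le_max_left _ _
  have hE₂ : 1 ≤ E₂ := le_max_left _ _
  have hE₁0 : 0 ≤ E₁ := by linarith
  have hE₂0 : 0 ≤ E₂ := by linarith
  have hz0 : (0:ℝ) ≤ z := by linarith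
  have hz1 : (0:ℝ) < z - 1 := by linarith
  set Zc : ℝ := zetaR z with hZcdef
  have hZc0 : 0 ≤ Zc := zetaR_nonneg
  set K : ℝ := E₂ * E₁ * (2:ℝ) ^ z * Zc with hKdef
  have hK0 : 0 ≤ K := by
    have : (0:ℝ) ≤ (2:ℝ) ^ z := Real.rpow_nonneg (by norm_num) _
    positivity
  -- χ monotone
  have hχ_mono : ∀ s u v t : ℝ, 0 ≤ s → s ≤ u → u ≤ v → v ≤ t → t ≤ T →
      χ u v ≤ χ s t := by
    intro s u v t h0s hsu huv hvt htT
    have hvT : v ≤ T := le_trans hvt htT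
    have h1 := hχ_super s u v h0s hsu huv hvT
    have h2 := hχ_super s v t h0s (le_trans hsu huv) hvt htT
    have h3 := hχ_nonneg s u h0s hsu (le_trans (le_trans huv hvt) htT)
    have h4 := hχ_nonneg v t (le_trans h0s (le_trans hsu huv)) hvt htT
    linarith
  -- chain sums of χ
  have hchainSum : ∀ (n : ℕ) (p : ℕ → ℝ), (∀ i < n, p i ≤ p (i+1)) → 0 ≤ p 0 → p n ≤ T →
      ∑ i ∈ Finset.range n, χ (p i) (p (i+1)) ≤ χ (p 0) (p n) := by
    intro n
    induction n with
    | zero =>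
      intro p _ h0 hT'
      simpa using hχ_nonneg (p 0) (p 0) h0 le_rfl hT'
    | succ n ih =>
      intro p hmono h0 hT'
      have hlast : p n ≤ p (n+1) := hmono n (by omega)
      have hmn : ∀ i < n, p i ≤ p (i+1) := fun i hi => hmono i (by omega)
      have h0n : p 0 ≤ p n := chain_mono p n hmn 0 n (Nat.zero_le _) le_rfl
      rw [Finset.sum_range_succ]
      have hih := ih p hmn h0 (le_trans hlast hT')
      have hsup := hχ_super (p 0) (p n) (p (n+1)) h0 h0n hlast hT'
      linarith
  -- operator norm bounds for blocks
  have hblkY : ∀ (p : ℕ → ℝ) (k a b : ℕ), a ≤ b → b ≤ k → (∀ i < k, p i < p (i+1)) →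
      0 ≤ p 0 → p k ≤ T → ‖blk μ p a b‖ ≤ E₂ := by
    intro p k a b hab hbk hchain h0 hkT
    have hw : ∀ i < k, p i ≤ p (i+1) := fun i hi => (hchain i hi).le
    have hpm := chain_mono p k hw
    rcases eq_or_lt_of_le hab with rfl | hab'
    · rw [blk_self μ p a a le_rfl, ContinuousLinearMap.one_def]
      exact le_trans ContinuousLinearMap.norm_id_le hE₂
    · set P : StmtPartition (p a) (p b) :=
        ⟨b - a, by omega, fun i => p (a + i), fun i hi => hchain (a + i) (by omega),
          by simp, by simpa using congrArg p (by omega : a + (b - a) = b)⟩ with hPdef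
      have hpr : prodOps μ P = blk μ p a b := by
        rw [prodOps_eq_blk]
        show blk μ (fun i => p (a + i)) 0 (b - a) = _
        rw [blk_shift μ p a 0 (b - a)]
        have e1 : a + 0 = a := by omega
        have e2 : a + (b - a) = b := by omega
        rw [e1, e2]
      have h0a : 0 ≤ p a := le_trans h0 (hpm 0 a (Nat.zero_le _) (by omega))
      have hbT : p b ≤ T := le_trans (hpm b k (by omega) le_rfl) hkT
      have hb1 := hboundY (p a) (p b) h0a (hpm a b hab'.le hbk) hbT P
      rw [hpr] at hb1
      have hb2 : ε₂ (p a) (p b) ≤ ε₂ 0 T :=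
        hε₂_mono 0 (p a) (p b) T le_rfl h0a (hpm a b hab'.le hbk) hbT le_rfl
      exact le_trans hb1 (le_trans hb2 (le_max_right _ _))
  have hblkX : ∀ (p : ℕ → ℝ) (k a b : ℕ), a ≤ b → b ≤ k → (∀ i < k, p i < p (i+1)) →
      0 ≤ p 0 → p k ≤ T → ‖blk μX p a b‖ ≤ E₁ := by
    intro p k a b hab hbk hchain h0 hkT
    have hw : ∀ i < k, p i ≤ p (i+1) := fun i hi => (hchain i hi).le
    have hpm := chain_mono p k hw
    rcases eq_or_lt_of_le hab with rfl | hab'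
    · rw [blk_self μX p a a le_rfl, ContinuousLinearMap.one_def]
      exact le_trans ContinuousLinearMap.norm_id_le hE₁
    · set P : StmtPartition (p a) (p b) :=
        ⟨b - a, by omega, fun i => p (a + i), fun i hi => hchain (a + i) (by omega),
          by simp, by simpa using congrArg p (by omega : a + (b - a) = b)⟩ with hPdef
      have hpr : prodOps μX P = blk μX p a b := by
        rw [prodOps_eq_blk]
        show blk μX (fun i => p (a + i)) 0 (b - a) = _
        rw [blk_shift μX p a 0 (b - a)]
        have e1 : a + 0 = a := by omega
        have e2 : a + (b - a) = b := by omega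
        rw [e1, e2]
      have h0a : 0 ≤ p a := le_trans h0 (hpm 0 a (Nat.zero_le _) (by omega))
      have hbT : p b ≤ T := le_trans (hpm b k (by omega) le_rfl) hkT
      have hb1 := hboundX (p a) (p b) h0a (hpm a b hab'.le hbk) hbT P
      rw [hpr] at hb1
      have hb2 : ε₁ (p a) (p b) ≤ ε₁ 0 T :=
        hε₁_mono 0 (p a) (p b) T le_rfl h0a (hpm a b hab'.le hbk) hbT le_rfl
      exact le_trans hb1 (le_trans hb2 (le_max_right _ _))
  have hblkcompat : ∀ (p : ℕ → ℝ) (k a b : ℕ), a ≤ b → b ≤ k → (∀ i < k, p i < p (i+1)) →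
      0 ≤ p 0 → p k ≤ T → ∀ x : X, blk μ p a b (ι x) = ι (blk μX p a b x) := by
    intro p k a b hab hbk hchain h0 hkT
    have hw : ∀ i < k, p i ≤ p (i+1) := fun i hi => (hchain i hi).le
    have hpm := chain_mono p k hw
    have H : ∀ (n a : ℕ), a + n ≤ k → ∀ x : X,
        blk μ p a (a + n) (ι x) = ι (blk μX p a (a + n) x) := by
      intro n
      induction n with
      | zero =>
        intro a _ x
        rw [blk_self μ p a (a + 0) (by omega), blk_self μX p a (a + 0) (by omega)]
        simp
      | succ n ih =>
        intro a hak x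
        have e : a + (n + 1) = (a + 1) + n := by omega
        rw [blk_cons μ p a (a + (n+1)) (by omega), blk_cons μX p a (a + (n+1)) (by omega), e]
        rw [ContinuousLinearMap.mul_apply, ContinuousLinearMap.mul_apply]
        rw [ih (a+1) (by omega) x]
        have h0a : 0 ≤ p a := le_trans h0 (hpm 0 a (Nat.zero_le _) (by omega))
        have ha1T : p (a+1) ≤ T := le_trans (hpm (a+1) k (by omega) le_rfl) hkT
        exact hcompat (p a) (p (a+1)) h0a (hw a (by omega)) ha1T _
    intro x
    have := H (b - a) a (by omega) x
    have e : a + (b - a) = b := by omega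
    rwa [e] at this
  -- norm of A ∘ D ∘ B restricted to X
  have hADB : ∀ (A D B : Y →L[ℝ] Y) (BX : X →L[ℝ] X), (∀ x, B (ι x) = ι (BX x)) →
      ∀ a d b : ℝ, 0 ≤ a → 0 ≤ d → 0 ≤ b → ‖A‖ ≤ a → ‖D.comp ι‖ ≤ d → ‖BX‖ ≤ b →
      ‖(A * (D * B)).comp ι‖ ≤ a * d * b := by
    intro A D B BX hBXc a d b ha hd hb hA hD hBX'
    apply ContinuousLinearMap.opNorm_le_bound _ (by positivity)
    intro x
    have e : (A * (D * B)).comp ι x = A ((D.comp ι) (BX x)) := by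
      simp [ContinuousLinearMap.comp_apply, ContinuousLinearMap.mul_apply, hBXc x]
    rw [e]
    calc ‖A ((D.comp ι) (BX x))‖ ≤ a * ‖(D.comp ι) (BX x)‖ := by
          refine le_trans (A.le_opNorm _) ?_
          exact mul_le_mul hA le_rfl (norm_nonneg _) ha
      _ ≤ a * (d * ‖BX x‖) := by
          refine mul_le_mul le_rfl ?_ (norm_nonneg _) ha
          refine le_trans ((D.comp ι).le_opNorm (BX x)) ?_
          exact mul_le_mul hD le_rfl (norm_nonneg _) hd
      _ ≤ a * (d * (b * ‖x‖)) := by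
          refine mul_le_mul le_rfl ?_ (by positivity) ha
          refine mul_le_mul le_rfl ?_ (norm_nonneg _) hd
          exact le_trans (BX.le_opNorm x) (mul_le_mul hBX' le_rfl (norm_nonneg _) hb)
      _ = a * d * b * ‖x‖ := by ring
  -- the sewing estimate (Lemma A)
  have hsew : ∀ (k : ℕ) (p : ℕ → ℝ), 0 < k → (∀ i < k, p i < p (i+1)) → 0 ≤ p 0 → p k ≤ T →
      ‖(blk μ p 0 k - μ (p 0) (p k)).comp ι‖ ≤ K * χ (p 0) (p k) ^ z := by
    have main : ∀ (n : ℕ) (p : ℕ → ℝ), (∀ i < n+1, p i < p (i+1)) → 0 ≤ p 0 → p (n+1) ≤ T →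
        ‖(blk μ p 0 (n+1) - μ (p 0) (p (n+1))).comp ι‖
          ≤ E₂ * E₁ * (2:ℝ)^z * (∑ i ∈ Finset.range n, ((i:ℝ)+1)^(-z)) * χ (p 0) (p (n+1)) ^ z := by
      intro n
      induction n with
      | zero =>
        intro p hchain h0 hT'
        have hb : blk μ p 0 1 = μ (p 0) (p 1) := by
          rw [blk_cons μ p 0 1 one_pos, blk_self μ p 1 1 le_rfl, mul_one]
        rw [hb, sub_self, ContinuousLinearMap.zero_comp]
        simp
      | succ n ih =>
        intro p hchain h0 hT'
        have hw : ∀ i < n+2, p i ≤ p (i+1) := fun i hi => (hchain i hi).le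
        have hpm := chain_mono p (n+2) hw
        set c : ℝ := χ (p 0) (p (n+2)) with hcdef
        have h0' : ∀ j, j ≤ n+2 → 0 ≤ p j := fun j hj =>
          le_trans h0 (hpm 0 j (Nat.zero_le _) hj)
        have hT'' : ∀ j, j ≤ n+2 → p j ≤ T := fun j hj =>
          le_trans (hpm j (n+2) hj le_rfl) hT'
        have hc0 : 0 ≤ c := hχ_nonneg _ _ h0 (hpm 0 (n+2) (Nat.zero_le _) le_rfl) hT'
        -- sum of second-neighbour increments is at most 2c
        have hsum2 : ∑ j ∈ Finset.range (n+1), χ (p j) (p (j+2)) ≤ 2 * c := by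
          rw [sum_even_odd (fun j => χ (p j) (p (j+2))) (n+1)]
          have heven : ∑ i ∈ Finset.range ((n+1+1)/2), χ (p (2*i)) (p (2*i+2)) ≤ c := by
            set m₁ := (n+1+1)/2 with hm₁
            set q : ℕ → ℝ := fun i => p (min (2*i) (n+2)) with hq
            have hsum : ∑ i ∈ Finset.range m₁, χ (p (2*i)) (p (2*i+2))
                = ∑ i ∈ Finset.range m₁, χ (q i) (q (i+1)) := by
              apply Finset.sum_congr rfl
              intro i hi
              rw [Finset.mem_range] at hi
              rw [hq]
              simp only
              congr 2 <;> omega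
            rw [hsum]
            have hqw : ∀ i < m₁, q i ≤ q (i+1) := by
              intro i hi
              rw [hq]
              exact hpm _ _ (by omega) (by omega)
            have hchs := hchainSum m₁ q hqw
              (by rw [hq]; simp only; exact le_trans h0 (hpm 0 _ (Nat.zero_le _) (by omega)))
              (by rw [hq]; exact hT'' _ (by omega))
            refine le_trans hchs ?_
            have hq0 : q 0 = p 0 := by rw [hq]; simp
            rw [hq0, hq]
            simp only
            exact hχ_mono (p 0) (p 0) (p (min (2*m₁) (n+2))) (p (n+2)) h0 le_rfl
              (hpm 0 _ (Nat.zero_le _) (by omega)) (hpm _ _ (by omega) le_rfl) hT'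
          have hodd : ∑ i ∈ Finset.range ((n+1)/2), χ (p (2*i+1)) (p (2*i+1+2)) ≤ c := by
            set m₂ := (n+1)/2 with hm₂
            set q : ℕ → ℝ := fun i => p (min (2*i+1) (n+2)) with hq
            have hsum : ∑ i ∈ Finset.range m₂, χ (p (2*i+1)) (p (2*i+1+2))
                = ∑ i ∈ Finset.range m₂, χ (q i) (q (i+1)) := by
              apply Finset.sum_congr rfl
              intro i hi
              rw [Finset.mem_range] at hi
              rw [hq]
              simp only
              congr 2 <;> omega
            rw [hsum]
            have hqw : ∀ i < m₂, q i ≤ q (i+1) := by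
              intro i hi
              rw [hq]
              exact hpm _ _ (by omega) (by omega)
            have hchs := hchainSum m₂ q hqw
              (by rw [hq]; simp only; exact le_trans h0 (hpm 0 _ (Nat.zero_le _) (by omega)))
              (by rw [hq]; exact hT'' _ (by omega))
            refine le_trans hchs ?_
            have hq0 : q 0 = p (min 1 (n+2)) := by rw [hq]
            rw [hq0, hq]
            simp only
            exact hχ_mono (p 0) (p (min 1 (n+2))) (p (min (2*m₂+1) (n+2))) (p (n+2)) h0
              (hpm 0 _ (Nat.zero_le _) (by omega)) (hpm _ _ (by omega) (by omega))
              (hpm _ _ (by omega) le_rfl) hT'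
          linarith
        -- select an index with small second-neighbour increment
        have hsel : ∃ j0, j0 < n+1 ∧ χ (p j0) (p (j0+2)) ≤ 2*c/((n:ℝ)+1) := by
          by_contra hcon
          push_neg at hcon
          have hlt : ∑ j ∈ Finset.range (n+1), (2*c/((n:ℝ)+1))
              < ∑ j ∈ Finset.range (n+1), χ (p j) (p (j+2)) := by
            apply Finset.sum_lt_sum_of_nonempty (Finset.nonempty_range_iff.mpr (by omega))
            intro j hj
            exact hcon j (Finset.mem_range.mp hj)
          rw [Finset.sum_const, Finset.card_range, nsmul_eq_mul] at hlt
          have hne : ((n:ℝ)+1) ≠ 0 := by positivity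
          have : ((n:ℝ)+1) * (2*c/((n:ℝ)+1)) = 2*c := by field_simp
          push_cast at hlt
          rw [this] at hlt
          linarith
        obtain ⟨j0, hj0, hj0le⟩ := hsel
        -- the partition with the point j0+1 removed
        set q : ℕ → ℝ := fun i => if i < j0 + 1 then p i else p (i+1) with hqdef
        have hq_small : ∀ i, i ≤ j0 → q i = p i := by
          intro i hi
          rw [hqdef]
          simp only
          rw [if_pos (by omega)]
        have hq_big : ∀ i, j0 + 1 ≤ i → q i = p (i+1) := by
          intro i hi
          rw [hqdef]
          simp only
          rw [if_neg (by omega)]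
        have hqchain : ∀ i < n+1, q i < q (i+1) := by
          intro i hi
          by_cases h1 : i + 1 ≤ j0
          · rw [hq_small i (by omega), hq_small (i+1) h1]
            exact hchain i (by omega)
          · by_cases h2 : i ≤ j0
            · have hij : i = j0 := by omega
              rw [hq_small i h2, hq_big (i+1) (by omega), hij]
              exact lt_trans (hchain j0 (by omega)) (hchain (j0+1) (by omega))
            · rw [hq_big i (by omega), hq_big (i+1) (by omega)]
              exact hchain (i+1) (by omega)
        have hq0 : q 0 = p 0 := hq_small 0 (Nat.zero_le _)
        have hqlast : q (n+1) = p (n+2) := hq_big (n+1) (by omega)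
        have hih := ih q hqchain (by rw [hq0]; exact h0) (by rw [hqlast]; exact hT')
        rw [hq0, hqlast] at hih
        -- decomposition identities
        have hE1 : blk μ p 0 (n+2)
            = blk μ p 0 j0 * ((μ (p j0) (p (j0+1)) * μ (p (j0+1)) (p (j0+2)))
              * blk μ p (j0+2) (n+2)) := by
          rw [blk_append μ p 0 j0 (n+2) (by omega) (by omega),
            blk_cons μ p j0 (n+2) (by omega), blk_cons μ p (j0+1) (n+2) (by omega)]
          noncomm_ring
        have hE2 : blk μ q 0 (n+1)
            = blk μ p 0 j0 * (μ (p j0) (p (j0+2)) * blk μ p (j0+2) (n+2)) := by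
          rw [blk_append μ q 0 j0 (n+1) (by omega) (by omega),
            blk_cons μ q j0 (n+1) (by omega)]
          have e1 : blk μ q 0 j0 = blk μ p 0 j0 :=
            blk_congr μ q p 0 j0 (fun i _ hi => hq_small i hi)
          have e2 : q j0 = p j0 := hq_small j0 le_rfl
          have e3 : q (j0+1) = p (j0+2) := hq_big (j0+1) le_rfl
          have e4 : blk μ q (j0+1) (n+1) = blk μ p (j0+2) (n+2) := by
            have e5 : blk μ q (j0+1) (n+1) = blk μ (fun i => p (1+i)) (j0+1) (n+1) := by
              apply blk_congr
              intro i hi _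
              rw [hq_big i hi]
              congr 1
              omega
            rw [e5, blk_shift μ p 1 (j0+1) (n+1)]
            congr 1 <;> omega
          rw [e1, e2, e3, e4]
        have hdiff : blk μ p 0 (n+2) - blk μ q 0 (n+1)
            = blk μ p 0 j0 * (((μ (p j0) (p (j0+1)) * μ (p (j0+1)) (p (j0+2)))
                - μ (p j0) (p (j0+2))) * blk μ p (j0+2) (n+2)) := by
          rw [hE1, hE2]
          noncomm_ring
        -- middle factor estimate
        have hmidnorm : ‖((μ (p j0) (p (j0+1)) * μ (p (j0+1)) (p (j0+2))
            - μ (p j0) (p (j0+2)))).comp ι‖ ≤ χ (p j0) (p (j0+2)) ^ z := by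
          have h1 := halmost (p j0) (p (j0+1)) (p (j0+2)) (h0' j0 (by omega))
            (hw j0 (by omega)) (hw (j0+1) (by omega)) (hT'' (j0+2) (by omega))
          rw [show (μ (p j0) (p (j0+1)) * μ (p (j0+1)) (p (j0+2)) - μ (p j0) (p (j0+2)))
              = -(μ (p j0) (p (j0+2)) - μ (p j0) (p (j0+1)) * μ (p (j0+1)) (p (j0+2)))
            from (neg_sub _ _).symm]
          rw [ContinuousLinearMap.neg_comp, norm_neg]
          exact h1
        have hχj0nn : 0 ≤ χ (p j0) (p (j0+2)) :=
          hχ_nonneg _ _ (h0' j0 (by omega)) (hpm j0 (j0+2) (by omega) (by omega))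
            (hT'' (j0+2) (by omega))
        have hχj : χ (p j0) (p (j0+2)) ^ z ≤ (2:ℝ)^z * c^z * ((n:ℝ)+1)^(-z) := by
          calc χ (p j0) (p (j0+2)) ^ z ≤ (2*c/((n:ℝ)+1)) ^ z :=
                Real.rpow_le_rpow hχj0nn hj0le hz0
            _ = (2:ℝ)^z * c^z * ((n:ℝ)+1)^(-z) := by
                rw [Real.div_rpow (by positivity) (by positivity),
                  Real.mul_rpow (by norm_num) hc0, Real.rpow_neg (by positivity),
                  div_eq_mul_inv]
        have hmid2 : ‖((μ (p j0) (p (j0+1)) * μ (p (j0+1)) (p (j0+2))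
            - μ (p j0) (p (j0+2)))).comp ι‖ ≤ (2:ℝ)^z * c^z * ((n:ℝ)+1)^(-z) :=
          le_trans hmidnorm hχj
        have hdnn : (0:ℝ) ≤ (2:ℝ)^z * c^z * ((n:ℝ)+1)^(-z) := by
          have h1 : (0:ℝ) ≤ (2:ℝ)^z := Real.rpow_nonneg (by norm_num) _
          have h2 : (0:ℝ) ≤ c^z := Real.rpow_nonneg hc0 _
          have h3 : (0:ℝ) ≤ ((n:ℝ)+1)^(-z) := Real.rpow_nonneg (by positivity) _
          positivity
        have hstep : ‖(blk μ p 0 (n+2) - blk μ q 0 (n+1)).comp ι‖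
            ≤ E₂ * ((2:ℝ)^z * c^z * ((n:ℝ)+1)^(-z)) * E₁ := by
          rw [hdiff]
          refine hADB _ _ _ (blk μX p (j0+2) (n+2)) ?_ E₂ _ E₁ hE₂0 hdnn hE₁0 ?_ hmid2 ?_
          · exact hblkcompat p (n+2) (j0+2) (n+2) (by omega) le_rfl hchain h0 hT'
          · exact hblkY p (n+2) 0 j0 (Nat.zero_le _) (by omega) hchain h0 hT'
          · exact hblkX p (n+2) (j0+2) (n+2) (by omega) le_rfl hchain h0 hT'
        have htri : ‖(blk μ p 0 (n+2) - μ (p 0) (p (n+2))).comp ι‖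
            ≤ ‖(blk μ p 0 (n+2) - blk μ q 0 (n+1)).comp ι‖
              + ‖(blk μ q 0 (n+1) - μ (p 0) (p (n+2))).comp ι‖ := by
          have he : (blk μ p 0 (n+2) - μ (p 0) (p (n+2))).comp ι
              = (blk μ p 0 (n+2) - blk μ q 0 (n+1)).comp ι
                + (blk μ q 0 (n+1) - μ (p 0) (p (n+2))).comp ι := by
            rw [← ContinuousLinearMap.add_comp]
            congr 1
            abel
          rw [he]
          exact norm_add_le _ _
        rw [Finset.sum_range_succ]
        have hring : E₂ * E₁ * (2:ℝ)^z
              * ((∑ i ∈ Finset.range n, ((i:ℝ)+1)^(-z)) + ((n:ℝ)+1)^(-z)) * c ^ z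
            = E₂ * ((2:ℝ)^z * c^z * ((n:ℝ)+1)^(-z)) * E₁
              + E₂ * E₁ * (2:ℝ)^z * (∑ i ∈ Finset.range n, ((i:ℝ)+1)^(-z)) * c ^ z := by
          ring
        rw [hring]
        linarith
    intro k p hk hchain h0 hT'
    obtain ⟨n, rfl⟩ : ∃ n, k = n + 1 := ⟨k - 1, by omega⟩
    have h1 := main n p hchain h0 hT'
    refine le_trans h1 ?_
    rw [hKdef]
    have hχnn : 0 ≤ χ (p 0) (p (n+1)) ^ z := Real.rpow_nonneg
      (hχ_nonneg _ _ h0 (chain_mono p (n+1) (fun i hi => (hchain i hi).le) 0 (n+1)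
        (Nat.zero_le _) le_rfl) hT') _
    have h2z : (0:ℝ) ≤ (2:ℝ)^z := Real.rpow_nonneg (by norm_num) _
    have hS := partial_le_zetaR hz n
    apply mul_le_mul_of_nonneg_right _ hχnn
    calc E₂ * E₁ * (2:ℝ)^z * (∑ i ∈ Finset.range n, ((i:ℝ)+1)^(-z))
        ≤ E₂ * E₁ * (2:ℝ)^z * Zc := by
          apply mul_le_mul_of_nonneg_left hS
          positivity
      _ = E₂ * E₁ * (2:ℝ)^z * Zc := rfl
  -- windowed sewing estimate
  have hsewW : ∀ (p : ℕ → ℝ) (k a b : ℕ), a < b → b ≤ k → (∀ i < k, p i < p (i+1)) →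
      0 ≤ p 0 → p k ≤ T →
      ‖(blk μ p a b - μ (p a) (p b)).comp ι‖ ≤ K * χ (p a) (p b) ^ z := by
    intro p k a b hab hbk hchain h0 hkT
    have hw : ∀ i < k, p i ≤ p (i+1) := fun i hi => (hchain i hi).le
    have hpm := chain_mono p k hw
    set q : ℕ → ℝ := fun i => p (a + i) with hqdef
    have e2 : a + (b - a) = b := by omega
    have hq : blk μ q 0 (b - a) = blk μ p a b := by
      rw [hqdef, blk_shift μ p a 0 (b - a)]
      have e1 : a + 0 = a := by omega
      rw [e1, e2]
    have hq0 : q 0 = p a := by rw [hqdef]; simp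
    have hqb : q (b - a) = p b := by rw [hqdef]; simp only; rw [e2]
    have := hsew (b - a) q (by omega)
      (fun i hi => hchain (a + i) (by omega))
      (by rw [hq0]; exact le_trans h0 (hpm 0 a (Nat.zero_le _) (by omega)))
      (by rw [hqb]; exact le_trans (hpm b k hbk le_rfl) hkT)
    rwa [hq, hq0, hqb] at this
  -- the refinement estimate (Lemma B)
  have hrefine : ∀ (kp : ℕ) (p : ℕ → ℝ) (m : ℕ → ℕ) (r : ℕ → ℝ),
      0 < kp → (∀ i < kp, m i < m (i+1)) → m 0 = 0 →
      (∀ i < m kp, r i < r (i+1)) → 0 ≤ r 0 → r (m kp) ≤ T → (∀ i ≤ kp, r (m i) = p i) →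
      ‖(blk μ r 0 (m kp) - blk μ p 0 kp).comp ι‖
        ≤ ∑ i ∈ Finset.range kp, E₂ * (K * χ (p i) (p (i+1)) ^ z) * E₁ := by
    intro kp p m r hkp hm hm0 hr h0 hT' hrp
    -- weak monotonicity of m
    have hmw : ∀ i j, i ≤ j → j ≤ kp → m i ≤ m j := by
      intro i j hij hjk
      induction j with
      | zero =>
        have : i = 0 := by omega
        subst this; exact le_rfl
      | succ n ih =>
        rcases Nat.lt_or_ge i (n+1) with h | h
        · exact le_trans (ih (by omega) (by omega)) (hm n (by omega)).le
        · have : i = n + 1 := by omega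
          subst this; exact le_rfl
    have hrw : ∀ i < m kp, r i ≤ r (i+1) := fun i hi => (hr i hi).le
    have hrm := chain_mono r (m kp) hrw
    -- hybrid operators
    set H : ℕ → (Y →L[ℝ] Y) := fun j => blk μ p 0 j * blk μ r (m j) (m kp) with hHdef
    have hH0 : H 0 = blk μ r 0 (m kp) := by
      rw [hHdef]
      simp only
      rw [blk_self μ p 0 0 le_rfl, hm0, one_mul]
    have hHk : H kp = blk μ p 0 kp := by
      rw [hHdef]
      simp only
      rw [blk_self μ r (m kp) (m kp) le_rfl, mul_one]
    have htel : blk μ r 0 (m kp) - blk μ p 0 kp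
        = ∑ j ∈ Finset.range kp, (H j - H (j+1)) := by
      rw [Finset.sum_range_sub' H kp, hH0, hHk]
    -- each step
    have hstep : ∀ j < kp, ‖((H j - H (j+1))).comp ι‖
        ≤ E₂ * (K * χ (p j) (p (j+1)) ^ z) * E₁ := by
      intro j hj
      have hmj : m j ≤ m (j+1) := (hm j hj).le
      have hmj2 : m (j+1) ≤ m kp := hmw (j+1) kp (by omega) le_rfl
      have hpj : r (m j) = p j := hrp j (by omega)
      have hpj1 : r (m (j+1)) = p (j+1) := hrp (j+1) (by omega)
      -- p is a chain inside r
      have hpchain : ∀ i < kp, p i < p (i+1) := by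
        intro i hi
        rw [← hrp i (by omega), ← hrp (i+1) (by omega)]
        have h1 : m i < m (i+1) := hm i hi
        have h2 : m (i+1) ≤ m kp := hmw (i+1) kp (by omega) le_rfl
        calc r (m i) < r (m i + 1) := hr (m i) (by omega)
          _ ≤ r (m (i+1)) := hrm (m i + 1) (m (i+1)) (by omega) (by omega)
      have hpw : ∀ i < kp, p i ≤ p (i+1) := fun i hi => (hpchain i hi).le
      have hppm := chain_mono p kp hpw
      have hp0 : p 0 = r 0 := by rw [← hrp 0 (by omega), hm0]
      have h0p : 0 ≤ p 0 := by rw [hp0]; exact h0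
      have hpkT : p kp ≤ T := by rw [← hrp kp le_rfl]; exact hT'
      -- decompose
      have hsplit : blk μ r (m j) (m kp)
          = blk μ r (m j) (m (j+1)) * blk μ r (m (j+1)) (m kp) :=
        blk_append μ r _ _ _ hmj hmj2
      have hpsplit : blk μ p 0 (j+1) = blk μ p 0 j * (μ (p j) (p (j+1)) * 1) := by
        rw [blk_append μ p 0 j (j+1) (by omega) (by omega),
          blk_cons μ p j (j+1) (by omega), blk_self μ p (j+1) (j+1) le_rfl]
      have hHdiff : H j - H (j+1)
          = blk μ p 0 j * ((blk μ r (m j) (m (j+1)) - μ (p j) (p (j+1)))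
              * blk μ r (m (j+1)) (m kp)) := by
        rw [hHdef]
        simp only
        rw [hsplit, hpsplit]
        noncomm_ring
      rw [hHdiff]
      -- middle estimate
      have hmid : ‖((blk μ r (m j) (m (j+1)) - μ (p j) (p (j+1)))).comp ι‖
          ≤ K * χ (p j) (p (j+1)) ^ z := by
        have := hsewW r (m kp) (m j) (m (j+1)) (hm j hj) hmj2 hr h0 hT'
        rwa [hpj, hpj1] at this
      have hχj0 : 0 ≤ χ (p j) (p (j+1)) := by
        apply hχ_nonneg _ _ (le_trans h0p (hppm 0 j (Nat.zero_le _) (by omega)))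
          (hpw j hj) (le_trans (hppm (j+1) kp (by omega) le_rfl) hpkT)
      refine hADB _ _ _ (blk μX r (m (j+1)) (m kp)) ?_ E₂ (K * χ (p j) (p (j+1)) ^ z) E₁
        hE₂0 (by positivity) hE₁0 ?_ hmid ?_
      · exact hblkcompat r (m kp) (m (j+1)) (m kp) hmj2 le_rfl hr h0 hT'
      · exact hblkY p kp 0 j (Nat.zero_le _) (by omega) hpchain h0p hpkT
      · exact hblkX r (m kp) (m (j+1)) (m kp) hmj2 le_rfl hr h0 hT'
    -- sum up
    calc ‖(blk μ r 0 (m kp) - blk μ p 0 kp).comp ι‖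
        = ‖(∑ j ∈ Finset.range kp, (H j - H (j+1))).comp ι‖ := by rw [htel]
      _ = ‖∑ j ∈ Finset.range kp, ((H j - H (j+1)).comp ι)‖ := by
          congr 1
          ext y
          simp [ContinuousLinearMap.comp_apply, ContinuousLinearMap.sum_apply]
      _ ≤ ∑ j ∈ Finset.range kp, ‖(H j - H (j+1)).comp ι‖ := norm_sum_le _ _
      _ ≤ ∑ j ∈ Finset.range kp, E₂ * (K * χ (p j) (p (j+1)) ^ z) * E₁ := by
          apply Finset.sum_le_sum
          intro j hj
          exact hstep j (Finset.mem_range.mp hj)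
  -- sum of χ^z over intervals bound
  have hsumχ : ∀ (kp : ℕ) (p : ℕ → ℝ) (η : ℝ), 0 ≤ η → (∀ i < kp, p i < p (i+1)) →
      0 ≤ p 0 → p kp ≤ T → (∀ i < kp, χ (p i) (p (i+1)) ≤ η) →
      ∑ i ∈ Finset.range kp, χ (p i) (p (i+1)) ^ z ≤ η ^ (z-1) * χ (p 0) (p kp) := by
    intro kp p η hη hchain h0 hT' hfine
    have hw : ∀ i < kp, p i ≤ p (i+1) := fun i hi => (hchain i hi).le
    have hpm := chain_mono p kp hw
    have key : ∀ x : ℝ, 0 ≤ x → x ^ z = x ^ (z-1) * x := by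
      intro x hx
      have h1 := Real.rpow_add' (x := x) (y := z - 1) (z := 1) hx
        (by rw [sub_add_cancel]; linarith)
      rw [sub_add_cancel] at h1
      rw [h1, Real.rpow_one]
    calc ∑ i ∈ Finset.range kp, χ (p i) (p (i+1)) ^ z
        ≤ ∑ i ∈ Finset.range kp, η ^ (z-1) * χ (p i) (p (i+1)) := by
          apply Finset.sum_le_sum
          intro i hi
          rw [Finset.mem_range] at hi
          have h0i : 0 ≤ p i := le_trans h0 (hpm 0 i (Nat.zero_le _) (by omega))
          have hiT : p (i+1) ≤ T := le_trans (hpm (i+1) kp (by omega) le_rfl) hT'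
          have hχi0 : 0 ≤ χ (p i) (p (i+1)) := hχ_nonneg _ _ h0i (hw i hi) hiT
          rw [key _ hχi0]
          exact mul_le_mul (Real.rpow_le_rpow hχi0 (hfine i hi) (by linarith))
            le_rfl hχi0 (Real.rpow_nonneg hη _)
      _ = η ^ (z-1) * ∑ i ∈ Finset.range kp, χ (p i) (p (i+1)) := by rw [Finset.mul_sum]
      _ ≤ η ^ (z-1) * χ (p 0) (p kp) := by
          exact mul_le_mul_of_nonneg_left (hchainSum kp p hw h0 hT') (Real.rpow_nonneg hη _)
  -- modulus of continuity of χ near the diagonal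
  have hmod : ∀ η : ℝ, 0 < η → ∃ θ : ℝ, 0 < θ ∧ ∀ u v : ℝ, 0 ≤ u → u ≤ v → v ≤ T →
      v - u ≤ θ → χ u v ≤ η := by
    intro η hη
    have hDcomp : IsCompact {p : ℝ × ℝ | 0 ≤ p.1 ∧ p.1 ≤ p.2 ∧ p.2 ≤ T} := by
      apply IsCompact.of_isClosed_subset (isCompact_Icc (a := ((0:ℝ),(0:ℝ))) (b := (T, T)))
      · have : {p : ℝ × ℝ | 0 ≤ p.1 ∧ p.1 ≤ p.2 ∧ p.2 ≤ T}
            = {p : ℝ × ℝ | 0 ≤ p.1} ∩ ({p | p.1 ≤ p.2} ∩ {p | p.2 ≤ T}) := by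
          ext q; simp only [Set.mem_setOf_eq, Set.mem_inter_iff]
        rw [this]
        exact (isClosed_le continuous_const continuous_fst).inter
          ((isClosed_le continuous_fst continuous_snd).inter
            (isClosed_le continuous_snd continuous_const))
      · intro q hq
        obtain ⟨hq1, hq2, hq3⟩ := hq
        constructor
        · exact ⟨hq1, le_trans hq1 hq2⟩
        · exact ⟨le_trans hq2 hq3, hq3⟩
    have hUC := hDcomp.uniformContinuousOn_of_continuous hχ_cont
    rw [Metric.uniformContinuousOn_iff] at hUC
    obtain ⟨δ, hδ, hδ'⟩ := hUC η hη
    refine ⟨δ/2, by positivity, ?_⟩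
    intro u v h0u huv hvT hle
    have h1 : ((u,v) : ℝ×ℝ) ∈ {p : ℝ × ℝ | 0 ≤ p.1 ∧ p.1 ≤ p.2 ∧ p.2 ≤ T} := ⟨h0u, huv, hvT⟩
    have h2 : ((u,u) : ℝ×ℝ) ∈ {p : ℝ × ℝ | 0 ≤ p.1 ∧ p.1 ≤ p.2 ∧ p.2 ≤ T} :=
      ⟨h0u, le_rfl, le_trans huv hvT⟩
    have hdist : dist ((u,v) : ℝ×ℝ) ((u,u) : ℝ×ℝ) < δ := by
      rw [Prod.dist_eq]
      simp only [dist_self]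
      have : dist v u = v - u := by
        rw [Real.dist_eq, abs_of_nonneg (by linarith)]
      rw [this]
      rw [max_eq_right (by linarith)]
      linarith
    have := hδ' _ h1 _ h2 hdist
    simp only [Real.dist_eq] at this
    rw [hχ_diag u h0u (le_trans huv hvT), sub_zero] at this
    rw [abs_of_nonneg (hχ_nonneg u v h0u huv hvT)] at this
    linarith
  -- pairwise comparison of partitions (via common refinement)
  have hpair : ∀ (s t : ℝ), 0 ≤ s → t ≤ T → ∀ (P R : StmtPartition s t) (η : ℝ), 0 ≤ η →
      (∀ i < P.k, χ (P.pts i) (P.pts (i+1)) ≤ η) →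
      (∀ i < R.k, χ (R.pts i) (R.pts (i+1)) ≤ η) →
      ‖(prodOps μ P - prodOps μ R).comp ι‖ ≤ 2 * (E₂ * K * E₁) * (η ^ (z-1) * χ s t) := by
    intro s t h0 hT' P R η hη hfP hfR
    obtain ⟨N, r, mP, mQ, hN, hrs, hr0, hrN, hsP, h0P, hkP, hrP, hsQ, h0Q, hkQ, hrQ⟩ :=
      exists_merge P R
    have hst : s < t := P.s_lt_t
    have hr0' : 0 ≤ r 0 := by rw [hr0]; exact h0
    have hbound : ∀ (S : StmtPartition s t) (mS : ℕ → ℕ), (∀ i < S.k, mS i < mS (i+1)) →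
        mS 0 = 0 → mS S.k = N → (∀ i ≤ S.k, r (mS i) = S.pts i) →
        (∀ i < S.k, χ (S.pts i) (S.pts (i+1)) ≤ η) →
        ‖(blk μ r 0 N - prodOps μ S).comp ι‖ ≤ E₂ * K * E₁ * (η ^ (z-1) * χ s t) := by
      intro S mS hsS h0S hkS hrS hfS
      have hrNT : r (mS S.k) ≤ T := by rw [hkS, hrN]; exact hT'
      have hrsS : ∀ i < mS S.k, r i < r (i+1) := by rw [hkS]; exact hrs
      have h1 := hrefine S.k S.pts mS r S.hk hsS h0S hrsS hr0' hrNT hrS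
      rw [hkS] at h1
      rw [prodOps_eq_blk]
      have hS0 : 0 ≤ S.pts 0 := by rw [S.first]; exact h0
      have hSkT : S.pts S.k ≤ T := by rw [S.last]; exact hT'
      have h2 : ∑ i ∈ Finset.range S.k, E₂ * (K * χ (S.pts i) (S.pts (i+1)) ^ z) * E₁
          = E₂ * K * E₁ * ∑ i ∈ Finset.range S.k, χ (S.pts i) (S.pts (i+1)) ^ z := by
        rw [Finset.mul_sum]
        exact Finset.sum_congr rfl (fun i _ => by ring)
      have h3 := hsumχ S.k S.pts η hη S.strict hS0 hSkT hfS
      rw [S.first, S.last] at h3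
      calc ‖(blk μ r 0 N - blk μ S.pts 0 S.k).comp ι‖
          ≤ ∑ i ∈ Finset.range S.k, E₂ * (K * χ (S.pts i) (S.pts (i+1)) ^ z) * E₁ := h1
        _ = E₂ * K * E₁ * ∑ i ∈ Finset.range S.k, χ (S.pts i) (S.pts (i+1)) ^ z := h2
        _ ≤ E₂ * K * E₁ * (η ^ (z-1) * χ s t) := by
            apply mul_le_mul_of_nonneg_left h3
            positivity
    have hbP := hbound P mP hsP h0P hkP hrP hfP
    have hbR := hbound R mQ hsQ h0Q hkQ hrQ hfR
    have heq : (prodOps μ P - prodOps μ R).comp ι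
        = (blk μ r 0 N - prodOps μ R).comp ι - (blk μ r 0 N - prodOps μ P).comp ι := by
      rw [← ContinuousLinearMap.sub_comp]
      congr 1
      abel
    calc ‖(prodOps μ P - prodOps μ R).comp ι‖
        ≤ ‖(blk μ r 0 N - prodOps μ R).comp ι‖ + ‖(blk μ r 0 N - prodOps μ P).comp ι‖ := by
          rw [heq]; exact norm_sub_le _ _
      _ ≤ 2 * (E₂ * K * E₁) * (η ^ (z-1) * χ s t) := by linarith
  -- quantitative Cauchy property
  have hkey : ∀ (s t : ℝ), 0 ≤ s → t ≤ T → ∀ ε : ℝ, 0 < ε → ∃ θ : ℝ, 0 < θ ∧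
      ∀ P R : StmtPartition s t, P.mesh ≤ θ → R.mesh ≤ θ →
      ‖(prodOps μ P - prodOps μ R).comp ι‖ ≤ ε := by
    intro s t h0 hT' ε hε
    rcases lt_or_ge s t with hst | hst
    · have hχst : 0 ≤ χ s t := hχ_nonneg s t h0 hst.le hT'
      set C : ℝ := 2 * (E₂ * K * E₁) * χ s t with hCdef
      have hC0 : 0 ≤ C := by positivity
      obtain ⟨η, hη, hηle⟩ := rpow_small hz1 (ε / (C + 1)) (by positivity)
      obtain ⟨θ, hθ, hθ'⟩ := hmod η hη
      refine ⟨θ, hθ, ?_⟩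
      intro P R hPmesh hRmesh
      have hfine : ∀ (S : StmtPartition s t), S.mesh ≤ θ → ∀ i < S.k,
          χ (S.pts i) (S.pts (i+1)) ≤ η := by
        intro S hS i hi
        apply hθ' _ _ (le_trans h0 (S.pts_ge i (by omega))) (S.strict i hi).le
          (le_trans (S.pts_le (i+1) (by omega)) hT')
        exact le_trans (S.len_le_mesh i hi) hS
      have h1 := hpair s t h0 hT' P R η hη.le (hfine P hPmesh) (hfine R hRmesh)
      have h2 : C * η ^ (z-1) ≤ ε := by
        calc C * η ^ (z-1) ≤ C * (ε / (C + 1)) := by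
              exact mul_le_mul_of_nonneg_left hηle hC0
          _ ≤ ε := by
              rw [div_eq_mul_inv]
              rw [mul_comm ε, ← mul_assoc]
              have hC1 : 0 < C + 1 := by linarith
              calc C * (C+1)⁻¹ * ε ≤ 1 * ε := by
                    apply mul_le_mul_of_nonneg_right _ hε.le
                    rw [← div_eq_mul_inv, div_le_one hC1]
                    linarith
                _ = ε := one_mul ε
      calc ‖(prodOps μ P - prodOps μ R).comp ι‖
          ≤ 2 * (E₂ * K * E₁) * (η ^ (z-1) * χ s t) := h1
        _ = C * η ^ (z-1) := by rw [hCdef]; ring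
        _ ≤ ε := h2
    · refine ⟨1, one_pos, ?_⟩
      intro P R _ _
      exact absurd P.s_lt_t (not_lt.mpr hst)
  -- uniform norm bounds for prodOps
  have hPnormY : ∀ (s t : ℝ), 0 ≤ s → t ≤ T → ∀ P : StmtPartition s t, ‖prodOps μ P‖ ≤ E₂ := by
    intro s t h0 hT' P
    rw [prodOps_eq_blk]
    have h1 : 0 ≤ P.pts 0 := by rw [P.first]; exact h0
    have h2 : P.pts P.k ≤ T := by rw [P.last]; exact hT'
    exact hblkY P.pts P.k 0 P.k (Nat.zero_le _) le_rfl P.strict h1 h2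
  have hPnormX : ∀ (s t : ℝ), 0 ≤ s → t ≤ T → ∀ P : StmtPartition s t, ‖prodOps μX P‖ ≤ E₁ := by
    intro s t h0 hT' P
    rw [prodOps_eq_blk]
    have h1 : 0 ≤ P.pts 0 := by rw [P.first]; exact h0
    have h2 : P.pts P.k ≤ T := by rw [P.last]; exact hT'
    exact hblkX P.pts P.k 0 P.k (Nat.zero_le _) le_rfl P.strict h1 h2
  have hPcompat : ∀ (s t : ℝ), 0 ≤ s → t ≤ T → ∀ P : StmtPartition s t, ∀ x : X,
      prodOps μ P (ι x) = ι (prodOps μX P x) := by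
    intro s t h0 hT' P x
    rw [prodOps_eq_blk, prodOps_eq_blk]
    have h1 : 0 ≤ P.pts 0 := by rw [P.first]; exact h0
    have h2 : P.pts P.k ≤ T := by rw [P.last]; exact hT'
    exact hblkcompat P.pts P.k 0 P.k (Nat.zero_le _) le_rfl P.strict h1 h2 x
  -- mesh of uniform partitions tends to zero
  have hUmesh : ∀ (s t : ℝ) (hst : s < t), Tendsto (fun n => (unif s t hst n).mesh) atTop (nhds 0) := by
    intro s t hst
    have h1 : Tendsto (fun n : ℕ => ((n : ℝ) + 1)) atTop atTop :=
      tendsto_atTop_add_const_right _ 1 tendsto_natCast_atTop_atTop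
    have h2 : Tendsto (fun n : ℕ => (t - s) / ((n : ℝ) + 1)) atTop (nhds 0) :=
      Tendsto.div_atTop tendsto_const_nhds h1
    convert h2 using 2 with n
    rw [unif_mesh]
  -- extension by density
  have hext : ∀ A B : Y →L[ℝ] Y, (∀ x : X, A (ι x) = B (ι x)) → A = B := by
    intro A B h
    apply ContinuousLinearMap.ext
    intro y
    have := hι_dense.equalizer A.continuous B.continuous (funext h)
    exact congrFun this y
  have hsmallmesh : ∀ (s t : ℝ) (hst : s < t) (θ : ℝ), 0 < θ →
      ∃ N : ℕ, ∀ n ≥ N, (unif s t hst n).mesh ≤ θ := by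
    intro s t hst θ hθ
    have h1 := hUmesh s t hst
    rw [Metric.tendsto_atTop] at h1
    obtain ⟨N, hN⟩ := h1 θ hθ
    refine ⟨N, fun n hn => ?_⟩
    have := hN n hn
    rw [Real.dist_eq, sub_zero] at this
    exact le_of_lt (lt_of_le_of_lt (le_abs_self _) this)
  -- existence of the limit operators
  have hEX : ∀ s t : ℝ, 0 ≤ s → s < t → t ≤ T → ∃ ψst : Y →L[ℝ] Y, ‖ψst‖ ≤ E₂ ∧
      ∀ ε : ℝ, 0 < ε → ∃ θ : ℝ, 0 < θ ∧ ∀ P : StmtPartition s t, P.mesh ≤ θ →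
        ‖(ψst - prodOps μ P).comp ι‖ ≤ ε := by
    intro s t h0 hst hT'
    set B : ℕ → (Y →L[ℝ] Y) := fun n => prodOps μ (unif s t hst n) with hBdef
    have hBnorm : ∀ n, ‖B n‖ ≤ E₂ := fun n => hPnormY s t h0 hT' _
    have hcau : ∀ ε : ℝ, 0 < ε → ∃ N : ℕ, ∀ m ≥ N, ∀ n ≥ N,
        ‖(B m - B n).comp ι‖ ≤ ε := by
      intro ε hε
      obtain ⟨θ, hθ, hθ'⟩ := hkey s t h0 hT' ε hε
      obtain ⟨N, hN⟩ := hsmallmesh s t hst θ hθ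
      exact ⟨N, fun m hm n hn => hθ' _ _ (hN m hm) (hN n hn)⟩
    have hdense : ∀ (y : Y) (δ : ℝ), 0 < δ → ∃ x : X, ‖y - ι x‖ < δ := by
      intro y δ hδ
      have h1 := hι_dense y
      rw [Metric.mem_closure_iff] at h1
      obtain ⟨b, hb, hdb⟩ := h1 δ hδ
      obtain ⟨x, rfl⟩ := hb
      exact ⟨x, by rwa [← dist_eq_norm]⟩
    have hptCauchy : ∀ y : Y, CauchySeq (fun n => B n y) := by
      intro y
      rw [Metric.cauchySeq_iff]
      intro ε hε
      have hE₂pos : (0:ℝ) < E₂ := by linarith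
      obtain ⟨x, hx⟩ := hdense y (ε/(8*E₂)) (by positivity)
      obtain ⟨N, hN⟩ := hcau (ε/(4*(‖x‖+1))) (by positivity)
      refine ⟨N, fun m hm n hn => ?_⟩
      rw [dist_eq_norm]
      have hexp : B m y - B n y
          = B m (y - ι x) - B n (y - ι x) + ((B m - B n).comp ι) x := by
        simp only [map_sub, ContinuousLinearMap.comp_apply, ContinuousLinearMap.sub_apply]
        abel
      have h1 : ‖B m (y - ι x)‖ ≤ ε/8 := by
        refine le_trans ((B m).le_opNorm _) ?_
        calc ‖B m‖ * ‖y - ι x‖ ≤ E₂ * (ε/(8*E₂)) :=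
              mul_le_mul (hBnorm m) hx.le (norm_nonneg _) hE₂0
          _ = ε/8 := by field_simp
      have h2 : ‖B n (y - ι x)‖ ≤ ε/8 := by
        refine le_trans ((B n).le_opNorm _) ?_
        calc ‖B n‖ * ‖y - ι x‖ ≤ E₂ * (ε/(8*E₂)) :=
              mul_le_mul (hBnorm n) hx.le (norm_nonneg _) hE₂0
          _ = ε/8 := by field_simp
      have h3 : ‖((B m - B n).comp ι) x‖ ≤ ε/4 := by
        refine le_trans (((B m - B n).comp ι).le_opNorm x) ?_
        calc ‖(B m - B n).comp ι‖ * ‖x‖ ≤ (ε/(4*(‖x‖+1))) * (‖x‖+1) := by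
              apply mul_le_mul (hN m hm n hn) (by linarith [norm_nonneg x]) (norm_nonneg _)
                (by positivity)
          _ = ε/4 := by field_simp
      calc ‖B m y - B n y‖
          ≤ ‖B m (y - ι x) - B n (y - ι x)‖ + ‖((B m - B n).comp ι) x‖ := by
            rw [hexp]; exact norm_add_le _ _
        _ ≤ ‖B m (y - ι x)‖ + ‖B n (y - ι x)‖ + ‖((B m - B n).comp ι) x‖ := by
            have := norm_sub_le (B m (y - ι x)) (B n (y - ι x))
            linarith
        _ ≤ ε/8 + ε/8 + ε/4 := by linarith
        _ < ε := by linarith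
    set f : Y → Y := fun y => limUnder atTop (fun n => B n y) with hfdef
    have htend : ∀ y, Tendsto (fun n => B n y) atTop (nhds (f y)) :=
      fun y => (hptCauchy y).tendsto_limUnder
    have hfadd : ∀ y y', f (y + y') = f y + f y' := by
      intro y y'
      refine tendsto_nhds_unique (htend (y + y')) ?_
      have := (htend y).add (htend y')
      simpa [map_add] using this
    have hfsmul : ∀ (c : ℝ) (y : Y), f (c • y) = c • f y := by
      intro c y
      refine tendsto_nhds_unique (htend (c • y)) ?_
      have := (htend y).const_smul c
      simpa [map_smul] using this
    have hfbound : ∀ y, ‖f y‖ ≤ E₂ * ‖y‖ := by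
      intro y
      refine le_of_tendsto (htend y).norm (Eventually.of_forall fun n => ?_)
      exact le_trans ((B n).le_opNorm y)
        (mul_le_mul (hBnorm n) le_rfl (norm_nonneg _) hE₂0)
    set ψst : Y →L[ℝ] Y := LinearMap.mkContinuous
      { toFun := f, map_add' := hfadd, map_smul' := hfsmul } E₂ hfbound with hψstdef
    have hψapply : ∀ y, ψst y = f y := fun y => rfl
    refine ⟨ψst, ?_, ?_⟩
    · exact ContinuousLinearMap.opNorm_le_bound _ hE₂0 hfbound
    · intro ε hε
      obtain ⟨θ, hθ, hθ'⟩ := hkey s t h0 hT' (ε/2) (by positivity)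
      refine ⟨θ, hθ, ?_⟩
      intro P hP
      apply ContinuousLinearMap.opNorm_le_bound _ hε.le
      intro x
      have hlim : Tendsto (fun n => ‖B n (ι x) - prodOps μ P (ι x)‖) atTop
          (nhds ‖ψst (ι x) - prodOps μ P (ι x)‖) := by
        rw [hψapply]
        exact ((htend (ι x)).sub tendsto_const_nhds).norm
      apply le_of_tendsto hlim
      obtain ⟨N, hN⟩ := hsmallmesh s t hst θ hθ
      filter_upwards [eventually_ge_atTop N] with n hn
      have h2 := hθ' (unif s t hst n) P (hN n hn) hP
      have he : B n (ι x) - prodOps μ P (ι x) = ((B n - prodOps μ P).comp ι) x := by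
        simp [ContinuousLinearMap.comp_apply, ContinuousLinearMap.sub_apply]
      rw [he]
      refine le_trans (((B n - prodOps μ P).comp ι).le_opNorm x) ?_
      calc ‖(B n - prodOps μ P).comp ι‖ * ‖x‖ ≤ (ε/2) * ‖x‖ :=
            mul_le_mul h2 le_rfl (norm_nonneg _) (by positivity)
        _ ≤ ε * ‖x‖ := by
            apply mul_le_mul _ le_rfl (norm_nonneg _) hε.le
            linarith
  choose Ψ hΨbound hΨconv using hEX
  set ψ : ℝ → ℝ → (Y →L[ℝ] Y) := fun s t =>
    if h : 0 ≤ s ∧ s < t ∧ t ≤ T then Ψ s t h.1 h.2.1 h.2.2 else 1 with hψdef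
  have hψeq : ∀ s t (h1 : 0 ≤ s) (h2 : s < t) (h3 : t ≤ T), ψ s t = Ψ s t h1 h2 h3 := by
    intro s t h1 h2 h3
    rw [hψdef]
    simp only [dif_pos (⟨h1, h2, h3⟩ : 0 ≤ s ∧ s < t ∧ t ≤ T)]
  have hψdiag : ∀ s t : ℝ, ¬ (s < t) → ψ s t = 1 := by
    intro s t h
    rw [hψdef]
    simp only [dif_neg (fun hh : 0 ≤ s ∧ s < t ∧ t ≤ T => h hh.2.1)]
  -- the master convergence property of ψ
  have hψconv : ∀ s t (h1 : 0 ≤ s) (h2 : s < t) (h3 : t ≤ T), ∀ ε : ℝ, 0 < ε →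
      ∃ θ : ℝ, 0 < θ ∧ ∀ P : StmtPartition s t, P.mesh ≤ θ →
      ‖(ψ s t - prodOps μ P).comp ι‖ ≤ ε := by
    intro s t h1 h2 h3
    rw [hψeq s t h1 h2 h3]
    exact hΨconv s t h1 h2 h3
  -- uniqueness of operators with the master property: helper
  have huniq : ∀ s t (h1 : 0 ≤ s) (h2 : s < t) (h3 : t ≤ T) (A : Y →L[ℝ] Y),
      (∀ ε : ℝ, 0 < ε → ∃ θ : ℝ, 0 < θ ∧ ∀ P : StmtPartition s t, P.mesh ≤ θ →
        ‖(A - prodOps μ P).comp ι‖ ≤ ε) → A = ψ s t := by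
    intro s t h1 h2 h3 A hA
    have key : ∀ ε : ℝ, 0 < ε → ‖(A - ψ s t).comp ι‖ ≤ ε := by
      intro ε hε
      obtain ⟨θ₁, hθ₁, h₁'⟩ := hA (ε/2) (by positivity)
      obtain ⟨θ₂, hθ₂, h₂'⟩ := hψconv s t h1 h2 h3 (ε/2) (by positivity)
      obtain ⟨N, hN⟩ := hsmallmesh s t h2 (min θ₁ θ₂) (lt_min hθ₁ hθ₂)
      set P : StmtPartition s t := unif s t h2 N with hPdef
      have hPm := hN N le_rfl
      have hd : (A - ψ s t).comp ι
          = (A - prodOps μ P).comp ι - (ψ s t - prodOps μ P).comp ι := by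
        rw [← ContinuousLinearMap.sub_comp]
        congr 1
        abel
      calc ‖(A - ψ s t).comp ι‖
          ≤ ‖(A - prodOps μ P).comp ι‖ + ‖(ψ s t - prodOps μ P).comp ι‖ := by
            rw [hd]; exact norm_sub_le _ _
        _ ≤ ε/2 + ε/2 := by
            have := h₁' P (le_trans hPm (min_le_left _ _))
            have := h₂' P (le_trans hPm (min_le_right _ _))
            linarith
        _ = ε := by ring
    have hzero : ‖(A - ψ s t).comp ι‖ ≤ 0 := by
      by_contra h
      push_neg at h
      have := key (‖(A - ψ s t).comp ι‖ / 2) (by linarith)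
      linarith
    have hzero' : (A - ψ s t).comp ι = 0 := by
      rw [← norm_le_zero_iff]
      exact hzero
    apply hext
    intro x
    have : ((A - ψ s t).comp ι) x = 0 := by rw [hzero']; rfl
    rw [ContinuousLinearMap.comp_apply, ContinuousLinearMap.sub_apply] at this
    exact sub_eq_zero.mp this
  -- multiplicativity
  have hmult : ∀ s u t : ℝ, 0 ≤ s → s ≤ u → u ≤ t → t ≤ T → ψ s t = ψ s u * ψ u t := by
    intro s u t h0 hsu hut hT'
    rcases eq_or_lt_of_le hsu with rfl | hsu'
    · rw [hψdiag s s (lt_irrefl s), one_mul]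
    rcases eq_or_lt_of_le hut with rfl | hut'
    · rw [hψdiag u u (lt_irrefl u), mul_one]
    have hst : s < t := lt_trans hsu' hut'
    have huT : u ≤ T := le_trans hut'.le hT'
    have h0u : 0 ≤ u := le_trans h0 hsu'.le
    refine (huniq s t h0 hst hT' (ψ s u * ψ u t) ?_).symm
    intro ε hε
    have hE₂pos : (0:ℝ) < E₂ := by linarith
    have hE₁pos : (0:ℝ) < E₁ := by linarith
    have hψsu_norm : ‖ψ s u‖ ≤ E₂ := by
      rw [hψeq s u h0 hsu' huT]
      exact hΨbound s u h0 hsu' huT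
    obtain ⟨θk, hθk, hk'⟩ := hkey s t h0 hT' (ε/2) (by positivity)
    obtain ⟨θ₂, hθ₂, h₂'⟩ := hψconv s u h0 hsu' huT (ε/(4*E₁)) (by positivity)
    obtain ⟨θ₃, hθ₃, h₃'⟩ := hψconv u t h0u hut' hT' (ε/(4*E₂)) (by positivity)
    obtain ⟨N₁, hN₁⟩ := hsmallmesh s u hsu' (min θ₂ θk) (lt_min hθ₂ hθk)
    obtain ⟨N₂, hN₂⟩ := hsmallmesh u t hut' (min θ₃ θk) (lt_min hθ₃ hθk)
    set n : ℕ := max N₁ N₂ with hndef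
    set Pn : StmtPartition s u := unif s u hsu' n with hPn
    set Qn : StmtPartition u t := unif u t hut' n with hQn
    set W : StmtPartition s t := concatP Pn Qn with hW
    have hPmesh : Pn.mesh ≤ min θ₂ θk := hN₁ n (le_max_left _ _)
    have hQmesh : Qn.mesh ≤ min θ₃ θk := hN₂ n (le_max_right _ _)
    have hWmesh : W.mesh ≤ θk := by
      refine le_trans (concatP_mesh Pn Qn) ?_
      apply max_le
      · exact le_trans hPmesh (min_le_right _ _)
      · exact le_trans hQmesh (min_le_right _ _)
    -- the first half: distance of ψ s u * ψ u t to prodOps μ W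
    have hQcompat : (prodOps μ Qn).comp ι = ι.comp (prodOps μX Qn) := by
      ext x
      exact hPcompat u t h0u hT' Qn x
    have half1 : ‖(ψ s u * ψ u t - prodOps μ W).comp ι‖ ≤ ε/2 := by
      have hds : ψ s u * ψ u t - prodOps μ W
          = ψ s u * (ψ u t - prodOps μ Qn) + (ψ s u - prodOps μ Pn) * prodOps μ Qn := by
        rw [hW, prodOps_concatP]
        noncomm_ring
      have hn1 : ‖(ψ s u * (ψ u t - prodOps μ Qn)).comp ι‖ ≤ ε/4 := by
        have he : (ψ s u * (ψ u t - prodOps μ Qn)).comp ι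
            = (ψ s u).comp ((ψ u t - prodOps μ Qn).comp ι) := rfl
        rw [he]
        refine le_trans (ContinuousLinearMap.opNorm_comp_le _ _) ?_
        calc ‖ψ s u‖ * ‖(ψ u t - prodOps μ Qn).comp ι‖ ≤ E₂ * (ε/(4*E₂)) := by
              apply mul_le_mul hψsu_norm
                (h₃' Qn (le_trans hQmesh (min_le_left _ _))) (norm_nonneg _) hE₂0
          _ = ε/4 := by field_simp
      have hn2 : ‖((ψ s u - prodOps μ Pn) * prodOps μ Qn).comp ι‖ ≤ ε/4 := by
        have he : ((ψ s u - prodOps μ Pn) * prodOps μ Qn).comp ι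
            = ((ψ s u - prodOps μ Pn).comp ι).comp (prodOps μX Qn) := by
          rw [ContinuousLinearMap.mul_def, ContinuousLinearMap.comp_assoc, hQcompat,
            ← ContinuousLinearMap.comp_assoc]
        rw [he]
        refine le_trans (ContinuousLinearMap.opNorm_comp_le _ _) ?_
        calc ‖(ψ s u - prodOps μ Pn).comp ι‖ * ‖prodOps μX Qn‖ ≤ (ε/(4*E₁)) * E₁ := by
              apply mul_le_mul (h₂' Pn (le_trans hPmesh (min_le_left _ _)))
                (hPnormX u t h0u hT' Qn) (norm_nonneg _) (by positivity)
          _ = ε/4 := by field_simp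
      calc ‖(ψ s u * ψ u t - prodOps μ W).comp ι‖
          ≤ ‖(ψ s u * (ψ u t - prodOps μ Qn)).comp ι‖
            + ‖((ψ s u - prodOps μ Pn) * prodOps μ Qn).comp ι‖ := by
            rw [hds, ContinuousLinearMap.add_comp]
            exact norm_add_le _ _
        _ ≤ ε/4 + ε/4 := by linarith
        _ = ε/2 := by ring
    refine ⟨θk, hθk, ?_⟩
    intro P hP
    have h2 := hk' W P hWmesh hP
    have hd : (ψ s u * ψ u t - prodOps μ P).comp ι
        = (ψ s u * ψ u t - prodOps μ W).comp ι + (prodOps μ W - prodOps μ P).comp ι := by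
      rw [← ContinuousLinearMap.add_comp]
      congr 1
      abel
    calc ‖(ψ s u * ψ u t - prodOps μ P).comp ι‖
        ≤ ‖(ψ s u * ψ u t - prodOps μ W).comp ι‖ + ‖(prodOps μ W - prodOps μ P).comp ι‖ := by
          rw [hd]; exact norm_add_le _ _
      _ ≤ ε/2 + ε/2 := by linarith
      _ = ε := by ring
  -- convergence along arbitrary mesh-vanishing sequences
  have hconv : ∀ s t : ℝ, 0 ≤ s → s ≤ t → t ≤ T → ∀ π : ℕ → StmtPartition s t,
      Tendsto (fun n => (π n).mesh) atTop (nhds 0) →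
      Tendsto (fun n => ‖(ψ s t - prodOps μ (π n)).comp ι‖) atTop (nhds 0) := by
    intro s t h0 hst hT' π hπ
    rcases eq_or_lt_of_le hst with rfl | hst'
    · exact absurd (π 0).s_lt_t (lt_irrefl s)
    rw [Metric.tendsto_atTop]
    intro ε hε
    obtain ⟨θ, hθ, hθ'⟩ := hψconv s t h0 hst' hT' (ε/2) (by positivity)
    rw [Metric.tendsto_atTop] at hπ
    obtain ⟨N, hN⟩ := hπ θ hθ
    refine ⟨N, fun n hn => ?_⟩
    have hm := hN n hn
    rw [Real.dist_eq, sub_zero] at hm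
    have hmesh : (π n).mesh ≤ θ := le_of_lt (lt_of_le_of_lt (le_abs_self _) hm)
    have := hθ' (π n) hmesh
    rw [Real.dist_eq, sub_zero, abs_of_nonneg (norm_nonneg _)]
    linarith
  refine ⟨ψ, ⟨fun s h1 h2 => hψdiag s s (lt_irrefl s), hmult, hconv⟩, ?_⟩
  -- uniqueness
  intro ψ' ⟨hd', hm', hc'⟩ s t h1 h2 h3
  rcases eq_or_lt_of_le h2 with rfl | hst'
  · rw [hd' s h1 h3, hψdiag s s (lt_irrefl s)]
  · apply huniq s t h1 hst' h3
    intro ε hε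
    obtain ⟨θk, hθk, hk'⟩ := hkey s t h1 h3 (ε/2) (by positivity)
    have hc'' := hc' s t h1 h2 h3 (fun n => unif s t hst' n) (hUmesh s t hst')
    rw [Metric.tendsto_atTop] at hc''
    obtain ⟨N₀, hN₀⟩ := hc'' (ε/2) (by positivity)
    obtain ⟨N₁, hN₁⟩ := hsmallmesh s t hst' θk hθk
    set n : ℕ := max N₀ N₁ with hndef
    set U : StmtPartition s t := unif s t hst' n with hUdef
    have hUm : U.mesh ≤ θk := hN₁ n (le_max_right _ _)
    have h1' : ‖(ψ' s t - prodOps μ U).comp ι‖ ≤ ε/2 := by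
      have := hN₀ n (le_max_left _ _)
      rw [Real.dist_eq, sub_zero] at this
      exact le_of_lt (lt_of_le_of_lt (le_abs_self _) this)
    refine ⟨θk, hθk, ?_⟩
    intro P hP
    have h2' := hk' U P hUm hP
    have hd : (ψ' s t - prodOps μ P).comp ι
        = (ψ' s t - prodOps μ U).comp ι + (prodOps μ U - prodOps μ P).comp ι := by
      rw [← ContinuousLinearMap.add_comp]
      congr 1
      abel
    calc ‖(ψ' s t - prodOps μ P).comp ι‖
        ≤ ‖(ψ' s t - prodOps μ U).comp ι‖ + ‖(prodOps μ U - prodOps μ P).comp ι‖ := by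
          rw [hd]; exact norm_add_le _ _
      _ ≤ ε/2 + ε/2 := by linarith
      _ = ε := by ring
end

section
/- Let (s,t) ∈ Δ_T, let ω be a driving path on [s,t] with constant C, and let X be a solution of the driven ODE started at x ∈ ℝ^d. Let η ∈ ℝ^d and, for i = 0,…,d, let B^i : [s,t] → ℝ^d be continuous of bounded variation with sup_{r ∈ [s,t]} |B_r − B_s| ≤ Ĉ · χ(s,t)^{1/2} for some Ĉ ≥ 0 (where B = (B⁰,…,B^d)). Let Z : [s,t] → ℝ^d satisfy Z_u = η + ∫_s^u B⁰_r dr + Σ_{i=1}^d ∫_s^u B^i_r g^i(r) dr + ∫_s^u DV₀(X_r)Z_r dr + Σ_{i=1}^d ∫_s^u DV_i(X_r)Z_r g^i(r) dr for all u ∈ [s,t]. Then for every p ≥ 1 there is a constant C̃ > 0, depending only on p, d, C and the C²_b-norms of V₀,…,V_d, such that sup_{u ∈ [s,t]} |Z_u|^p ≤ C̃ (|η|^p + |B_s|^p + Ĉ^p) e^{C̃ χ̃(s,t)}. -/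
open MeasureTheory Filter

noncomputable section

/-- The state space `ℝ^d`. -/
abbrev Ed (d : ℕ) : Type := EuclideanSpace ℝ (Fin d)

/-- `χ̃(s,t) = χ(s,t) + (t-s)·√χ(s,t) + (t-s)`. -/
def chit (χ : ℝ → ℝ → ℝ) (s t : ℝ) : ℝ := χ s t + (t - s) * Real.sqrt (χ s t) + (t - s)

/-- A control function on the simplex `Δ_T`. -/
structure IsControl (T : ℝ) (χ : ℝ → ℝ → ℝ) : Prop where
  nonneg : ∀ s t : ℝ, 0 ≤ s → s ≤ t → t ≤ T → 0 ≤ χ s t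
  diag : ∀ s : ℝ, 0 ≤ s → s ≤ T → χ s s = 0
  superadd : ∀ s u t : ℝ, 0 ≤ s → s ≤ u → u ≤ t → t ≤ T → χ s u + χ u t ≤ χ s t
  cont : ContinuousOn (fun p : ℝ × ℝ => χ p.1 p.2) {p | 0 ≤ p.1 ∧ p.1 ≤ p.2 ∧ p.2 ≤ T}

/-- `f ∈ C_b^∞`: smooth with all derivatives bounded. -/
def CbSmooth {E F : Type*} [NormedAddCommGroup E] [NormedSpace ℝ E]
    [NormedAddCommGroup F] [NormedSpace ℝ F] (f : E → F) : Prop :=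
  ContDiff ℝ (⊤ : ℕ∞) f ∧ ∀ n : ℕ, ∃ M : ℝ, ∀ x, ‖iteratedFDeriv ℝ n f x‖ ≤ M

/-- `g` is the (a.e.) derivative of a driving path on `[s,t]` with constant `C`
and control `χ`. -/
def IsDrivingDeriv (χ : ℝ → ℝ → ℝ) (C : ℝ) {d : ℕ} (s t : ℝ) (g : ℝ → Fin d → ℝ) : Prop :=
  Measurable g ∧
  ∀ᵐ r ∂(volume.restrict (Set.Ioo s t)), ∀ i, |g r i| ≤ C * Real.sqrt (χ s t) / (t - s)

/-- `X` solves the driven ODE `dX = V₀(X) dr + Σᵢ Vᵢ(X) gⁱ(r) dr` on `[s,t]`, `X_s = x`. -/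
def IsSolution {d : ℕ} (V : Fin (d + 1) → Ed d → Ed d) (g : ℝ → Fin d → ℝ)
    (s t : ℝ) (x : Ed d) (X : ℝ → Ed d) : Prop :=
  ContinuousOn X (Set.Icc s t) ∧
  ∀ u ∈ Set.Icc s t,
    X u = x + ∫ r in s..u, (V 0 (X r) + ∑ i : Fin d, g r i • V i.succ (X r))

lemma aux_sqrt_le (c : ℝ) (hc : 0 ≤ c) : Real.sqrt c ≤ 1 + c := by
  nlinarith [Real.sq_sqrt hc, Real.sqrt_nonneg c, sq_nonneg (Real.sqrt c - 1)]

lemma aux_gronwallBound_le {δ K ε x y : ℝ} (hδ : 0 ≤ δ) (hK : 0 ≤ K) (hε : 0 ≤ ε)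
    (hx : 0 ≤ x) (hxy : x ≤ y) : gronwallBound δ K ε x ≤ (δ + ε * y) * Real.exp (K * y) := by
  rcases eq_or_lt_of_le hK with hK0 | hK0
  · rw [← hK0, gronwallBound_K0]
    show δ + ε * x ≤ (δ + ε * y) * Real.exp (0 * y)
    simp only [zero_mul, Real.exp_zero, mul_one]
    nlinarith [mul_le_mul_of_nonneg_left hxy hε]
  · rw [gronwallBound_of_K_ne_0 (ne_of_gt hK0)]
    have hxy' : Real.exp (K * x) ≤ Real.exp (K * y) := by
      apply Real.exp_le_exp.2; nlinarith
    have hy0 : 0 ≤ y := hx.trans hxy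
    have h2 : Real.exp (K * y) - 1 ≤ K * y * Real.exp (K * y) := by
      have hmul : Real.exp (K * y) * Real.exp (-(K * y)) = 1 := by
        rw [← Real.exp_add]; simp
      nlinarith [Real.add_one_le_exp (-(K * y)), Real.exp_pos (K * y)]
    have h3 : ε / K * (Real.exp (K * x) - 1) ≤ ε * y * Real.exp (K * y) := by
      rw [div_mul_eq_mul_div, div_le_iff₀ hK0]
      nlinarith
    nlinarith [Real.exp_pos (K * y)]

lemma aux_three_rpow {a b c p : ℝ} (ha : 0 ≤ a) (hb : 0 ≤ b) (hc : 0 ≤ c) (hp : 1 ≤ p) :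
    (a + b + c) ^ p ≤ 3 ^ p * (a ^ p + b ^ p + c ^ p) := by
  set m := max a (max b c) with hm
  have hm0 : 0 ≤ m := le_trans ha (le_max_left _ _)
  have h1 : a + b + c ≤ 3 * m := by
    have := le_max_left a (max b c)
    have := (le_max_left b c).trans (le_max_right a (max b c))
    have := (le_max_right b c).trans (le_max_right a (max b c))
    linarith
  have h2 : (a + b + c) ^ p ≤ (3 * m) ^ p :=
    Real.rpow_le_rpow (by linarith) h1 (by linarith)
  have h3 : (3 * m) ^ p = 3 ^ p * m ^ p := Real.mul_rpow (by norm_num) hm0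
  have h4 : m ^ p ≤ a ^ p + b ^ p + c ^ p := by
    rcases max_choice a (max b c) with h | h
    · rw [hm, h]
      nlinarith [Real.rpow_nonneg hb p, Real.rpow_nonneg hc p]
    · rcases max_choice b c with h' | h'
      · rw [hm, h, h']
        nlinarith [Real.rpow_nonneg ha p, Real.rpow_nonneg hc p]
      · rw [hm, h, h']
        nlinarith [Real.rpow_nonneg ha p, Real.rpow_nonneg hb p]
  calc (a+b+c)^p ≤ (3*m)^p := h2
    _ = 3^p * m^p := h3
    _ ≤ 3^p * (a^p+b^p+c^p) := by
        have : (0:ℝ) ≤ 3^p := Real.rpow_nonneg (by norm_num) p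
        nlinarith

set_option maxHeartbeats 4000000 in
theorem stmt8
    (T : ℝ) (hT : 0 < T) (χ : ℝ → ℝ → ℝ) (hχ : IsControl T χ)
    (d : ℕ) (hd : 1 ≤ d) (V : Fin (d + 1) → Ed d → Ed d) (hV : ∀ i, CbSmooth (V i))
    (C : ℝ) (hC : 0 < C)
    (p : ℝ) (hp : 1 ≤ p) :
    ∃ Ct : ℝ, 0 < Ct ∧
      ∀ s t : ℝ, 0 ≤ s → s ≤ t → t ≤ T →
        ∀ g : ℝ → Fin d → ℝ, IsDrivingDeriv χ C s t g →
          ∀ (x : Ed d) (X : ℝ → Ed d), IsSolution V g s t x X →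
            ∀ (η : Ed d) (B : ℝ → Fin (d + 1) → Ed d) (Chat : ℝ), 0 ≤ Chat →
              ContinuousOn B (Set.Icc s t) →
              BoundedVariationOn B (Set.Icc s t) →
              (∀ r ∈ Set.Icc s t, ‖B r - B s‖ ≤ Chat * Real.sqrt (χ s t)) →
              ∀ Z : ℝ → Ed d,
                (∀ u ∈ Set.Icc s t,
                  Z u = η + ∫ r in s..u,
                    (B r 0 + ∑ i : Fin d, g r i • B r i.succ
                      + fderiv ℝ (V 0) (X r) (Z r)
                      + ∑ i : Fin d, g r i • fderiv ℝ (V i.succ) (X r) (Z r))) →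
                ∀ u ∈ Set.Icc s t,
                  ‖Z u‖ ^ p ≤ Ct * (‖η‖ ^ p + ‖B s‖ ^ p + Chat ^ p)
                    * Real.exp (Ct * chit χ s t) := by
  -- a uniform bound on the derivatives of the vector fields
  obtain ⟨K, hK1, hK⟩ : ∃ K : ℝ, 1 ≤ K ∧
      ∀ (j : Fin (d+1)) (x z : Ed d), ‖fderiv ℝ (V j) x z‖ ≤ K * ‖z‖ := by
    choose M hM using fun j => (hV j).2 1
    have hsum : (0:ℝ) ≤ ∑ j, |M j| := Finset.sum_nonneg fun _ _ => abs_nonneg _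
    refine ⟨1 + ∑ j, |M j|, by linarith, fun j x z => ?_⟩
    have h1 : iteratedFDeriv ℝ 1 (V j) x (fun _ => z) = fderiv ℝ (V j) x z :=
      iteratedFDeriv_one_apply (fun _ => z)
    have h2 : ‖iteratedFDeriv ℝ 1 (V j) x (fun _ => z)‖ ≤
        ‖iteratedFDeriv ℝ 1 (V j) x‖ * ‖z‖ := by
      have := (iteratedFDeriv ℝ 1 (V j) x).le_opNorm (fun _ => z)
      simpa using this
    have h3 : ‖iteratedFDeriv ℝ 1 (V j) x‖ ≤ 1 + ∑ j, |M j| := by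
      refine (hM j x).trans ?_
      have h4 : M j ≤ ∑ j, |M j| :=
        (le_abs_self _).trans (Finset.single_le_sum (f := fun j => |M j|)
          (fun _ _ => abs_nonneg _) (Finset.mem_univ j))
      linarith
    rw [← h1]
    exact h2.trans (mul_le_mul_of_nonneg_right h3 (norm_nonneg z))
  have hdC : (0:ℝ) < (d:ℝ) * C := by
    have h1 : (1:ℝ) ≤ (d:ℝ) := by exact_mod_cast hd
    exact mul_pos (by linarith) hC
  set E0 : ℝ := (1 + (d:ℝ) * C) * Real.exp (K * (1 + (d:ℝ) * C)) with hE0def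
  set E1 : ℝ := 2 + K * (1 + (d:ℝ) * C) with hE1def
  have hE0 : 1 ≤ E0 := by
    have h0 : (0:ℝ) ≤ K * (1 + (d:ℝ) * C) := mul_nonneg (by linarith) (by linarith)
    have h1 : (1:ℝ) ≤ Real.exp (K * (1 + (d:ℝ) * C)) := Real.one_le_exp h0
    rw [hE0def]
    nlinarith
  have hE1 : 2 ≤ E1 := by
    have h0 : (0:ℝ) ≤ K * (1 + (d:ℝ) * C) := mul_nonneg (by linarith) (by linarith)
    rw [hE1def]; linarith
  have hCtpos : 0 < (3 * E0) ^ p + p * E1 + 1 := by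
    have h1 : (0:ℝ) ≤ (3 * E0) ^ p := Real.rpow_nonneg (by linarith) p
    have h2 : (0:ℝ) ≤ p * E1 := mul_nonneg (by linarith) (by linarith)
    linarith
  refine ⟨(3 * E0) ^ p + p * E1 + 1, hCtpos, ?_⟩
  intro s t hs hst htT g hg x X hX η B Chat hChat hBc hBV hBbd Z hZ u hu
  set F : ℝ → Ed d := fun r => B r 0 + ∑ i : Fin d, g r i • B r i.succ
      + fderiv ℝ (V 0) (X r) (Z r)
      + ∑ i : Fin d, g r i • fderiv ℝ (V i.succ) (X r) (Z r) with hFdef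
  set σ := Real.sqrt (χ s t) with hσdef
  set y := chit χ s t with hydef
  have hc0 : 0 ≤ χ s t := hχ.nonneg s t hs hst htT
  have hσ0 : 0 ≤ σ := Real.sqrt_nonneg _
  have hτ0 : 0 ≤ t - s := by linarith
  have hy0 : 0 ≤ y := by
    rw [hydef]; unfold chit
    have := mul_nonneg hτ0 hσ0
    rw [← hσdef]; linarith
  have hτy : t - s ≤ y := by
    rw [hydef]; unfold chit
    have := mul_nonneg hτ0 hσ0
    rw [← hσdef]; linarith
  have hσy : σ ≤ 1 + y := by
    have h1 : σ ≤ 1 + χ s t := aux_sqrt_le _ hc0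
    have h2 : χ s t ≤ y := by
      rw [hydef]; unfold chit
      have := mul_nonneg hτ0 hσ0
      rw [← hσdef]; linarith
    linarith
  set S := ‖η‖ + ‖B s‖ + Chat with hSdef
  have hS0 : 0 ≤ S := by
    have := norm_nonneg η; have := norm_nonneg (B s); rw [hSdef]; linarith
  have hSη : ‖η‖ ≤ S := by
    have := norm_nonneg (B s); rw [hSdef]; linarith
  set R := E0 * S * Real.exp (E1 * y) with hRdef
  have hexpy1 : (1:ℝ) ≤ Real.exp (E1 * y) :=
    Real.one_le_exp (mul_nonneg (by linarith) hy0)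
  have hηR : ‖η‖ ≤ R := by
    rw [hRdef]
    linarith [mul_nonneg (mul_nonneg (by linarith : (0:ℝ) ≤ E0) hS0)
      (by linarith : (0:ℝ) ≤ Real.exp (E1 * y) - 1),
      mul_nonneg (by linarith : (0:ℝ) ≤ E0 - 1) hS0, hSη]
  -- main claim
  have key : ∀ v ∈ Set.Icc s t, ‖Z v‖ ≤ R := by
    intro v hv
    by_cases hFI : IntervalIntegrable F volume s v
    swap
    · rw [hZ v hv, intervalIntegral.integral_undef hFI]
      simpa using hηR
    rcases eq_or_lt_of_le hv.1 with hsv | hsv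
    · have : Z v = η := by
        rw [hZ v hv, ← hsv, intervalIntegral.integral_same, add_zero]
      rw [this]; exact hηR
    -- now s < v, hence s < t
    have hvt : v ≤ t := hv.2
    have hst' : s < t := lt_of_lt_of_le hsv hvt
    set G : ℝ := C * σ / (t - s) with hGdef
    have hG0 : 0 ≤ G := by
      apply div_nonneg (mul_nonneg hC.le hσ0) (by linarith)
    set MB : ℝ := ‖B s‖ + Chat * σ with hMBdef
    have hMB0 : 0 ≤ MB := by
      have := norm_nonneg (B s); have := mul_nonneg hChat hσ0
      rw [hMBdef]; linarith
    set K' : ℝ := K * (1 + (d:ℝ) * G) with hK'def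
    set a'' : ℝ := (1 + (d:ℝ) * G) * MB with ha''def
    have hdG0 : (0:ℝ) ≤ (d:ℝ) * G := mul_nonneg (Nat.cast_nonneg d) hG0
    have hK'0 : 0 ≤ K' := by
      rw [hK'def]; exact mul_nonneg (by linarith) (by linarith)
    have ha''0 : 0 ≤ a'' := by
      rw [ha''def]; exact mul_nonneg (by linarith) hMB0
    -- Z is continuous on [s,v]
    have hIccF : IntegrableOn F (Set.Icc s v) volume := by
      have h0 : volume.restrict (Set.Icc s v) = volume.restrict (Set.Ioc s v) :=
        (Measure.restrict_congr_set Ioc_ae_eq_Icc).symm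
      unfold IntegrableOn
      rw [h0]
      exact hFI.1
    have hZcont : ContinuousOn Z (Set.Icc s v) := by
      have h1 : ContinuousOn (fun w => η + ∫ r in s..w, F r) (Set.Icc s v) := by
        apply ContinuousOn.add continuousOn_const
        have h2 := intervalIntegral.continuousOn_primitive_interval
          (μ := volume) (f := F) (a := s) (b := v) (by rwa [Set.uIcc_of_le hsv.le])
        rwa [Set.uIcc_of_le hsv.le] at h2
      refine ContinuousOn.congr h1 fun w hw => hZ w ⟨hw.1, hw.2.trans hvt⟩
    -- the comparison function
    set cl : ℝ → ℝ := fun r => max s (min r v) with hcldef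
    have hclmem : ∀ r, cl r ∈ Set.Icc s v :=
      fun r => ⟨le_max_left _ _, max_le hsv.le (min_le_right r v)⟩
    have hclid : ∀ r ∈ Set.Icc s v, cl r = r := by
      intro r hr
      rw [hcldef]; simp only
      rw [min_eq_left hr.2, max_eq_right hr.1]
    set h : ℝ → ℝ := fun r => a'' + K' * ‖Z (cl r)‖ with hhdef
    have hh_cont : Continuous h := by
      apply continuous_const.add
      apply Continuous.mul continuous_const
      apply Continuous.norm
      exact hZcont.comp_continuous
        (Continuous.max continuous_const (Continuous.min continuous_id continuous_const))
        hclmem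
    -- a.e. bound on ‖F‖
    have hae1 : ∀ᵐ r ∂(volume.restrict (Set.Ioo s v)), ∀ i, |g r i| ≤ G := by
      have := ae_restrict_of_ae_restrict_of_subset
        (Set.Ioo_subset_Ioo_right hvt) hg.2
      exact this
    have hFb : ∀ r ∈ Set.Ioo s v, (∀ i, |g r i| ≤ G) → ‖F r‖ ≤ h r := by
      intro r hr hgr
      have hrt : r ∈ Set.Icc s t := ⟨hr.1.le, hr.2.le.trans hvt⟩
      have hrv : r ∈ Set.Icc s v := ⟨hr.1.le, hr.2.le⟩
      have hBr : ∀ j, ‖B r j‖ ≤ MB := by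
        intro j
        have h1 : ‖B r j‖ ≤ ‖B r‖ := norm_le_pi_norm (B r) j
        have h2 : ‖B r‖ - ‖B s‖ ≤ ‖B r - B s‖ := norm_sub_norm_le _ _
        have h3 := hBbd r hrt
        rw [hMBdef]; linarith
      have hsum1 : ‖∑ i : Fin d, g r i • B r i.succ‖ ≤ (d:ℝ) * (G * MB) := by
        calc ‖∑ i : Fin d, g r i • B r i.succ‖ ≤ ∑ i : Fin d, ‖g r i • B r i.succ‖ :=
              norm_sum_le _ _
          _ = ∑ i : Fin d, |g r i| * ‖B r i.succ‖ := by
              simp [norm_smul, Real.norm_eq_abs]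
          _ ≤ ∑ _i : Fin d, G * MB := by
              refine Finset.sum_le_sum fun i _ => ?_
              exact mul_le_mul (hgr i) (hBr _) (norm_nonneg _) hG0
          _ = (d:ℝ) * (G * MB) := by
              simp [Finset.sum_const, Finset.card_univ, mul_comm]
      have hfd0 : ‖fderiv ℝ (V 0) (X r) (Z r)‖ ≤ K * ‖Z r‖ := hK 0 _ _
      have hsum2 : ‖∑ i : Fin d, g r i • fderiv ℝ (V i.succ) (X r) (Z r)‖ ≤
          (d:ℝ) * (G * (K * ‖Z r‖)) := by
        calc ‖∑ i : Fin d, g r i • fderiv ℝ (V i.succ) (X r) (Z r)‖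
            ≤ ∑ i : Fin d, ‖g r i • fderiv ℝ (V i.succ) (X r) (Z r)‖ := norm_sum_le _ _
          _ = ∑ i : Fin d, |g r i| * ‖fderiv ℝ (V i.succ) (X r) (Z r)‖ := by
              simp [norm_smul, Real.norm_eq_abs]
          _ ≤ ∑ _i : Fin d, G * (K * ‖Z r‖) := by
              refine Finset.sum_le_sum fun i _ => ?_
              exact mul_le_mul (hgr i) (hK i.succ _ _) (norm_nonneg _) hG0
          _ = (d:ℝ) * (G * (K * ‖Z r‖)) := by
              simp [Finset.sum_const, Finset.card_univ, mul_comm]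
      have hFr : ‖F r‖ ≤ MB + (d:ℝ) * (G * MB) + K * ‖Z r‖ + (d:ℝ) * (G * (K * ‖Z r‖)) := by
        rw [hFdef]
        calc ‖B r 0 + ∑ i : Fin d, g r i • B r i.succ + fderiv ℝ (V 0) (X r) (Z r)
              + ∑ i : Fin d, g r i • fderiv ℝ (V i.succ) (X r) (Z r)‖
            ≤ ‖B r 0 + ∑ i : Fin d, g r i • B r i.succ + fderiv ℝ (V 0) (X r) (Z r)‖
              + ‖∑ i : Fin d, g r i • fderiv ℝ (V i.succ) (X r) (Z r)‖ := norm_add_le _ _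
          _ ≤ ‖B r 0 + ∑ i : Fin d, g r i • B r i.succ‖ + ‖fderiv ℝ (V 0) (X r) (Z r)‖
              + ‖∑ i : Fin d, g r i • fderiv ℝ (V i.succ) (X r) (Z r)‖ := by
              have := norm_add_le (B r 0 + ∑ i : Fin d, g r i • B r i.succ)
                (fderiv ℝ (V 0) (X r) (Z r))
              linarith
          _ ≤ ‖B r 0‖ + ‖∑ i : Fin d, g r i • B r i.succ‖ + ‖fderiv ℝ (V 0) (X r) (Z r)‖
              + ‖∑ i : Fin d, g r i • fderiv ℝ (V i.succ) (X r) (Z r)‖ := by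
              have := norm_add_le (B r 0) (∑ i : Fin d, g r i • B r i.succ)
              linarith
          _ ≤ MB + (d:ℝ) * (G * MB) + K * ‖Z r‖ + (d:ℝ) * (G * (K * ‖Z r‖)) := by
              have := hBr 0
              linarith
      have hhr : h r = a'' + K' * ‖Z r‖ := by
        rw [hhdef]; simp only; rw [hclid r hrv]
      rw [hhr, ha''def, hK'def]
      linarith [hFr]
    have hFhv : ∀ᵐ r ∂(volume.restrict (Set.Ioo s v)), ‖F r‖ ≤ h r := by
      have hmem : ∀ᵐ r ∂(volume.restrict (Set.Ioo s v)), r ∈ Set.Ioo s v :=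
        ae_restrict_mem measurableSet_Ioo
      filter_upwards [hae1, hmem] with r h1 h2
      exact hFb r h2 h1
    -- ψ and its properties
    set ψ : ℝ → ℝ := fun w => ‖η‖ + ∫ r in s..w, h r with hψdef
    have hψd : ∀ w, HasDerivAt ψ (h w) w := by
      intro w
      exact HasDerivAt.const_add _ ((hh_cont.integral_hasStrictDerivAt s w).hasDerivAt)
    have hψcont : ContinuousOn ψ (Set.Icc s v) :=
      fun w _ => (hψd w).continuousAt.continuousWithinAt
    have h1 : ∀ w ∈ Set.Icc s v, ‖Z w‖ ≤ ψ w := by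
      intro w hw
      have hw' : w ∈ Set.Icc s t := ⟨hw.1, hw.2.trans hvt⟩
      have e1 := hZ w hw'
      have n1 : ‖Z w‖ ≤ ‖η‖ + ‖∫ r in s..w, F r‖ := by
        rw [e1]; exact norm_add_le _ _
      have n2 : ‖∫ r in s..w, F r‖ ≤ ∫ r in s..w, ‖F r‖ :=
        intervalIntegral.norm_integral_le_integral_norm hw.1
      have hFIw : IntervalIntegrable F volume s w := by
        apply hFI.mono_set
        rw [Set.uIcc_of_le hw.1, Set.uIcc_of_le hsv.le]
        exact Set.Icc_subset_Icc_right hw.2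
      have hhI : IntervalIntegrable h volume s w := hh_cont.intervalIntegrable s w
      have haew : (fun r => ‖F r‖) ≤ᵐ[volume.restrict (Set.Icc s w)] h := by
        have h0 : volume.restrict (Set.Icc s w) = volume.restrict (Set.Ioo s w) :=
          (Measure.restrict_congr_set Ioo_ae_eq_Icc).symm
        rw [h0]
        exact ae_restrict_of_ae_restrict_of_subset (Set.Ioo_subset_Ioo_right hw.2) hFhv
      have n3 := intervalIntegral.integral_mono_ae_restrict hw.1 hFIw.norm hhI haew
      have : ψ w = ‖η‖ + ∫ r in s..w, h r := rfl
      rw [this]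
      linarith
    -- Grönwall
    have hg1 : ∀ w ∈ Set.Icc s v, ψ w ≤ gronwallBound ‖η‖ K' a'' (w - s) := by
      apply le_gronwallBound_of_liminf_deriv_right_le (f' := h) hψcont
      · intro w _ r hr
        have := ((hψd w).hasDerivWithinAt (s := Set.Ici w)).liminf_right_slope_le hr
        refine this.mono fun z hz => ?_
        rwa [slope_def_field, div_eq_inv_mul] at hz
      · have : ψ s = ‖η‖ := by
          rw [hψdef]; simp
        rw [this]
      · intro w hw
        have hZw := h1 w ⟨hw.1, hw.2.le⟩
        have : h w = a'' + K' * ‖Z w‖ := by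
          rw [hhdef]; simp only; rw [hclid w ⟨hw.1, hw.2.le⟩]
        rw [this]
        have hmul := mul_le_mul_of_nonneg_left hZw hK'0
        linarith
    have hZv1 : ‖Z v‖ ≤ gronwallBound ‖η‖ K' a'' (v - s) :=
      (h1 v ⟨hsv.le, le_refl v⟩).trans (hg1 v ⟨hsv.le, le_refl v⟩)
    have hZv2 : ‖Z v‖ ≤ (‖η‖ + a'' * (t - s)) * Real.exp (K' * (t - s)) :=
      hZv1.trans (aux_gronwallBound_le (norm_nonneg η) hK'0 ha''0
        (by linarith [hsv.le]) (by linarith))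
    -- arithmetic: (‖η‖ + a''τ) e^{K'τ} ≤ R
    have eG : G * (t - s) = C * σ := by
      rw [hGdef]; exact div_mul_cancel₀ _ (sub_ne_zero.2 (ne_of_gt hst'))
    have e2 : a'' * (t - s) = ((t - s) + (d:ℝ) * (C * σ)) * MB := by
      rw [ha''def]
      have : (1 + (d:ℝ) * G) * MB * (t - s) = ((t - s) + (d:ℝ) * (G * (t-s))) * MB := by ring
      rw [this, eG]
    have e3 : K' * (t - s) = K * ((t - s) + (d:ℝ) * (C * σ)) := by
      rw [hK'def]
      have : K * (1 + (d:ℝ) * G) * (t - s) = K * ((t - s) + (d:ℝ) * (G * (t-s))) := by ring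
      rw [this, eG]
    have f1 : (t - s) + (d:ℝ) * (C * σ) ≤ (1 + (d:ℝ) * C) * (1 + y) := by
      have ha := mul_le_mul_of_nonneg_left hσy hdC.le
      linarith
    have f2 : MB ≤ (‖B s‖ + Chat) * (1 + y) := by
      rw [hMBdef]
      have ha := mul_le_mul_of_nonneg_left hσy hChat
      have hb := mul_nonneg (norm_nonneg (B s)) hy0
      linarith
    have f3 : ‖η‖ + a'' * (t - s) ≤ (1 + (d:ℝ) * C) * (1 + y) ^ 2 * S := by
      rw [e2]
      have hprod : ((t - s) + (d:ℝ) * (C * σ)) * MB ≤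
          ((1 + (d:ℝ) * C) * (1 + y)) * ((‖B s‖ + Chat) * (1 + y)) := by
        apply mul_le_mul f1 f2 hMB0
        exact mul_nonneg (by linarith) (by linarith)
      have hBig : (1:ℝ) ≤ (1 + (d:ℝ) * C) * (1 + y) ^ 2 := by
        have h1 : (1:ℝ) ≤ (1 + y) ^ 2 := by linarith [sq_nonneg y, hy0]
        have h2 := mul_le_mul_of_nonneg_left h1 (by linarith : (0:ℝ) ≤ 1 + (d:ℝ) * C)
        linarith
      have h8 : (0:ℝ) ≤ ((1 + (d:ℝ) * C) * (1 + y) ^ 2 - 1) * ‖η‖ :=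
        mul_nonneg (by linarith) (norm_nonneg η)
      rw [hSdef]
      linarith [hprod, h8]
    have f4 : K' * (t - s) ≤ K * (1 + (d:ℝ) * C) * (1 + y) := by
      rw [e3]
      have := mul_le_mul_of_nonneg_left f1 (by linarith : (0:ℝ) ≤ K)
      linarith
    have f5 : (1 + y) ^ 2 ≤ Real.exp (2 * y) := by
      have h1 := Real.add_one_le_exp y
      have h2 : Real.exp (2 * y) = Real.exp y * Real.exp y := by
        rw [← Real.exp_add]; congr 1; ring
      have h3 := mul_le_mul h1 h1 (by linarith) (Real.exp_pos y).le
      rw [h2]; linarith [h3]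
    have hstep : (‖η‖ + a'' * (t - s)) * Real.exp (K' * (t - s)) ≤
        ((1 + (d:ℝ) * C) * (1 + y) ^ 2 * S) * Real.exp (K * (1 + (d:ℝ) * C) * (1 + y)) := by
      apply mul_le_mul f3 (Real.exp_le_exp.2 f4) (Real.exp_pos _).le
      exact mul_nonneg (mul_nonneg (by linarith) (sq_nonneg _)) hS0
    have hstep2 : ((1 + (d:ℝ) * C) * (1 + y) ^ 2 * S) *
        Real.exp (K * (1 + (d:ℝ) * C) * (1 + y)) ≤ R := by
      have hexpand : Real.exp (K * (1 + (d:ℝ) * C) * (1 + y)) =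
          Real.exp (K * (1 + (d:ℝ) * C)) * Real.exp (K * (1 + (d:ℝ) * C) * y) := by
        rw [← Real.exp_add]; congr 1; ring
      have hexpand2 : Real.exp (E1 * y) = Real.exp (2 * y) * Real.exp (K * (1 + (d:ℝ) * C) * y) := by
        rw [← Real.exp_add, hE1def]; congr 1; ring
      rw [hexpand, hRdef, hE0def, hexpand2]
      have h6 : (0:ℝ) ≤ ((1 + (d:ℝ) * C) * S) *
          (Real.exp (K * (1 + (d:ℝ) * C)) * Real.exp (K * (1 + (d:ℝ) * C) * y)) := by
        have h61 : (0:ℝ) ≤ (1 + (d:ℝ) * C) * S := mul_nonneg (by linarith) hS0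
        exact mul_nonneg h61 (mul_pos (Real.exp_pos _) (Real.exp_pos _)).le
      have h7 := mul_le_mul_of_nonneg_right f5 h6
      calc (1 + (d:ℝ) * C) * (1 + y) ^ 2 * S *
            (Real.exp (K * (1 + (d:ℝ) * C)) * Real.exp (K * (1 + (d:ℝ) * C) * y))
          = (1 + y) ^ 2 * (((1 + (d:ℝ) * C) * S) *
              (Real.exp (K * (1 + (d:ℝ) * C)) * Real.exp (K * (1 + (d:ℝ) * C) * y))) := by ring
        _ ≤ Real.exp (2 * y) * (((1 + (d:ℝ) * C) * S) *
              (Real.exp (K * (1 + (d:ℝ) * C)) * Real.exp (K * (1 + (d:ℝ) * C) * y))) := h7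
        _ = (1 + (d:ℝ) * C) * Real.exp (K * (1 + (d:ℝ) * C)) * S *
              (Real.exp (2 * y) * Real.exp (K * (1 + (d:ℝ) * C) * y)) := by ring
    exact hZv2.trans (hstep.trans hstep2)
  -- conclude
  have hp0 : (0:ℝ) ≤ p := by linarith
  have hRn : (0:ℝ) ≤ R := by
    rw [hRdef]
    exact mul_nonneg (mul_nonneg (by linarith) hS0) (Real.exp_pos _).le
  have step1 : ‖Z u‖ ^ p ≤ R ^ p := Real.rpow_le_rpow (norm_nonneg _) (key u hu) hp0
  have step2 : R ^ p = E0 ^ p * S ^ p * Real.exp (E1 * y * p) := by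
    rw [hRdef, Real.mul_rpow (mul_nonneg (by linarith : (0:ℝ) ≤ E0) hS0) (Real.exp_pos _).le,
      Real.mul_rpow (by linarith : (0:ℝ) ≤ E0) hS0, ← Real.exp_mul]
  have step3 : S ^ p ≤ 3 ^ p * (‖η‖ ^ p + ‖B s‖ ^ p + Chat ^ p) := by
    rw [hSdef]
    exact aux_three_rpow (norm_nonneg _) (norm_nonneg _) hChat hp
  set Sig : ℝ := ‖η‖ ^ p + ‖B s‖ ^ p + Chat ^ p with hSigdef
  have hSig0 : 0 ≤ Sig := by
    rw [hSigdef]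
    have := Real.rpow_nonneg (norm_nonneg η) p
    have := Real.rpow_nonneg (norm_nonneg (B s)) p
    have := Real.rpow_nonneg hChat p
    linarith
  set Ct : ℝ := (3 * E0) ^ p + p * E1 + 1 with hCtdef
  have hCt1 : 3 ^ p * E0 ^ p ≤ Ct := by
    rw [hCtdef, ← Real.mul_rpow (by norm_num) (by linarith)]
    linarith [mul_nonneg hp0 (by linarith : (0:ℝ) ≤ E1)]
  have hCt2 : Real.exp (E1 * y * p) ≤ Real.exp (Ct * y) := by
    apply Real.exp_le_exp.2
    have hE1p : E1 * p ≤ Ct := by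
      rw [hCtdef]
      have h1 := Real.rpow_nonneg (by linarith : (0:ℝ) ≤ 3 * E0) p
      have h2 : E1 * p = p * E1 := by ring
      linarith
    have h3 := mul_le_mul_of_nonneg_right hE1p hy0
    linarith [h3]
  have hE0p : (0:ℝ) ≤ E0 ^ p := Real.rpow_nonneg (by linarith) p
  have h3p : (0:ℝ) ≤ 3 ^ p * (‖η‖ ^ p + ‖B s‖ ^ p + Chat ^ p) := by
    have h1 : (0:ℝ) ≤ (3:ℝ) ^ p := Real.rpow_nonneg (by norm_num) p
    have := Real.rpow_nonneg (norm_nonneg η) p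
    have := Real.rpow_nonneg (norm_nonneg (B s)) p
    have := Real.rpow_nonneg hChat p
    exact mul_nonneg h1 (by linarith)
  calc ‖Z u‖ ^ p ≤ R ^ p := step1
    _ = E0 ^ p * S ^ p * Real.exp (E1 * y * p) := step2
    _ ≤ E0 ^ p * (3 ^ p * Sig) * Real.exp (E1 * y * p) :=
        mul_le_mul_of_nonneg_right (mul_le_mul_of_nonneg_left step3 hE0p)
          (Real.exp_pos _).le
    _ = (3 ^ p * E0 ^ p) * Sig * Real.exp (E1 * y * p) := by ring
    _ ≤ Ct * Sig * Real.exp (E1 * y * p) :=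
        mul_le_mul_of_nonneg_right (mul_le_mul_of_nonneg_right hCt1 hSig0)
          (Real.exp_pos _).le
    _ ≤ Ct * Sig * Real.exp (Ct * y) := by
        have hCt0 : (0:ℝ) ≤ Ct := by rw [hCtdef]; exact hCtpos.le
        exact mul_le_mul_of_nonneg_left hCt2 (mul_nonneg hCt0 hSig0)

end
end

section
/- Let (W^{s,t})_{(s,t)∈Δ_T} be a family of random driving paths, all with the same constant C and control χ, with pathwise solutions X^{s,t,x} of the driven ODE jointly measurable in (x,ω), and set Q_{s,t}f(x) := E[f(X^{s,t,x}_t)]. Then the family (Q_{s,t}) is strongly continuous at the diagonal on Ĉ(ℝ^d,ℝ): for every f ∈ Ĉ(ℝ^d,ℝ) and every ε > 0 there is δ > 0 such that for all (s,t) ∈ Δ_T with t − s ≤ δ one has sup_x |Q_{s,t}f(x) − f(x)| ≤ ε. -/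
open MeasureTheory Filter

noncomputable section

theorem stmt15
    (T : ℝ) (hT : 0 < T) (χ : ℝ → ℝ → ℝ) (hχ : IsControl T χ)
    (d : ℕ) (hd : 1 ≤ d) (V : Fin (d + 1) → Ed d → Ed d) (hV : ∀ i, CbSmooth (V i))
    (C : ℝ) (hC : 0 < C)
    (Ω : Type*) [MeasurableSpace Ω] (ℙ : Measure Ω) [IsProbabilityMeasure ℙ]
    (W G : ℝ → ℝ → Ω → ℝ → Fin d → ℝ)
    (hdrive : ∀ a b : ℝ, 0 ≤ a → a < b → b ≤ T →
      ∀ᵐ ω ∂ℙ, IsDrivingDeriv χ C a b (G a b ω) ∧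
        ∀ u ∈ Set.Icc a b, ∀ i, W a b ω u i = W a b ω a i + ∫ r in a..u, G a b ω r i)
    (X : ℝ → ℝ → Ed d → Ω → ℝ → Ed d)
    (hXsol : ∀ a b : ℝ, 0 ≤ a → a < b → b ≤ T →
      ∀ᵐ ω ∂ℙ, ∀ x : Ed d, IsSolution V (G a b ω) a b x (X a b x ω))
    (hXdiag : ∀ a : ℝ, 0 ≤ a → a ≤ T → ∀ x : Ed d, ∀ᵐ ω ∂ℙ, X a a x ω a = x)
    (hXmeas : ∀ a b : ℝ, 0 ≤ a → a ≤ b → b ≤ T →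
      ∀ u ∈ Set.Icc a b, Measurable fun q : Ed d × Ω => X a b q.1 q.2 u)
    (Q : ℝ → ℝ → (Ed d → ℝ) → Ed d → ℝ)
    (hQ : ∀ a b : ℝ, ∀ (f : Ed d → ℝ) (x : Ed d), Q a b f x = ∫ ω, f (X a b x ω b) ∂ℙ)
    (f : Ed d → ℝ) (hfc : Continuous f)
    (hf0 : Tendsto f (cocompact (Ed d)) (nhds 0)) :
    ∀ ε : ℝ, 0 < ε → ∃ δ : ℝ, 0 < δ ∧
      ∀ s t : ℝ, 0 ≤ s → s ≤ t → t ≤ T → t - s ≤ δ →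
        ∀ x : Ed d, |Q s t f x - f x| ≤ ε := by
  classical
  -- bound on the vector fields
  choose M hM using fun i => (hV i).2 0
  set B : ℝ := ∑ j : Fin (d + 1), max (M j) 0 with hBdef
  have hB0 : 0 ≤ B := Finset.sum_nonneg fun j _ => le_max_right _ _
  have hVB : ∀ i y, ‖V i y‖ ≤ B := by
    intro i y
    calc ‖V i y‖ = ‖iteratedFDeriv ℝ 0 (V i) y‖ := (norm_iteratedFDeriv_zero).symm
      _ ≤ M i := hM i y
      _ ≤ max (M i) 0 := le_max_left _ _
      _ ≤ B := Finset.single_le_sum (f := fun j => max (M j) 0)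
          (fun j _ => le_max_right _ _) (Finset.mem_univ i)
  -- f is uniformly continuous and bounded
  have hfu : UniformContinuous f := hfc.uniformContinuous_of_tendsto_cocompact hf0
  obtain ⟨Kf, hKf⟩ : ∃ Kf : ℝ, ∀ y, ‖f y‖ ≤ Kf := by
    have h1 : ∀ᶠ y in cocompact (Ed d), f y ∈ Metric.ball (0 : ℝ) 1 :=
      hf0.eventually (Metric.ball_mem_nhds 0 one_pos)
    rw [hasBasis_cocompact.eventually_iff] at h1
    obtain ⟨K, hKc, hK⟩ := h1
    obtain ⟨C₁, hC₁⟩ := hKc.exists_bound_of_continuousOn hfc.continuousOn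
    refine ⟨max C₁ 1, fun y => ?_⟩
    by_cases hy : y ∈ K
    · exact le_trans (hC₁ y hy) (le_max_left _ _)
    · have := hK hy
      simp only [Metric.mem_ball, dist_zero_right] at this
      exact le_trans this.le (le_max_right _ _)
  -- the triangle is compact, so χ is uniformly continuous on it
  set S : Set (ℝ × ℝ) := {p | 0 ≤ p.1 ∧ p.1 ≤ p.2 ∧ p.2 ≤ T} with hSdef
  have hScl : IsClosed S := by
    have : S = {p : ℝ × ℝ | 0 ≤ p.1} ∩ ({p : ℝ × ℝ | p.1 ≤ p.2} ∩ {p : ℝ × ℝ | p.2 ≤ T}) := by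
      ext p; simp [hSdef, Set.mem_inter_iff, and_assoc]
    rw [this]
    exact (isClosed_le continuous_const continuous_fst).inter
      ((isClosed_le continuous_fst continuous_snd).inter
        (isClosed_le continuous_snd continuous_const))
  have hScomp : IsCompact S := by
    refine (isCompact_Icc.prod isCompact_Icc :
      IsCompact (Set.Icc (0:ℝ) T ×ˢ Set.Icc (0:ℝ) T)).of_isClosed_subset hScl ?_
    rintro ⟨a, b⟩ ⟨h1, h2, h3⟩
    exact ⟨⟨h1, le_trans h2 h3⟩, ⟨le_trans h1 h2, h3⟩⟩
  have hχu : UniformContinuousOn (fun p : ℝ × ℝ => χ p.1 p.2) S :=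
    hScomp.uniformContinuousOn_of_continuous hχ.cont
  intro ε hε
  obtain ⟨r, hr, hrf⟩ := Metric.uniformContinuous_iff.mp hfu ε hε
  set η : ℝ := (r / (2 * ((d : ℝ) * C * B + 1))) ^ 2 with hηdef
  have hdCB : (0:ℝ) ≤ (d : ℝ) * C * B := by positivity
  have hη : 0 < η := by positivity
  obtain ⟨δ₁, hδ₁, hδ₁χ⟩ := Metric.uniformContinuousOn_iff.mp hχu η hη
  refine ⟨min (δ₁ / 2) (r / (2 * (B + 1))), by positivity, ?_⟩
  intro s t hs hst htT hδ x
  have hsT : s ≤ T := le_trans hst htT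
  rcases eq_or_lt_of_le hst with heq | hlt
  · -- diagonal case
    subst heq
    have hdiag := hXdiag s hs hsT x
    have : Q s s f x = f x := by
      rw [hQ]
      have : ∫ ω, f (X s s x ω s) ∂ℙ = ∫ _ω, f x ∂ℙ :=
        integral_congr_ae (hdiag.mono fun ω hω => by simp only [hω])
      rw [this, integral_const]
      simp
    rw [this]
    simp [hε.le]
  · -- main case: s < t
    -- the control is small
    have hχst : χ s t < η := by
      have hmem1 : (s, t) ∈ S := ⟨hs, hst, htT⟩
      have hmem2 : (s, s) ∈ S := ⟨hs, le_refl s, hsT⟩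
      have hdist : dist (s, t) (s, s) < δ₁ := by
        rw [Prod.dist_eq]
        simp only [dist_self]
        have : dist t s = t - s := by rw [Real.dist_eq, abs_of_nonneg (by linarith)]
        rw [this]
        have h1 : t - s ≤ δ₁ / 2 := le_trans hδ (min_le_left _ _)
        simp only [max_lt_iff]
        constructor <;> linarith
      have := hδ₁χ (s, t) hmem1 (s, s) hmem2 hdist
      rw [Real.dist_eq, hχ.diag s hs hsT, sub_zero,
        abs_of_nonneg (hχ.nonneg s t hs hst htT)] at this
      exact this
    have hχnn : 0 ≤ χ s t := hχ.nonneg s t hs hst htT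
    have hts : 0 < t - s := by linarith
    -- a.e. bound on the distance between X_t and x, hence on |f(X_t) - f x|
    have hae : ∀ᵐ ω ∂ℙ, ‖f (X s t x ω t) - f x‖ ≤ ε := by
      filter_upwards [hdrive s t hs hlt htT, hXsol s t hs hlt htT] with ω hgω hsolω
      obtain ⟨⟨hgmeas, hgbd⟩, -⟩ := hgω
      have hXeq := (hsolω x).2 t ⟨hst, le_refl t⟩
      set K : ℝ := B + (d : ℝ) * (C * Real.sqrt (χ s t) / (t - s) * B) with hKdef
      have hKnn : 0 ≤ K := by
        have h1 : 0 ≤ C * Real.sqrt (χ s t) / (t - s) := by positivity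
        rw [hKdef]
        exact add_nonneg hB0 (mul_nonneg (by positivity) (mul_nonneg h1 hB0))
      have hdistX : dist (X s t x ω t) x ≤ B * (t - s) + (d : ℝ) * C * B * Real.sqrt (χ s t) := by
        rw [dist_eq_norm, hXeq, add_sub_cancel_left]
        have hbd : ∀ᵐ u ∂(volume.restrict (Set.uIoc s t)),
            ‖V 0 (X s t x ω u) + ∑ i : Fin d, G s t ω u i • V i.succ (X s t x ω u)‖ ≤ K := by
          rw [Set.uIoc_of_le hst, ← Measure.restrict_congr_set Ioo_ae_eq_Ioc]
          filter_upwards [hgbd] with u hu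
          calc ‖V 0 (X s t x ω u) + ∑ i : Fin d, G s t ω u i • V i.succ (X s t x ω u)‖
              ≤ ‖V 0 (X s t x ω u)‖ + ‖∑ i : Fin d, G s t ω u i • V i.succ (X s t x ω u)‖ :=
                norm_add_le _ _
            _ ≤ B + ∑ i : Fin d, ‖G s t ω u i • V i.succ (X s t x ω u)‖ :=
                add_le_add (hVB 0 _) (norm_sum_le _ _)
            _ ≤ B + ∑ _i : Fin d, C * Real.sqrt (χ s t) / (t - s) * B := by
                refine add_le_add (le_refl B) (Finset.sum_le_sum fun i _ => ?_)
                rw [norm_smul, Real.norm_eq_abs]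
                exact mul_le_mul (hu i) (hVB i.succ _) (norm_nonneg _)
                  (by positivity)
            _ = K := by rw [Finset.sum_const, Finset.card_univ, Fintype.card_fin,
                nsmul_eq_mul, hKdef]
        calc ‖∫ u in s..t, (V 0 (X s t x ω u) +
              ∑ i : Fin d, G s t ω u i • V i.succ (X s t x ω u))‖
            ≤ |∫ _u in s..t, K| :=
              intervalIntegral.norm_integral_le_abs_of_norm_le hbd
                (intervalIntegrable_const)
          _ = (t - s) * K := by
              rw [intervalIntegral.integral_const, smul_eq_mul,
                abs_of_nonneg (mul_nonneg hts.le hKnn)]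
          _ = B * (t - s) + (d : ℝ) * C * B * Real.sqrt (χ s t) := by
              rw [hKdef]; field_simp
      have hdistr : dist (X s t x ω t) x < r := by
        have h1 : B * (t - s) < r / 2 := by
          have ht2 : t - s ≤ r / (2 * (B + 1)) := le_trans hδ (min_le_right _ _)
          have : B * (t - s) ≤ B * (r / (2 * (B + 1))) :=
            mul_le_mul_of_nonneg_left ht2 hB0
          have h2 : B * (r / (2 * (B + 1))) < (B + 1) * (r / (2 * (B + 1))) :=
            mul_lt_mul_of_pos_right (by linarith) (by positivity)
          have h3 : (B + 1) * (r / (2 * (B + 1))) = r / 2 := by field_simp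
          linarith
        have h2 : (d : ℝ) * C * B * Real.sqrt (χ s t) < r / 2 := by
          have hsq : Real.sqrt (χ s t) ≤ r / (2 * ((d : ℝ) * C * B + 1)) := by
            calc Real.sqrt (χ s t) ≤ Real.sqrt η := Real.sqrt_le_sqrt hχst.le
              _ = r / (2 * ((d : ℝ) * C * B + 1)) := by
                  rw [hηdef, Real.sqrt_sq (by positivity)]
          have h3 : (d : ℝ) * C * B * Real.sqrt (χ s t)
              ≤ (d : ℝ) * C * B * (r / (2 * ((d : ℝ) * C * B + 1))) :=
            mul_le_mul_of_nonneg_left hsq hdCB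
          have h4 : (d : ℝ) * C * B * (r / (2 * ((d : ℝ) * C * B + 1)))
              < ((d : ℝ) * C * B + 1) * (r / (2 * ((d : ℝ) * C * B + 1))) :=
            mul_lt_mul_of_pos_right (by linarith) (by positivity)
          have h5 : ((d : ℝ) * C * B + 1) * (r / (2 * ((d : ℝ) * C * B + 1))) = r / 2 := by
            field_simp
          linarith
        calc dist (X s t x ω t) x ≤ B * (t - s) + (d : ℝ) * C * B * Real.sqrt (χ s t) := hdistX
          _ < r / 2 + r / 2 := by linarith
          _ = r := by ring
      have := hrf hdistr
      rw [Real.dist_eq] at this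
      rw [Real.norm_eq_abs]
      exact this.le
    -- measurability and integrability
    have hXm : Measurable fun ω => X s t x ω t :=
      (hXmeas s t hs hst htT t ⟨hst, le_refl t⟩).comp (measurable_const.prodMk measurable_id)
    have hfXm : AEStronglyMeasurable (fun ω => f (X s t x ω t)) ℙ :=
      (hfc.measurable.comp hXm).aestronglyMeasurable
    have hint : Integrable (fun ω => f (X s t x ω t)) ℙ :=
      Integrable.mono' (integrable_const Kf) hfXm (Eventually.of_forall fun ω => hKf _)
    -- conclude
    rw [hQ]
    have hsplit : (∫ ω, f (X s t x ω t) ∂ℙ) - f x = ∫ ω, (f (X s t x ω t) - f x) ∂ℙ := by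
      rw [integral_sub hint (integrable_const (f x)), integral_const]
      simp
    rw [hsplit, ← Real.norm_eq_abs]
    calc ‖∫ ω, (f (X s t x ω t) - f x) ∂ℙ‖ ≤ ε * (ℙ Set.univ).toReal :=
        norm_integral_le_of_norm_le_const hae
      _ = ε := by simp
end
end

section
/- Let (s,t) ∈ Δ_T, let ω be a driving path on [s,t] with constant C, and let m ∈ ℕ. For each word α = (i₀,i₁,…,i_k) with letters in {0,1,…,d} such that (i₁,…,i_k) ∈ A_m but α ∉ A_m, let Y^α : [s,t] → ℝ be a bounded measurable function. Then there is a constant C' > 0, depending only on m, d and C, such that Σ_α |I^α_{s,t}[ω](Y^α)| ≤ C' · (sup_α sup_{r ∈ [s,t]} |Y^α_r|) · χ̃(s,t)^{(m+1)/2}, the sum and supremum being over all such words α. -/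
open MeasureTheory Filter

noncomputable section

/-- A word over the alphabet `{0, 1, …, d}`. -/
abbrev Word (d : ℕ) := List (Fin (d + 1))

/-- The weighted length `‖α‖ = |α| + #{j : α_j = 0}`. -/
def wlen {d : ℕ} (α : Word d) : ℕ := α.length + α.count 0

/-- Iterated integral, recursion on the outermost (last) integrator; the integrand `Y`
sits at the innermost position.  Here `gg r 0 = 1` corresponds to `dω⁰_r = dr`. -/
def iterIntAux {d : ℕ} (gg : ℝ → Fin (d + 1) → ℝ) (Y : ℝ → ℝ) (s : ℝ) :
    Word d → ℝ → ℝ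
  | [], u => Y u
  | i :: α, u => ∫ r in s..u, iterIntAux gg Y s α r * gg r i

/-- The iterated integral `I^α_{s,t}[ω](Y)` of a driving path with derivative `g`
(and `ω⁰_r = r`). -/
def iterInt {d : ℕ} (g : ℝ → Fin d → ℝ) (Y : ℝ → ℝ) (s : ℝ) (α : Word d) (t : ℝ) : ℝ :=
  iterIntAux (fun r => Fin.cons 1 (g r)) Y s α.reverse t

/-- `V_α f = V_{i₁} ⋯ V_{i_n} f`, where `V_i f(x) = Df(x)·V_i(x)`. -/
def vWord {d : ℕ} (V : Fin (d + 1) → Ed d → Ed d) : Word d → (Ed d → ℝ) → Ed d → ℝ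
  | [], f => f
  | i :: α, f => fun x => fderiv ℝ (vWord V α f) x (V i x)

/-- The words `α = (i₀, i₁, …, i_k)` with `(i₁, …, i_k) ∈ A_m` but `α ∉ A_m`. -/
def InRemainder (d m : ℕ) (α : Word d) : Prop :=
  ∃ (i₀ : Fin (d + 1)) (tl : Word d), α = i₀ :: tl ∧ wlen tl ≤ m ∧ m < wlen α


/-! ### Auxiliary lemmas -/

lemma myIterBound {d : ℕ} {s t : ℝ} (hst : s < t) (gg : ℝ → Fin (d + 1) → ℝ)
    (hgg : Measurable gg) (hgg0 : ∀ r, gg r 0 = 1) {K : ℝ} (hK : 0 ≤ K)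
    (hggb : ∀ i : Fin (d + 1), i ≠ 0 →
      ∀ᵐ r ∂(volume.restrict (Set.Ioc s t)), |gg r i| ≤ K / (t - s))
    (Y : ℝ → ℝ) (hY : Measurable Y) {M : ℝ} (hM : 0 ≤ M)
    (hYb : ∀ r ∈ Set.Icc s t, |Y r| ≤ M) (α : Word d) :
    (∀ u ∈ Set.Icc s t, |iterIntAux gg Y s α u| ≤
      M * (α.map (fun i => if i = 0 then t - s else K)).prod) ∧
    AEStronglyMeasurable (iterIntAux gg Y s α) (volume.restrict (Set.Ioc s t)) := by
  have htne : t - s ≠ 0 := sub_ne_zero.mpr hst.ne'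
  induction α with
  | nil =>
    constructor
    · intro u hu; simpa [iterIntAux] using hYb u hu
    · exact hY.aestronglyMeasurable
  | cons i β ih =>
    obtain ⟨ihb, ihm⟩ := ih
    have hcstnn : ∀ j : Fin (d + 1), 0 ≤ (if j = 0 then t - s else K) := by
      intro j
      by_cases h : j = 0 <;> simp [h, hK, hst.le, sub_nonneg]
    have hPnn0 : 0 ≤ (β.map (fun i => if i = 0 then t - s else K)).prod := by
      apply List.prod_nonneg
      intro x hx
      obtain ⟨j, _, rfl⟩ := List.mem_map.mp hx
      exact hcstnn j
    set P : ℝ := M * (β.map (fun i => if i = 0 then t - s else K)).prod with hP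
    have hPnn : 0 ≤ P := mul_nonneg hM hPnn0
    set cb : ℝ := if i = 0 then 1 else K / (t - s) with hcb
    have hcbnn : 0 ≤ cb := by
      rcases eq_or_ne i 0 with h | h
      · simp [hcb, h]
      · rw [hcb, if_neg h]
        exact div_nonneg hK (by linarith)
    have hmeasi : Measurable fun r => gg r i := (measurable_pi_apply i).comp hgg
    have haeb : ∀ᵐ r ∂(volume.restrict (Set.Ioc s t)),
        |iterIntAux gg Y s β r * gg r i| ≤ P * cb := by
      rcases eq_or_ne i 0 with h | h
      · subst h
        filter_upwards [ae_restrict_mem measurableSet_Ioc] with r hr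
        rw [hgg0 r, mul_one]
        have := ihb r (Set.Ioc_subset_Icc_self hr)
        rw [hcb, if_pos rfl, mul_one]
        exact this
      · filter_upwards [hggb i h, ae_restrict_mem measurableSet_Ioc] with r h1 hr
        rw [abs_mul, hcb, if_neg h]
        exact mul_le_mul (ihb r (Set.Ioc_subset_Icc_self hr)) h1 (abs_nonneg _) hPnn
    have hint : IntervalIntegrable (fun r => iterIntAux gg Y s β r * gg r i) volume s t := by
      rw [intervalIntegrable_iff_integrableOn_Ioc_of_le hst.le]
      refine ⟨ihm.mul hmeasi.aestronglyMeasurable, ?_⟩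
      apply HasFiniteIntegral.of_bounded (C := P * cb)
      filter_upwards [haeb] with r hr
      simpa [Real.norm_eq_abs, abs_mul] using hr
    constructor
    · intro u hu
      have hsub : Set.uIoc s u ⊆ Set.Ioc s t := by
        rw [Set.uIoc_of_le hu.1]
        exact Set.Ioc_subset_Ioc_right hu.2
      have hae2 : ∀ᵐ x ∂(volume : Measure ℝ), x ∈ Set.uIoc s u →
          ‖iterIntAux gg Y s β x * gg x i‖ ≤ P * cb := by
        filter_upwards [(ae_restrict_iff' measurableSet_Ioc).mp haeb] with x hx hxu
        simpa [Real.norm_eq_abs, abs_mul] using hx (hsub hxu)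
      have hle := intervalIntegral.norm_integral_le_of_norm_le_const_ae hae2
      have h1 : |u - s| ≤ t - s := by
        rw [abs_of_nonneg (by linarith [hu.1])]
        linarith [hu.2]
      have hmain : |iterIntAux gg Y s (i :: β) u| ≤ P * cb * (t - s) := by
        calc |iterIntAux gg Y s (i :: β) u| ≤ P * cb * |u - s| := by
              simpa [iterIntAux, Real.norm_eq_abs] using hle
          _ ≤ P * cb * (t - s) := mul_le_mul_of_nonneg_left h1 (mul_nonneg hPnn hcbnn)
      refine hmain.trans (le_of_eq ?_)
      rcases eq_or_ne i 0 with h | h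
      · rw [hP, hcb, if_pos h, List.map_cons, List.prod_cons, if_pos h]
        ring
      · rw [hP, hcb, if_neg h, List.map_cons, List.prod_cons, if_neg h]
        field_simp
    · have hcont : ContinuousOn (fun u => ∫ r in s..u, iterIntAux gg Y s β r * gg r i)
          (Set.uIcc s t) :=
        intervalIntegral.continuousOn_primitive_interval' hint Set.left_mem_uIcc
      rw [Set.uIcc_of_le hst.le] at hcont
      have h2 : AEStronglyMeasurable (fun u => ∫ r in s..u, iterIntAux gg Y s β r * gg r i)
          ((volume : Measure ℝ).restrict (Set.Icc s t)) :=
        hcont.aestronglyMeasurable measurableSet_Icc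
      have h3 := h2.mono_measure (Measure.restrict_mono Set.Ioc_subset_Icc_self le_rfl)
      exact h3

lemma myProdBound {d : ℕ} {τ K Cm X : ℝ} (hτ : 0 ≤ τ) (hK : 0 ≤ K) (h1 : 1 ≤ Cm)
    (hX : 0 ≤ X) (hτX : τ ≤ X) (hKX : K ≤ Cm * X ^ ((1 : ℝ) / 2)) (α : Word d) :
    (α.map (fun i => if i = 0 then τ else K)).prod ≤
      Cm ^ α.length * X ^ ((wlen α : ℝ) / 2) := by
  induction α with
  | nil => simp [wlen]
  | cons i β ih =>
    have hC0 : (0 : ℝ) ≤ Cm := zero_le_one.trans h1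
    have hXr : 0 ≤ X ^ ((wlen β : ℝ) / 2) := Real.rpow_nonneg hX _
    have hRnn : 0 ≤ Cm ^ β.length * X ^ ((wlen β : ℝ) / 2) :=
      mul_nonneg (pow_nonneg hC0 _) hXr
    have hlen : Cm ^ β.length ≤ Cm ^ (i :: β).length :=
      pow_le_pow_right₀ h1 (by simp)
    rcases eq_or_ne i 0 with h | h
    · have hw : (wlen (i :: β) : ℝ) / 2 = (wlen β : ℝ) / 2 + 1 := by
        subst h
        unfold wlen
        rw [List.length_cons, List.count_cons]
        simp only [beq_self_eq_true, if_true]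
        push_cast
        ring
      rw [List.map_cons, List.prod_cons, if_pos h, hw]
      calc τ * (β.map (fun i => if i = 0 then τ else K)).prod
          ≤ τ * (Cm ^ β.length * X ^ ((wlen β : ℝ) / 2)) :=
            mul_le_mul_of_nonneg_left ih hτ
        _ ≤ X * (Cm ^ β.length * X ^ ((wlen β : ℝ) / 2)) :=
            mul_le_mul_of_nonneg_right hτX hRnn
        _ = Cm ^ β.length * (X ^ ((wlen β : ℝ) / 2) * X ^ (1 : ℝ)) := by
            rw [Real.rpow_one]; ring
        _ ≤ Cm ^ (i :: β).length * (X ^ ((wlen β : ℝ) / 2) * X ^ (1 : ℝ)) :=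
            mul_le_mul_of_nonneg_right hlen (by positivity)
        _ = Cm ^ (i :: β).length * X ^ ((wlen β : ℝ) / 2 + 1) := by
            rw [← Real.rpow_add' hX (by positivity)]
    · have hw : (wlen (i :: β) : ℝ) / 2 = (wlen β : ℝ) / 2 + 1 / 2 := by
        unfold wlen
        rw [List.length_cons, List.count_cons]
        simp only [beq_iff_eq, if_neg h]
        push_cast
        ring
      rw [List.map_cons, List.prod_cons, if_neg h, hw]
      calc K * (β.map (fun i => if i = 0 then τ else K)).prod
          ≤ K * (Cm ^ β.length * X ^ ((wlen β : ℝ) / 2)) :=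
            mul_le_mul_of_nonneg_left ih hK
        _ ≤ (Cm * X ^ ((1 : ℝ) / 2)) * (Cm ^ β.length * X ^ ((wlen β : ℝ) / 2)) :=
            mul_le_mul_of_nonneg_right hKX hRnn
        _ = (Cm ^ β.length * Cm) * (X ^ ((wlen β : ℝ) / 2) * X ^ ((1 : ℝ) / 2)) := by
            ring
        _ ≤ Cm ^ (i :: β).length * (X ^ ((wlen β : ℝ) / 2) * X ^ ((1 : ℝ) / 2)) := by
            apply mul_le_mul_of_nonneg_right _ (by positivity)
            rw [List.length_cons, pow_succ]
        _ = Cm ^ (i :: β).length * X ^ ((wlen β : ℝ) / 2 + 1 / 2) := by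
            rw [← Real.rpow_add' hX (by positivity)]

theorem stmt17
    (T : ℝ) (hT : 0 < T) (χ : ℝ → ℝ → ℝ) (hχ : IsControl T χ)
    (d : ℕ) (hd : 1 ≤ d) (C : ℝ) (hC : 0 < C) (m : ℕ) :
    ∃ C' : ℝ, 0 < C' ∧
      ∀ s t : ℝ, 0 ≤ s → s ≤ t → t ≤ T →
        ∀ g : ℝ → Fin d → ℝ, IsDrivingDeriv χ C s t g →
          ∀ Y : Word d → ℝ → ℝ, (∀ α, Measurable (Y α)) →
            ∀ M : ℝ, 0 ≤ M →
              (∀ α : Word d, InRemainder d m α → ∀ r ∈ Set.Icc s t, |Y α r| ≤ M) →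
              (∑' α : {α : Word d // InRemainder d m α}, |iterInt g (Y α.1) s α.1 t|) ≤
                C' * M * chit χ s t ^ (((m : ℝ) + 1) / 2) := by
  classical
  -- finiteness of the index type
  have hfin : {α : Word d | InRemainder d m α}.Finite := by
    apply (List.finite_length_le (Fin (d + 1)) (m + 1)).subset
    rintro α ⟨i₀, tl, rfl, htl, -⟩
    have h1 : tl.length ≤ wlen tl := Nat.le_add_right _ _
    simp only [Set.mem_setOf_eq, List.length_cons]
    omega
  haveI hfint : Fintype {α : Word d // InRemainder d m α} := hfin.fintype
  set KT : ℝ := max 1 (chit χ 0 T) with hKT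
  set Cm : ℝ := max 1 C with hCm
  have hKT1 : (1 : ℝ) ≤ KT := le_max_left _ _
  have hCm1 : (1 : ℝ) ≤ Cm := le_max_left _ _
  have hKT0 : (0 : ℝ) < KT := lt_of_lt_of_le one_pos hKT1
  have hCm0 : (0 : ℝ) < Cm := lt_of_lt_of_le one_pos hCm1
  set D : ℝ := Cm ^ (m + 1) * KT with hD
  have hD0 : (0 : ℝ) < D := mul_pos (pow_pos hCm0 _) hKT0
  refine ⟨(Fintype.card {α : Word d // InRemainder d m α} + 1) * D, ?_, ?_⟩
  · have : (0 : ℝ) < (Fintype.card {α : Word d // InRemainder d m α} + 1 : ℝ) := by positivity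
    exact mul_pos this hD0
  intro s t hs hst htT g hg Y hYmeas M hM hYb
  have hsT : s ≤ T := hst.trans htT
  have ht0 : 0 ≤ t := hs.trans hst
  rcases hst.eq_or_lt with heq | hlt
  · -- degenerate case s = t
    subst heq
    have hdiag : χ s s = 0 := hχ.diag s hs hsT
    have hchit0 : chit χ s s = 0 := by simp [chit, hdiag]
    have hz : ∀ α : {α : Word d // InRemainder d m α},
        |iterInt g (Y α.1) s α.1 s| = 0 := by
      rintro ⟨α, i₀, tl, hcons, -, -⟩
      have hne : α.reverse ≠ [] := by simp [hcons]
      obtain ⟨j, γ, hjγ⟩ := List.exists_cons_of_ne_nil hne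
      rw [iterInt, hjγ]
      simp [iterIntAux, intervalIntegral.integral_same]
    have hfun : (fun α : {α : Word d // InRemainder d m α} =>
        |iterInt g (Y α.1) s α.1 s|) = fun _ => 0 := funext hz
    rw [hfun, tsum_zero, hchit0,
      Real.zero_rpow (by positivity : ((m : ℝ) + 1) / 2 ≠ 0), mul_zero]
  · -- main case s < t
    obtain ⟨hgmeas, hgbd⟩ := hg
    have hχnn : 0 ≤ χ s t := hχ.nonneg s t hs hlt.le htT
    have hsqnn : 0 ≤ Real.sqrt (χ s t) := Real.sqrt_nonneg _
    have htsnn : 0 ≤ t - s := by linarith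
    have hchitnn : 0 ≤ chit χ s t := by unfold chit; nlinarith
    have hτX : t - s ≤ chit χ s t := by unfold chit; nlinarith
    have hχX : χ s t ≤ chit χ s t := by unfold chit; nlinarith
    set K : ℝ := C * Real.sqrt (χ s t) with hKdef
    have hKnn : 0 ≤ K := mul_nonneg hC.le hsqnn
    -- driving derivative in cons form
    set gg : ℝ → Fin (d + 1) → ℝ := fun r => Fin.cons 1 (g r) with hgg
    have hggmeas : Measurable gg := by
      apply measurable_pi_iff.mpr
      intro i
      refine Fin.cases ?_ ?_ i
      · simpa [hgg] using measurable_const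
      · intro j
        simpa [hgg, Function.comp_def] using (measurable_pi_apply j).comp hgmeas
    have hgg0 : ∀ r, gg r 0 = 1 := fun r => by simp [hgg]
    have hrestr : (volume : Measure ℝ).restrict (Set.Ioc s t) =
        (volume : Measure ℝ).restrict (Set.Ioo s t) :=
      (Measure.restrict_congr_set Ioo_ae_eq_Ioc).symm
    have hgbd' : ∀ᵐ r ∂((volume : Measure ℝ).restrict (Set.Ioc s t)),
        ∀ i, |g r i| ≤ C * Real.sqrt (χ s t) / (t - s) := by
      rw [hrestr]; exact hgbd
    have hggb : ∀ i : Fin (d + 1), i ≠ 0 →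
        ∀ᵐ r ∂((volume : Measure ℝ).restrict (Set.Ioc s t)), |gg r i| ≤ K / (t - s) := by
      intro i hi
      obtain ⟨j, rfl⟩ := Fin.exists_succ_eq_of_ne_zero hi
      filter_upwards [hgbd'] with r hr
      simpa [hgg, hKdef] using hr j
    -- comparison of controls
    have hχT : χ s t ≤ χ 0 T := by
      have h1 := hχ.superadd 0 s t le_rfl hs hlt.le htT
      have h2 := hχ.superadd 0 t T le_rfl ht0 htT le_rfl
      have h3 := hχ.nonneg 0 s le_rfl hs hsT
      have h4 := hχ.nonneg t T ht0 htT le_rfl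
      linarith
    have hχ0T : 0 ≤ χ 0 T := hχnn.trans hχT
    have hchitKT : chit χ s t ≤ KT := by
      have hs1 : Real.sqrt (χ s t) ≤ Real.sqrt (χ 0 T) := Real.sqrt_le_sqrt hχT
      have hts : t - s ≤ T := by linarith
      have hmul : (t - s) * Real.sqrt (χ s t) ≤ T * Real.sqrt (χ 0 T) :=
        mul_le_mul hts hs1 hsqnn (by linarith)
      have : chit χ s t ≤ chit χ 0 T := by
        unfold chit
        have hT0 : (T : ℝ) - 0 = T := by ring
        nlinarith [Real.sqrt_nonneg (χ 0 T)]
      exact this.trans (le_max_right _ _)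
    have hKX : K ≤ Cm * chit χ s t ^ ((1 : ℝ) / 2) := by
      have h1 : Real.sqrt (χ s t) = χ s t ^ ((1 : ℝ) / 2) := Real.sqrt_eq_rpow _
      have h2 : χ s t ^ ((1 : ℝ) / 2) ≤ chit χ s t ^ ((1 : ℝ) / 2) :=
        Real.rpow_le_rpow hχnn hχX (by norm_num)
      calc K = C * Real.sqrt (χ s t) := hKdef
        _ ≤ Cm * (χ s t ^ ((1 : ℝ) / 2)) := by
            rw [h1] at hsqnn ⊢
            exact mul_le_mul (le_max_right 1 C) le_rfl hsqnn hCm0.le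
        _ ≤ Cm * chit χ s t ^ ((1 : ℝ) / 2) := mul_le_mul_of_nonneg_left h2 hCm0.le
    -- per-term bound
    have hterm : ∀ α : Word d, InRemainder d m α →
        |iterInt g (Y α) s α t| ≤ M * D * chit χ s t ^ (((m : ℝ) + 1) / 2) := by
      intro α hα
      obtain ⟨i₀, tl, hcons, htl, hwl⟩ := hα
      have hYbα := hYb α ⟨i₀, tl, hcons, htl, hwl⟩
      have hIter := (myIterBound hlt gg hggmeas hgg0 hKnn hggb (Y α) (hYmeas α) hM hYbα
        α.reverse).1 t (Set.right_mem_Icc.mpr hlt.le)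
      have hprod := myProdBound (d := d) htsnn hKnn hCm1 hchitnn hτX hKX α.reverse
      have hwrev : wlen α.reverse = wlen α := by
        unfold wlen
        rw [List.length_reverse, List.count_reverse]
      -- structural inequalities on lengths
      have hlentl : tl.length ≤ wlen tl := Nat.le_add_right _ _
      have hlen : α.length ≤ m + 1 := by
        rw [hcons, List.length_cons]; omega
      have hw2 : wlen α ≤ m + 2 := by
        rw [hcons]
        unfold wlen at htl ⊢
        rw [List.length_cons, List.count_cons]
        split <;> omega
      have hw1 : m < wlen α := hwl
      -- rpow comparison
      have hrpow : chit χ s t ^ ((wlen α : ℝ) / 2) ≤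
          chit χ s t ^ (((m : ℝ) + 1) / 2) * KT := by
        rcases hchitnn.eq_or_lt with h0 | hpos
        · have hwne : ((wlen α : ℝ) / 2) ≠ 0 := by
            have : 0 < wlen α := lt_of_le_of_lt (Nat.zero_le m) hw1
            have h2 : (0 : ℝ) < (wlen α : ℝ) := by exact_mod_cast this
            positivity
          rw [← h0, Real.zero_rpow hwne]
          positivity
        · have heq : (wlen α : ℝ) / 2 = ((m : ℝ) + 1) / 2 + ((wlen α : ℝ) - ((m : ℝ) + 1)) / 2 := by
            ring
          rw [heq, Real.rpow_add hpos]
          apply mul_le_mul_of_nonneg_left ?_ (Real.rpow_nonneg hchitnn _)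
          have hcast1 : (m : ℝ) + 1 ≤ (wlen α : ℝ) := by exact_mod_cast hw1
          have hcast2 : (wlen α : ℝ) ≤ (m : ℝ) + 2 := by exact_mod_cast hw2
          have he0 : 0 ≤ ((wlen α : ℝ) - ((m : ℝ) + 1)) / 2 := by linarith
          have he1 : ((wlen α : ℝ) - ((m : ℝ) + 1)) / 2 ≤ 1 := by linarith
          calc chit χ s t ^ (((wlen α : ℝ) - ((m : ℝ) + 1)) / 2)
              ≤ KT ^ (((wlen α : ℝ) - ((m : ℝ) + 1)) / 2) :=
                Real.rpow_le_rpow hchitnn hchitKT he0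
            _ ≤ KT ^ (1 : ℝ) := Real.rpow_le_rpow_of_exponent_le hKT1 he1
            _ = KT := Real.rpow_one KT
      have hIter' : |iterInt g (Y α) s α t| ≤
          M * ((α.reverse.map (fun i => if i = 0 then t - s else K)).prod) := by
        rw [iterInt, ← hgg]
        exact hIter
      calc |iterInt g (Y α) s α t|
          ≤ M * ((α.reverse.map (fun i => if i = 0 then t - s else K)).prod) := hIter'
        _ ≤ M * (Cm ^ α.reverse.length * chit χ s t ^ ((wlen α.reverse : ℝ) / 2)) :=
            mul_le_mul_of_nonneg_left hprod hM
        _ = M * (Cm ^ α.length * chit χ s t ^ ((wlen α : ℝ) / 2)) := by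
            rw [List.length_reverse, hwrev]
        _ ≤ M * (Cm ^ (m + 1) * (chit χ s t ^ (((m : ℝ) + 1) / 2) * KT)) := by
            apply mul_le_mul_of_nonneg_left ?_ hM
            exact mul_le_mul (pow_le_pow_right₀ hCm1 hlen) hrpow
              (Real.rpow_nonneg hchitnn _) (by positivity)
        _ = M * D * chit χ s t ^ (((m : ℝ) + 1) / 2) := by
            rw [hD]; ring
    -- sum up
    set B : ℝ := M * D * chit χ s t ^ (((m : ℝ) + 1) / 2) with hB
    have hBnn : 0 ≤ B := by
      have := Real.rpow_nonneg hchitnn (((m : ℝ) + 1) / 2)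
      exact mul_nonneg (mul_nonneg hM hD0.le) this
    rw [tsum_fintype]
    have hcard := Finset.sum_le_card_nsmul Finset.univ
      (fun α : {α : Word d // InRemainder d m α} => |iterInt g (Y α.1) s α.1 t|) B
      (fun α _ => hterm α.1 α.2)
    have hcard' : (∑ α : {α : Word d // InRemainder d m α}, |iterInt g (Y α.1) s α.1 t|) ≤
        (Fintype.card {α : Word d // InRemainder d m α} : ℝ) * B := by
      simpa [Finset.card_univ, nsmul_eq_mul] using hcard
    refine hcard'.trans ?_
    have hle : (Fintype.card {α : Word d // InRemainder d m α} : ℝ) ≤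
        (Fintype.card {α : Word d // InRemainder d m α} : ℝ) + 1 := by linarith
    calc (Fintype.card {α : Word d // InRemainder d m α} : ℝ) * B
        ≤ ((Fintype.card {α : Word d // InRemainder d m α} : ℝ) + 1) * B :=
          mul_le_mul_of_nonneg_right hle hBnn
      _ = (↑(Fintype.card {α : Word d // InRemainder d m α}) + 1) * D * M *
            chit χ s t ^ (((m : ℝ) + 1) / 2) := by rw [hB]; ring
end
end

section
/- Let (s,t) ∈ Δ_T, let ω be a driving path on [s,t] with constant C, let X be a solution of the driven ODE started at x ∈ ℝ^d, and let f ∈ C_b^∞(ℝ^d,ℝ). Then for every m ∈ ℕ the Taylor expansion f(X_t) = Σ_{α ∈ A_m} V_α f(x) · I^α_{s,t}[ω] + Σ_{α} I^α_{s,t}[ω](V_α f(X_·)) holds, where the second sum is over all words α = (i₀,i₁,…,i_k) with letters in {0,1,…,d} such that (i₁,…,i_k) ∈ A_m but α ∉ A_m, and V_α f(X_·) denotes the function r ↦ V_α f(X_r) on [s,t]. -/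
open MeasureTheory Filter
open Set Topology

noncomputable section

section AuxCb
variable {E : Type*} [NormedAddCommGroup E] [NormedSpace ℝ E]


lemma CbSmooth.bound {F : Type*} [NormedAddCommGroup F] [NormedSpace ℝ F]
    {f : E → F} (hf : CbSmooth f) (n : ℕ) :
    ∃ M : ℝ, 0 ≤ M ∧ ∀ x, ‖iteratedFDeriv ℝ n f x‖ ≤ M := by
  obtain ⟨M, hM⟩ := hf.2 n
  exact ⟨max M 0, le_max_right _ _, fun x => (hM x).trans (le_max_left _ _)⟩

lemma CbSmooth.bound0 {F : Type*} [NormedAddCommGroup F] [NormedSpace ℝ F]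
    {f : E → F} (hf : CbSmooth f) :
    ∃ M : ℝ, 0 ≤ M ∧ ∀ x, ‖f x‖ ≤ M := by
  obtain ⟨M, hM0, hM⟩ := hf.bound 0
  exact ⟨M, hM0, fun x => by simpa [norm_iteratedFDeriv_zero] using hM x⟩

lemma CbSmooth.bound1 {f : E → ℝ} (hf : CbSmooth f) :
    ∃ M : ℝ, 0 ≤ M ∧ ∀ x, ‖fderiv ℝ f x‖ ≤ M := by
  obtain ⟨M, hM0, hM⟩ := hf.bound 1
  refine ⟨M, hM0, fun x => ?_⟩
  have h1 : ‖iteratedFDeriv ℝ 0 (fderiv ℝ f) x‖ = ‖iteratedFDeriv ℝ 1 f x‖ :=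
    norm_iteratedFDeriv_fderiv
  rw [norm_iteratedFDeriv_zero] at h1
  rw [h1]; exact hM x

lemma CbSmooth.fderiv_apply {h : E → ℝ} {W : E → E} (hh : CbSmooth h) (hW : CbSmooth W) :
    CbSmooth (fun x => fderiv ℝ h x (W x)) := by
  have hsm : ContDiff ℝ (⊤ : ℕ∞) (fderiv ℝ h) := hh.1.fderiv_right (by simp)
  constructor
  · exact hsm.clm_apply hW.1
  · intro n
    choose Mh hMh0 hMh using fun k => hh.bound k
    choose MW hMW0 hMW using fun k => hW.bound k
    letI : NormedAddCommGroup ((E →L[ℝ] ℝ) →L[ℝ] ℝ) := inferInstance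
    letI : NormedSpace ℝ ((E →L[ℝ] ℝ) →L[ℝ] ℝ) := inferInstance
    have hBle : ‖(ContinuousLinearMap.apply ℝ ℝ : E →L[ℝ] (E →L[ℝ] ℝ) →L[ℝ] ℝ)‖ ≤ 1 := by
      refine ContinuousLinearMap.opNorm_le_bound _ zero_le_one fun v => ?_
      rw [one_mul]
      refine ContinuousLinearMap.opNorm_le_bound _ (norm_nonneg v) fun L => ?_
      simpa [ContinuousLinearMap.apply_apply, mul_comm] using L.le_opNorm v
    refine ⟨∑ i ∈ Finset.range (n + 1), (n.choose i : ℝ) * MW i * Mh (n - i + 1), fun x => ?_⟩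
    have key := (ContinuousLinearMap.apply ℝ ℝ : E →L[ℝ] (E →L[ℝ] ℝ) →L[ℝ] ℝ).norm_iteratedFDeriv_le_of_bilinear_of_le_one hW.1 hsm x
      (n := n) (by exact_mod_cast (le_top : (n : ℕ∞) ≤ ⊤)) hBle
    refine key.trans (Finset.sum_le_sum fun i hi => ?_)
    have h1 : ‖iteratedFDeriv ℝ (n - i) (fderiv ℝ h) x‖ = ‖iteratedFDeriv ℝ (n - i + 1) h x‖ :=
      norm_iteratedFDeriv_fderiv
    rw [h1]
    have := mul_le_mul (hMW i x) (hMh (n - i + 1) x) (norm_nonneg _) (hMW0 i)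
    calc (n.choose i : ℝ) * ‖iteratedFDeriv ℝ i W x‖ * ‖iteratedFDeriv ℝ (n - i + 1) h x‖
        = (n.choose i : ℝ) * (‖iteratedFDeriv ℝ i W x‖ * ‖iteratedFDeriv ℝ (n - i + 1) h x‖) := by
          ring
      _ ≤ (n.choose i : ℝ) * (MW i * Mh (n - i + 1)) := by
          exact mul_le_mul_of_nonneg_left this (by positivity)
      _ = (n.choose i : ℝ) * MW i * Mh (n - i + 1) := by ring

end AuxCb

section AuxWord
variable {d : ℕ}

lemma cbSmooth_vWord (V : Fin (d + 1) → Ed d → Ed d) (hV : ∀ i, CbSmooth (V i))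
    (f : Ed d → ℝ) (hf : CbSmooth f) : ∀ α : Word d, CbSmooth (vWord V α f)
  | [] => hf
  | i :: α => (cbSmooth_vWord V hV f hf α).fderiv_apply (hV i)

lemma vWord_cons (V : Fin (d + 1) → Ed d → Ed d) (f : Ed d → ℝ) (i : Fin (d + 1))
    (α : Word d) : vWord V [i] (vWord V α f) = vWord V (i :: α) f := rfl

lemma length_le_wlen (α : Word d) : α.length ≤ wlen α := Nat.le_add_right _ _

lemma wlen_cons (i : Fin (d + 1)) (α : Word d) :
    wlen (i :: α) = wlen α + (if i = 0 then 2 else 1) := by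
  rcases eq_or_ne i 0 with h | h <;> simp [wlen, List.count_cons, h] <;> omega

lemma wlen_nil : wlen ([] : Word d) = 0 := rfl

lemma wlen_eq_zero {α : Word d} : wlen α = 0 ↔ α = [] := by
  cases α with
  | nil => simp [wlen]
  | cons i α =>
    rw [wlen_cons]
    rcases eq_or_ne i 0 with hi | hi <;> simp [hi, Nat.add_eq_zero]

lemma wlen_lt_wlen_cons (i : Fin (d + 1)) (α : Word d) : wlen α < wlen (i :: α) := by
  rw [wlen_cons]; split <;> omega

lemma wlen_cons_le (i : Fin (d + 1)) (α : Word d) : wlen (i :: α) ≤ wlen α + 2 := by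
  rw [wlen_cons]; split <;> omega

/-- All words of length at most `n`. -/
def wordsLe (d : ℕ) : ℕ → Finset (Word d)
  | 0 => {[]}
  | n + 1 => {[]} ∪ (Finset.univ ×ˢ wordsLe d n).image fun p => p.1 :: p.2

lemma mem_wordsLe {n : ℕ} {α : Word d} : α ∈ wordsLe d n ↔ α.length ≤ n := by
  induction n generalizing α with
  | zero => cases α <;> simp [wordsLe]
  | succ n ih =>
    cases α with
    | nil => simp [wordsLe]
    | cons i β =>
      simp only [wordsLe, Finset.mem_union, Finset.mem_singleton, Finset.mem_image,
        Finset.mem_product, Finset.mem_univ, true_and, List.length_cons]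
      constructor
      · rintro (h | ⟨⟨j, γ⟩, hγ, h⟩)
        · exact absurd h (by simp)
        · obtain ⟨rfl, rfl⟩ := List.cons_eq_cons.mp h
          have := ih.mp hγ; omega
      · intro h
        exact Or.inr ⟨(i, β), ih.mpr (by simp only; omega), rfl⟩

end AuxWord

section AuxInt
variable {d : ℕ} {s t : ℝ} {g : ℝ → Fin d → ℝ} {K : ℝ}

/-- The extended derivative family, `GG g r 0 = 1`, `GG g r i.succ = g r i`. -/
def GG (g : ℝ → Fin d → ℝ) : ℝ → Fin (d + 1) → ℝ := fun r => Fin.cons 1 (g r)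

lemma iterInt_eq_aux (Y : ℝ → ℝ) (α : Word d) (u : ℝ) :
    iterInt g Y s α u = iterIntAux (GG g) Y s α.reverse u := rfl

lemma measurable_GG (hgm : Measurable g) (j : Fin (d + 1)) :
    Measurable fun r => GG g r j := by
  induction j using Fin.cases with
  | zero => simpa [GG] using measurable_const
  | succ i => simpa [GG] using (show Measurable fun r => g r i from (measurable_pi_apply i).comp hgm)

lemma abs_GG_le (hgK : ∀ᵐ r ∂(volume.restrict (Set.Ioo s t)), ∀ i, |g r i| ≤ K) :
    ∀ᵐ r ∂(volume.restrict (Set.Ioo s t)), ∀ j, |GG g r j| ≤ max K 1 := by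
  filter_upwards [hgK] with r hr j
  induction j using Fin.cases with
  | zero => simpa [GG] using le_max_right K 1
  | succ i => simpa [GG] using (hr i).trans (le_max_left K 1)

lemma integrableOn_mul_GG (hst : s ≤ t) (hgm : Measurable g)
    (hgK : ∀ᵐ r ∂(volume.restrict (Set.Ioo s t)), ∀ i, |g r i| ≤ K)
    {F : ℝ → ℝ} (hF : ContinuousOn F (Set.Icc s t)) (j : Fin (d + 1)) :
    IntegrableOn (fun r => F r * GG g r j) (Set.Icc s t) := by
  obtain ⟨CF, hCF⟩ := (isCompact_Icc (a := s) (b := t)).exists_bound_of_continuousOn hF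
  have hmeas : AEStronglyMeasurable (fun r => F r * GG g r j)
      (volume.restrict (Set.Icc s t)) := by
    exact ((hF.aemeasurable measurableSet_Icc).mul
      ((measurable_GG hgm j).aemeasurable)).aestronglyMeasurable
  have hres : volume.restrict (Set.Ioo s t) = volume.restrict (Set.Icc s t) :=
    Measure.restrict_congr_set Ioo_ae_eq_Icc
  have hbound : ∀ᵐ r ∂(volume.restrict (Set.Icc s t)),
      ‖F r * GG g r j‖ ≤ CF * max K 1 := by
    rw [← hres]
    filter_upwards [abs_GG_le hgK, (ae_restrict_mem measurableSet_Ioo :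
      ∀ᵐ r ∂(volume.restrict (Set.Ioo s t)), r ∈ Set.Ioo s t)] with r hr hrs
    have h1 : |F r| ≤ CF := by simpa using hCF r (Set.Ioo_subset_Icc_self hrs)
    have h2 : |GG g r j| ≤ max K 1 := hr j
    calc ‖F r * GG g r j‖ = |F r| * |GG g r j| := abs_mul _ _
      _ ≤ CF * max K 1 := by
          apply mul_le_mul h1 h2 (abs_nonneg _) ((abs_nonneg _).trans h1)
  exact Integrable.mono'
    (integrableOn_const measure_Icc_lt_top.ne) hmeas hbound

lemma intervalIntegrable_mul_GG (hst : s ≤ t) (hgm : Measurable g)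
    (hgK : ∀ᵐ r ∂(volume.restrict (Set.Ioo s t)), ∀ i, |g r i| ≤ K)
    {F : ℝ → ℝ} (hF : ContinuousOn F (Set.Icc s t)) (j : Fin (d + 1))
    {u : ℝ} (hu : u ∈ Set.Icc s t) :
    IntervalIntegrable (fun r => F r * GG g r j) volume s u := by
  apply IntegrableOn.intervalIntegrable
  apply (integrableOn_mul_GG hst hgm hgK hF j).mono_set
  rw [Set.uIcc_of_le hu.1]
  exact Set.Icc_subset_Icc le_rfl hu.2

lemma contOn_iterIntAux (hst : s ≤ t) (hgm : Measurable g)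
    (hgK : ∀ᵐ r ∂(volume.restrict (Set.Ioo s t)), ∀ i, |g r i| ≤ K)
    {Y : ℝ → ℝ} (hY : ContinuousOn Y (Set.Icc s t)) :
    ∀ w : Word d, ContinuousOn (iterIntAux (GG g) Y s w) (Set.Icc s t)
  | [] => hY
  | j :: w => by
    have h1 := contOn_iterIntAux hst hgm hgK hY w
    have h2 : IntegrableOn (fun r => iterIntAux (GG g) Y s w r * GG g r j)
        (Set.uIcc s t) := by
      rw [Set.uIcc_of_le hst]; exact integrableOn_mul_GG hst hgm hgK h1 j
    have := intervalIntegral.continuousOn_primitive_interval h2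
    rw [Set.uIcc_of_le hst] at this
    exact this

end AuxInt

section AuxExp
variable {d : ℕ} {s t : ℝ} {g : ℝ → Fin d → ℝ} {K : ℝ}

lemma iterIntAux_expand (hst : s ≤ t) (hgm : Measurable g)
    (hgK : ∀ᵐ r ∂(volume.restrict (Set.Ioo s t)), ∀ i, |g r i| ≤ K)
    {Y : ℝ → ℝ} {c : ℝ} {Z : Fin (d + 1) → ℝ → ℝ}
    (hZ : ∀ i, ContinuousOn (Z i) (Set.Icc s t))
    (hYeq : ∀ u ∈ Set.Icc s t, Y u = c + ∑ i, ∫ r in s..u, Z i r * GG g r i) :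
    ∀ (w : Word d), ∀ u ∈ Set.Icc s t,
      iterIntAux (GG g) Y s w u =
        c * iterIntAux (GG g) (fun _ => 1) s w u
          + ∑ i, iterIntAux (GG g) (Z i) s (w ++ [i]) u
  | [], u, hu => by
    simpa [iterIntAux] using hYeq u hu
  | j :: w, u, hu => by
    have IH := iterIntAux_expand hst hgm hgK hZ hYeq w
    have hA : ContinuousOn (iterIntAux (GG g) (fun _ => 1) s w) (Set.Icc s t) :=
      contOn_iterIntAux hst hgm hgK continuousOn_const w
    have hB : ∀ i : Fin (d + 1),
        ContinuousOn (iterIntAux (GG g) (Z i) s (w ++ [i])) (Set.Icc s t) :=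
      fun i => contOn_iterIntAux hst hgm hgK (hZ i) (w ++ [i])
    have hIntA : IntervalIntegrable
        (fun r => iterIntAux (GG g) (fun _ => 1) s w r * GG g r j) volume s u :=
      intervalIntegrable_mul_GG hst hgm hgK hA j hu
    have hIntB : ∀ i, IntervalIntegrable
        (fun r => iterIntAux (GG g) (Z i) s (w ++ [i]) r * GG g r j) volume s u :=
      fun i => intervalIntegrable_mul_GG hst hgm hgK (hB i) j hu
    have hcong : ∫ r in s..u, iterIntAux (GG g) Y s w r * GG g r j
        = ∫ r in s..u, (c * (iterIntAux (GG g) (fun _ => 1) s w r * GG g r j)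
            + ∑ i, iterIntAux (GG g) (Z i) s (w ++ [i]) r * GG g r j) := by
      apply intervalIntegral.integral_congr
      intro r hr
      rw [Set.uIcc_of_le hu.1] at hr
      have hr' : r ∈ Set.Icc s t := ⟨hr.1, hr.2.trans hu.2⟩
      show iterIntAux (GG g) Y s w r * GG g r j
          = c * (iterIntAux (GG g) (fun _ => 1) s w r * GG g r j)
            + ∑ i, iterIntAux (GG g) (Z i) s (w ++ [i]) r * GG g r j
      rw [IH r hr', add_mul, Finset.sum_mul]
      ring
    have hsum : IntervalIntegrable
        (fun r => ∑ i, iterIntAux (GG g) (Z i) s (w ++ [i]) r * GG g r j) volume s u := by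
      rw [← Finset.sum_fn]
      exact IntervalIntegrable.sum Finset.univ (fun i _ => hIntB i)
    show (∫ r in s..u, iterIntAux (GG g) Y s w r * GG g r j) = _
    rw [hcong, intervalIntegral.integral_add ((hIntA.const_mul c)) hsum,
      intervalIntegral.integral_const_mul,
      intervalIntegral.integral_finset_sum (fun i _ => hIntB i)]
    rfl

lemma iterInt_expand (hst : s ≤ t) (hgm : Measurable g)
    (hgK : ∀ᵐ r ∂(volume.restrict (Set.Ioo s t)), ∀ i, |g r i| ≤ K)
    {Y : ℝ → ℝ} {c : ℝ} {Z : Fin (d + 1) → ℝ → ℝ}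
    (hZ : ∀ i, ContinuousOn (Z i) (Set.Icc s t))
    (hYeq : ∀ u ∈ Set.Icc s t, Y u = c + ∑ i, ∫ r in s..u, Z i r * GG g r i)
    (α : Word d) :
    iterInt g Y s α t =
      c * iterInt g (fun _ => 1) s α t + ∑ i, iterInt g (Z i) s (i :: α) t := by
  have h := iterIntAux_expand hst hgm hgK hZ hYeq α.reverse t ⟨hst, le_rfl⟩
  rw [iterInt_eq_aux, h]
  congr 1
  apply Finset.sum_congr rfl
  intro i _
  rw [iterInt_eq_aux, List.reverse_cons]

end AuxExp

section AuxCR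
variable {d : ℕ} {s t : ℝ} {g : ℝ → Fin d → ℝ} {K : ℝ}

lemma chain_rule (hst : s ≤ t) (hgm : Measurable g) (hK : 0 ≤ K)
    (hgK : ∀ᵐ r ∂(volume.restrict (Set.Ioo s t)), ∀ i, |g r i| ≤ K)
    {V : Fin (d + 1) → Ed d → Ed d} (hV : ∀ i, CbSmooth (V i))
    {x : Ed d} {X : ℝ → Ed d} (hX : IsSolution V g s t x X)
    {h : Ed d → ℝ} (hh : CbSmooth h) :
    ∀ u ∈ Set.Icc s t,
      h (X u) = h x + ∑ i : Fin (d + 1), ∫ r in s..u, vWord V [i] h (X r) * GG g r i := by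
  classical
  intro u hu
  obtain ⟨M1, hM10, hM1⟩ := hh.bound1
  have hXc : ContinuousOn X (Set.Icc s t) := hX.1
  have hXm : AEStronglyMeasurable X (volume.restrict (Set.Icc s t)) :=
    hXc.aestronglyMeasurable measurableSet_Icc
  set Φ₀ : ℝ → Ed d := fun r => V 0 (X r) + ∑ i : Fin d, g r i • V i.succ (X r) with hΦ₀
  set Φ : ℝ → Ed d := Set.indicator (Set.Icc s t) Φ₀ with hΦdef
  have hΦ₀m : AEStronglyMeasurable Φ₀ (volume.restrict (Set.Icc s t)) := by
    refine AEStronglyMeasurable.add ?_ ?_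
    · exact (hV 0).1.continuous.comp_aestronglyMeasurable hXm
    · refine Finset.aestronglyMeasurable_fun_sum _ fun i _ => ?_
      exact ((measurable_pi_apply i).comp hgm).aestronglyMeasurable.smul
        ((hV i.succ).1.continuous.comp_aestronglyMeasurable hXm)
  choose MV hMV0 hMV using fun i => (hV i).bound0
  have hres : volume.restrict (Set.Ioo s t) = volume.restrict (Set.Icc s t) :=
    Measure.restrict_congr_set Ioo_ae_eq_Icc
  have hbΦ : ∀ᵐ r ∂(volume.restrict (Set.Icc s t)),
      ‖Φ₀ r‖ ≤ MV 0 + ∑ i : Fin d, K * MV i.succ := by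
    rw [← hres]
    filter_upwards [hgK] with r hr
    refine (norm_add_le _ _).trans (add_le_add (hMV 0 _) ?_)
    refine (norm_sum_le _ _).trans (Finset.sum_le_sum fun i _ => ?_)
    rw [norm_smul, Real.norm_eq_abs]
    exact mul_le_mul (hr i) (hMV i.succ _) (norm_nonneg _) hK
  have hΦ₀int : IntegrableOn Φ₀ (Set.Icc s t) :=
    Integrable.mono' (integrableOn_const measure_Icc_lt_top.ne) hΦ₀m hbΦ
  have hΦint : Integrable Φ volume := hΦ₀int.integrable_indicator measurableSet_Icc
  have hXeq : ∀ v ∈ Set.Icc s t, X v = x + ∫ r in s..v, Φ r := by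
    intro v hv
    rw [hX.2 v hv]
    have hcg : ∀ r ∈ Set.uIcc s v, Φ r
        = V 0 (X r) + ∑ i : Fin d, g r i • V i.succ (X r) := by
      intro r hr
      rw [Set.uIcc_of_le hv.1] at hr
      exact Set.indicator_of_mem (show r ∈ Set.Icc s t from ⟨hr.1, hr.2.trans hv.2⟩) Φ₀
    rw [intervalIntegral.integral_congr hcg]
  have happ : ∀ n : ℕ, ∃ ψ : ℝ → Ed d, Continuous ψ ∧ Integrable ψ volume ∧
      (∫ r, ‖Φ r - ψ r‖) ≤ (1 : ℝ) / (n + 1) := by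
    intro n
    obtain ⟨ψ, -, hint, hcont, hintg⟩ :=
      hΦint.exists_hasCompactSupport_integral_sub_le
        (by positivity : (0 : ℝ) < 1 / (n + 1))
    exact ⟨ψ, hcont, hintg, hint⟩
  choose ψ hψc hψint hψL1 using happ
  set Xn : ℕ → ℝ → Ed d := fun n v => x + ∫ r in s..v, ψ n r with hXndef
  have hL1 : ∀ (n : ℕ) (v : ℝ), v ∈ Set.Icc s t → ‖Xn n v - X v‖ ≤ 1 / (n + 1) := by
    intro n v hv
    have hsub : Xn n v - X v = ∫ r in s..v, (ψ n r - Φ r) := by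
      rw [hXeq v hv]
      simp only [hXndef, add_sub_add_left_eq_sub]
      rw [intervalIntegral.integral_sub ((hψint n).intervalIntegrable)
        (hΦint.intervalIntegrable)]
    rw [hsub]
    refine (intervalIntegral.norm_integral_le_integral_norm hv.1).trans ?_
    rw [intervalIntegral.integral_of_le hv.1]
    refine (setIntegral_le_integral ((hψint n).sub hΦint).norm
      (Filter.Eventually.of_forall fun r => norm_nonneg _)).trans ?_
    simp only [Pi.sub_apply]
    have h3 : (∫ r, ‖ψ n r - Φ r‖) = ∫ r, ‖Φ r - ψ n r‖ := by
      congr 1; funext r; rw [norm_sub_rev]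
    rw [h3]; exact hψL1 n
  have hXnX : ∀ v ∈ Set.Icc s t, Tendsto (fun n => Xn n v) atTop (𝓝 (X v)) := by
    intro v hv
    rw [tendsto_iff_norm_sub_tendsto_zero]
    exact squeeze_zero (fun n => norm_nonneg _) (fun n => hL1 n v hv)
      tendsto_one_div_add_atTop_nhds_zero_nat
  have hXnd : ∀ n v, HasDerivAt (Xn n) (ψ n v) v := by
    intro n v
    exact (intervalIntegral.integral_hasDerivAt_right ((hψint n).intervalIntegrable)
      ((hψc n).stronglyMeasurable.stronglyMeasurableAtFilter)
      (hψc n).continuousAt).const_add x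
  have hXnc : ∀ n, Continuous (Xn n) := fun n =>
    continuous_iff_continuousAt.mpr fun v => (hXnd n v).continuousAt
  have hdh : Continuous (fderiv ℝ h) := hh.1.continuous_fderiv (by simp)
  have hhdiff : Differentiable ℝ h := hh.1.differentiable (by simp)
  have hFTC : ∀ n, (∫ r in s..u, fderiv ℝ h (Xn n r) (ψ n r)) = h (Xn n u) - h x := by
    intro n
    have hXns : Xn n s = x := by simp [hXndef]
    rw [← hXns]
    refine intervalIntegral.integral_eq_sub_of_hasDerivAt
      (f := fun v => h (Xn n v)) (f' := fun r => fderiv ℝ h (Xn n r) (ψ n r))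
      (fun r _ => ?_) ?_
    · exact (hhdiff (Xn n r)).hasFDerivAt.comp_hasDerivAt r (hXnd n r)
    · exact ((hdh.comp (hXnc n)).clm_apply (hψc n)).intervalIntegrable s u
  set q : ℝ → ℝ := fun r => fderiv ℝ h (X r) (Φ r) with hq
  have hmeasA : ∀ (n : ℕ) (S : Set ℝ), AEStronglyMeasurable
      (fun r => fderiv ℝ h (Xn n r) (Φ r)) (volume.restrict S) := by
    intro n S
    exact isBoundedBilinearMap_apply.continuous.comp_aestronglyMeasurable
      (((hdh.comp (hXnc n)).aestronglyMeasurable.restrict).prodMk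
        hΦint.aestronglyMeasurable.restrict)
  have hptbd : ∀ (n : ℕ) (r : ℝ), ‖fderiv ℝ h (Xn n r) (Φ r)‖ ≤ M1 * ‖Φ r‖ :=
    fun n r => ((fderiv ℝ h (Xn n r)).le_opNorm _).trans
      (mul_le_mul_of_nonneg_right (hM1 _) (norm_nonneg _))
  have hsu : Set.uIoc s u ⊆ Set.Icc s t := by
    rw [Set.uIoc_of_le hu.1]
    exact Set.Ioc_subset_Icc_self.trans (Set.Icc_subset_Icc le_rfl hu.2)
  have htendA : Tendsto (fun n => ∫ r in s..u, fderiv ℝ h (Xn n r) (Φ r)) atTop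
      (𝓝 (∫ r in s..u, q r)) := by
    refine intervalIntegral.tendsto_integral_filter_of_dominated_convergence
      (fun r => M1 * ‖Φ r‖) (Filter.Eventually.of_forall fun n => hmeasA n _)
      (Filter.Eventually.of_forall fun n =>
        Filter.Eventually.of_forall fun r _ => hptbd n r)
      ((hΦint.norm.const_mul M1).intervalIntegrable) ?_
    refine Filter.Eventually.of_forall fun r hr => ?_
    have hr' : r ∈ Set.Icc s t := hsu hr
    have h1 := (hdh.tendsto (X r)).comp (hXnX r hr')
    have h2 := ((ContinuousLinearMap.apply ℝ ℝ (Φ r)).continuous.tendsto _).comp h1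
    exact h2
  have hAint : ∀ n, IntervalIntegrable (fun r => fderiv ℝ h (Xn n r) (Φ r)) volume s u := by
    intro n
    rw [intervalIntegrable_iff]
    exact Integrable.mono' ((hΦint.norm.const_mul M1).integrableOn) (hmeasA n _)
      (Filter.Eventually.of_forall fun r => hptbd n r)
  have hCint : ∀ n, IntervalIntegrable (fun r => fderiv ℝ h (Xn n r) (ψ n r)) volume s u :=
    fun n => ((hdh.comp (hXnc n)).clm_apply (hψc n)).intervalIntegrable s u
  have hBint : ∀ n, IntervalIntegrable
      (fun r => fderiv ℝ h (Xn n r) (ψ n r - Φ r)) volume s u := by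
    intro n
    have heq : (fun r => fderiv ℝ h (Xn n r) (ψ n r - Φ r))
        = fun r => fderiv ℝ h (Xn n r) (ψ n r) - fderiv ℝ h (Xn n r) (Φ r) := by
      funext r; rw [map_sub]
    rw [heq]; exact (hCint n).sub (hAint n)
  have hBbd : ∀ n, ‖∫ r in s..u, fderiv ℝ h (Xn n r) (ψ n r - Φ r)‖ ≤ M1 * (1 / (n + 1)) := by
    intro n
    refine (intervalIntegral.norm_integral_le_integral_norm hu.1).trans ?_
    have hstep : (∫ r in s..u, ‖fderiv ℝ h (Xn n r) (ψ n r - Φ r)‖)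
        ≤ ∫ r in s..u, M1 * ‖ψ n r - Φ r‖ := by
      refine intervalIntegral.integral_mono_on hu.1 (hBint n).norm
        ((((hψint n).sub hΦint).norm.const_mul M1).intervalIntegrable) fun r _ => ?_
      exact ((fderiv ℝ h (Xn n r)).le_opNorm _).trans
        (mul_le_mul_of_nonneg_right (hM1 _) (norm_nonneg _))
    refine hstep.trans ?_
    rw [intervalIntegral.integral_const_mul]
    refine mul_le_mul_of_nonneg_left ?_ hM10
    rw [intervalIntegral.integral_of_le hu.1]
    refine (setIntegral_le_integral ((hψint n).sub hΦint).norm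
      (Filter.Eventually.of_forall fun r => norm_nonneg _)).trans ?_
    simp only [Pi.sub_apply]
    have h3 : (∫ r, ‖ψ n r - Φ r‖) = ∫ r, ‖Φ r - ψ n r‖ := by
      congr 1; funext r; rw [norm_sub_rev]
    rw [h3]; exact hψL1 n
  have hB0 : Tendsto (fun n => ∫ r in s..u, fderiv ℝ h (Xn n r) (ψ n r - Φ r)) atTop
      (𝓝 0) := by
    refine squeeze_zero_norm hBbd ?_
    have h4 := tendsto_one_div_add_atTop_nhds_zero_nat.const_mul M1
    simpa using h4
  have hsplit : ∀ n, (∫ r in s..u, fderiv ℝ h (Xn n r) (ψ n r))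
      = (∫ r in s..u, fderiv ℝ h (Xn n r) (Φ r))
        + ∫ r in s..u, fderiv ℝ h (Xn n r) (ψ n r - Φ r) := by
    intro n
    rw [← intervalIntegral.integral_add (hAint n) (hBint n)]
    refine intervalIntegral.integral_congr fun r _ => ?_
    show fderiv ℝ h (Xn n r) (ψ n r) = _
    rw [← map_add]; congr 1; abel
  have hlimI : Tendsto (fun n => ∫ r in s..u, fderiv ℝ h (Xn n r) (ψ n r)) atTop
      (𝓝 (∫ r in s..u, q r)) := by
    have h5 := htendA.add hB0
    rw [add_zero] at h5
    exact h5.congr fun n => (hsplit n).symm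
  have hlimH : Tendsto (fun n => h (Xn n u) - h x) atTop (𝓝 (h (X u) - h x)) :=
    ((hh.1.continuous.tendsto _).comp (hXnX u hu)).sub tendsto_const_nhds
  have hkey : h (X u) - h x = ∫ r in s..u, q r :=
    tendsto_nhds_unique (hlimH.congr fun n => (hFTC n).symm) hlimI
  have hfin : (∫ r in s..u, q r)
      = ∑ i : Fin (d + 1), ∫ r in s..u, vWord V [i] h (X r) * GG g r i := by
    have hint : ∀ i : Fin (d + 1), IntervalIntegrable
        (fun r => vWord V [i] h (X r) * GG g r i) volume s u :=
      fun i => intervalIntegrable_mul_GG hst hgm hgK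
        ((cbSmooth_vWord V hV h hh [i]).1.continuous.comp_continuousOn hXc) i hu
    rw [← intervalIntegral.integral_finset_sum (fun i _ => hint i)]
    refine intervalIntegral.integral_congr fun r hr => ?_
    rw [Set.uIcc_of_le hu.1] at hr
    have hr' : r ∈ Set.Icc s t := ⟨hr.1, hr.2.trans hu.2⟩
    show fderiv ℝ h (X r) (Φ r) = ∑ i : Fin (d + 1), vWord V [i] h (X r) * GG g r i
    rw [hΦdef, Set.indicator_of_mem hr']
    have h0 : ∀ y : Ed d, ∀ i : Fin (d + 1), vWord V [i] h y = fderiv ℝ h y (V i y) :=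
      fun y i => rfl
    rw [Fin.sum_univ_succ, hΦ₀]
    simp only [map_add, map_sum, _root_.map_smul, smul_eq_mul, GG, Fin.cons_zero,
      Fin.cons_succ, h0, mul_one]
    congr 1
    exact Finset.sum_congr rfl fun i _ => mul_comm _ _
  have := hkey
  rw [hfin] at this
  linarith [this]

end AuxCR

section AuxMain
open Classical in
/-- Words in `A_m`. -/
noncomputable def AmSet (d m : ℕ) : Finset (Word d) :=
  (wordsLe d m).filter (fun α => wlen α ≤ m)

open Classical in
/-- Words in the remainder index set. -/
noncomputable def RmSet (d m : ℕ) : Finset (Word d) :=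
  (wordsLe d (m + 1)).filter (InRemainder d m)

lemma mem_AmSet {d m : ℕ} {α : Word d} : α ∈ AmSet d m ↔ wlen α ≤ m := by
  simp only [AmSet, Finset.mem_filter, mem_wordsLe]
  exact ⟨fun h => h.2, fun h => ⟨(length_le_wlen α).trans h, h⟩⟩

lemma InRemainder.length_le {d m : ℕ} {α : Word d} (h : InRemainder d m α) :
    α.length ≤ m + 1 := by
  obtain ⟨i₀, tl, rfl, h1, h2⟩ := h
  have := length_le_wlen tl
  simp only [List.length_cons]
  omega

lemma mem_RmSet {d m : ℕ} {α : Word d} : α ∈ RmSet d m ↔ InRemainder d m α := by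
  simp only [RmSet, Finset.mem_filter, mem_wordsLe]
  exact ⟨fun h => h.2, fun h => ⟨h.length_le, h⟩⟩

lemma exists_cons_of_ne_nil {d : ℕ} {α : Word d} (h : α ≠ []) :
    ∃ i tl, α = i :: tl := by
  cases α with
  | nil => exact absurd rfl h
  | cons a l => exact ⟨a, l, rfl⟩

open Classical in
lemma AmSet_succ (d m : ℕ) :
    AmSet d (m + 1) = AmSet d m ∪ (RmSet d m).filter (fun α => wlen α ≤ m + 1) := by
  ext α
  simp only [Finset.mem_union, Finset.mem_filter, mem_AmSet, mem_RmSet]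
  constructor
  · intro h
    by_cases hm : wlen α ≤ m
    · exact Or.inl hm
    · right
      refine ⟨?_, h⟩
      have hα : α ≠ [] := fun e => hm (by simp [e, wlen_nil])
      obtain ⟨i₀, tl, rfl⟩ := exists_cons_of_ne_nil hα
      have := wlen_lt_wlen_cons i₀ tl
      exact ⟨i₀, tl, rfl, by omega, by omega⟩
  · rintro (h | ⟨⟨i₀, tl, rfl, h1, h2⟩, h3⟩)
    · omega
    · exact h3

open Classical in
lemma disjoint_AmSet (d m : ℕ) :
    Disjoint (AmSet d m) ((RmSet d m).filter (fun α => wlen α ≤ m + 1)) := by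
  rw [Finset.disjoint_left]
  intro α hα hα'
  obtain ⟨hR, -⟩ := Finset.mem_filter.mp hα'
  obtain ⟨i₀, tl, rfl, h1, h2⟩ := mem_RmSet.mp hR
  exact absurd (mem_AmSet.mp hα) (by omega)

open Classical in
lemma RmSet_succ (d m : ℕ) :
    RmSet d (m + 1)
      = ((Finset.univ ×ˢ (RmSet d m).filter (fun α => wlen α ≤ m + 1)).image
          fun p : Fin (d + 1) × Word d => p.1 :: p.2)
        ∪ (RmSet d m).filter (fun α => ¬ wlen α ≤ m + 1) := by
  ext β
  simp only [Finset.mem_union, Finset.mem_image, Finset.mem_filter, Finset.mem_product,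
    Finset.mem_univ, true_and, mem_RmSet, Prod.exists]
  constructor
  · rintro ⟨i₀, tl, rfl, h1, h2⟩
    by_cases hm : wlen tl ≤ m
    · exact Or.inr ⟨⟨i₀, tl, rfl, hm, by omega⟩, by omega⟩
    · left
      have htl : wlen tl = m + 1 := by omega
      have htlne : tl ≠ [] := fun e => by simp [e, wlen_nil] at htl
      obtain ⟨j, tl2, rfl⟩ := exists_cons_of_ne_nil htlne
      have := wlen_lt_wlen_cons j tl2
      exact ⟨i₀, j :: tl2, ⟨⟨j, tl2, rfl, by omega, by omega⟩, by omega⟩, rfl⟩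
  · rintro (⟨i, α, ⟨⟨j, tl, rfl, h1, h2⟩, h3⟩, rfl⟩ | ⟨⟨i₀, tl, rfl, h1, h2⟩, h3⟩)
    · have := wlen_lt_wlen_cons i (j :: tl)
      exact ⟨i, j :: tl, rfl, h3, by omega⟩
    · exact ⟨i₀, tl, rfl, by omega, by omega⟩

open Classical in
lemma disjoint_RmSet (d m : ℕ) :
    Disjoint (((Finset.univ ×ˢ (RmSet d m).filter (fun α => wlen α ≤ m + 1)).image
          fun p : Fin (d + 1) × Word d => p.1 :: p.2))
      ((RmSet d m).filter (fun α => ¬ wlen α ≤ m + 1)) := by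
  rw [Finset.disjoint_left]
  rintro β hβ hβ'
  obtain ⟨⟨i, α⟩, hp, rfl⟩ := Finset.mem_image.mp hβ
  have hα := (Finset.mem_filter.mp (Finset.mem_product.mp hp).2).1
  obtain ⟨j, tl, rfl, hj1, hj2⟩ := mem_RmSet.mp hα
  have hβR := (Finset.mem_filter.mp hβ').1
  obtain ⟨i₀, tl', heq, h1, h2⟩ := mem_RmSet.mp hβR
  obtain ⟨rfl, rfl⟩ := List.cons_eq_cons.mp heq
  omega

end AuxMain

section AuxTaylor
variable {d : ℕ} {s t : ℝ} {g : ℝ → Fin d → ℝ} {K : ℝ}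
  {V : Fin (d + 1) → Ed d → Ed d} {x : Ed d} {X : ℝ → Ed d} {f : Ed d → ℝ}

lemma J_expand (hst : s ≤ t) (hgm : Measurable g) (hK : 0 ≤ K)
    (hgK : ∀ᵐ r ∂(volume.restrict (Set.Ioo s t)), ∀ i, |g r i| ≤ K)
    (hV : ∀ i, CbSmooth (V i)) (hX : IsSolution V g s t x X) (hf : CbSmooth f)
    (α : Word d) :
    iterInt g (fun r => vWord V α f (X r)) s α t
      = vWord V α f x * iterInt g (fun _ => 1) s α t
        + ∑ i, iterInt g (fun r => vWord V (i :: α) f (X r)) s (i :: α) t := by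
  have hh : CbSmooth (vWord V α f) := cbSmooth_vWord V hV f hf α
  have hcr := chain_rule hst hgm hK hgK hV hX hh
  have hZc : ∀ i : Fin (d + 1),
      ContinuousOn (fun r => vWord V [i] (vWord V α f) (X r)) (Set.Icc s t) :=
    fun i => (cbSmooth_vWord V hV _ hh [i]).1.continuous.comp_continuousOn hX.1
  exact iterInt_expand hst hgm hgK hZc hcr α

lemma taylor_main (hst : s ≤ t) (hgm : Measurable g) (hK : 0 ≤ K)
    (hgK : ∀ᵐ r ∂(volume.restrict (Set.Ioo s t)), ∀ i, |g r i| ≤ K)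
    (hV : ∀ i, CbSmooth (V i)) (hX : IsSolution V g s t x X) (hf : CbSmooth f)
    (m : ℕ) :
    f (X t) = (∑ α ∈ AmSet d m, vWord V α f x * iterInt g (fun _ => 1) s α t)
      + ∑ α ∈ RmSet d m, iterInt g (fun r => vWord V α f (X r)) s α t := by
  classical
  induction m with
  | zero =>
    have h0 := J_expand hst hgm hK hgK hV hX hf []
    have hA : AmSet d 0 = {[]} := by
      ext α
      simp [mem_AmSet, Nat.le_zero, wlen_eq_zero]
    have hR : RmSet d 0 = Finset.univ.image (fun i : Fin (d + 1) => [i]) := by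
      ext α
      simp only [mem_RmSet, Finset.mem_image, Finset.mem_univ, true_and, InRemainder]
      constructor
      · rintro ⟨i₀, tl, rfl, h1, h2⟩
        have htl : tl = [] := wlen_eq_zero.mp (Nat.le_zero.mp h1)
        exact ⟨i₀, by rw [htl]⟩
      · rintro ⟨i, rfl⟩
        have := wlen_lt_wlen_cons i []
        exact ⟨i, [], rfl, by simp [wlen_nil], by simpa [wlen_nil] using this⟩
    rw [hA, hR, Finset.sum_singleton,
      Finset.sum_image (by intro a _ b _ h; simpa using h)]
    have hJnil : f (X t) = iterInt g (fun r => vWord V [] f (X r)) s [] t := rfl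
    rw [hJnil, h0]
  | succ m ih =>
    set cI : Word d → ℝ := fun α => vWord V α f x * iterInt g (fun _ => 1) s α t with hcI
    set J : Word d → ℝ := fun α => iterInt g (fun r => vWord V α f (X r)) s α t with hJ
    set Rle := (RmSet d m).filter (fun α => wlen α ≤ m + 1) with hRle
    set Rgt := (RmSet d m).filter (fun α => ¬ wlen α ≤ m + 1) with hRgt
    have hsplit : (∑ α ∈ RmSet d m, J α) = (∑ α ∈ Rle, J α) + ∑ α ∈ Rgt, J α :=
      (Finset.sum_filter_add_sum_filter_not _ _ _).symm
    have hexp : ∀ α ∈ Rle, J α = cI α + ∑ i, J (i :: α) :=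
      fun α _ => J_expand hst hgm hK hgK hV hX hf α
    have hAsum : (∑ α ∈ AmSet d (m + 1), cI α)
        = (∑ α ∈ AmSet d m, cI α) + ∑ α ∈ Rle, cI α := by
      rw [AmSet_succ, Finset.sum_union (disjoint_AmSet d m)]
    have hinj : ∀ p ∈ Finset.univ ×ˢ Rle, ∀ q ∈ Finset.univ ×ˢ Rle,
        (fun p : Fin (d + 1) × Word d => p.1 :: p.2) p
          = (fun p : Fin (d + 1) × Word d => p.1 :: p.2) q → p = q := by
      rintro ⟨i, α⟩ - ⟨j, β⟩ - h
      obtain ⟨h1, h2⟩ := List.cons_eq_cons.mp h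
      exact Prod.ext h1 h2
    have hRsum : (∑ α ∈ RmSet d (m + 1), J α)
        = (∑ α ∈ Rle, ∑ i, J (i :: α)) + ∑ α ∈ Rgt, J α := by
      rw [RmSet_succ, Finset.sum_union (disjoint_RmSet d m), Finset.sum_image hinj,
        Finset.sum_product]
      congr 1
      exact Finset.sum_comm
    rw [hAsum, hRsum]
    rw [ih, hsplit, Finset.sum_congr rfl hexp, Finset.sum_add_distrib]
    ring
end AuxTaylor

lemma iterInt_ne_nil_same {d : ℕ} (g : ℝ → Fin d → ℝ) (Y : ℝ → ℝ) (s : ℝ) {α : Word d}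
    (h : α ≠ []) : iterInt g Y s α s = 0 := by
  rw [iterInt_eq_aux]
  obtain ⟨j, w, hw⟩ : ∃ j w, α.reverse = j :: w := by
    cases hr : α.reverse with
    | nil => exact absurd (by simpa using congrArg List.reverse hr) h
    | cons a l => exact ⟨a, l, rfl⟩
  rw [hw]
  exact intervalIntegral.integral_same

lemma tsum_subtype_finset {d : ℕ} (P : Word d → Prop) (S : Finset (Word d))
    (hPS : ∀ a, P a ↔ a ∈ S) (F : Word d → ℝ) :
    (∑' α : {α : Word d // P α}, F α.1) = ∑ α ∈ S, F α := by
  have hP : P = fun a => a ∈ S := funext fun a => propext (hPS a)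
  subst hP
  exact S.tsum_subtype F

theorem stmt18
    (T : ℝ) (hT : 0 < T) (χ : ℝ → ℝ → ℝ) (hχ : IsControl T χ)
    (d : ℕ) (hd : 1 ≤ d) (V : Fin (d + 1) → Ed d → Ed d) (hV : ∀ i, CbSmooth (V i))
    (C : ℝ) (hC : 0 < C)
    (m : ℕ) (s t : ℝ) (h0s : 0 ≤ s) (hst : s ≤ t) (htT : t ≤ T)
    (g : ℝ → Fin d → ℝ) (hg : IsDrivingDeriv χ C s t g)
    (x : Ed d) (X : ℝ → Ed d) (hX : IsSolution V g s t x X)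
    (f : Ed d → ℝ) (hf : CbSmooth f) :
    f (X t) =
      (∑' α : {α : Word d // wlen α ≤ m},
        vWord V α.1 f x * iterInt g (fun _ => 1) s α.1 t)
      + ∑' α : {α : Word d // InRemainder d m α},
          iterInt g (fun r => vWord V α.1 f (X r)) s α.1 t := by
  classical
  rcases eq_or_lt_of_le hst with heq | hlt
  · -- degenerate case s = t
    subst heq
    have hXs : X s = x := by
      have := hX.2 s ⟨le_rfl, le_rfl⟩
      simpa [intervalIntegral.integral_same] using this
    have h1 : (∑' α : {α : Word d // wlen α ≤ m},
        vWord V α.1 f x * iterInt g (fun _ => 1) s α.1 s) = f x := by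
      rw [tsum_eq_single (⟨[], by simp [wlen_nil]⟩ : {α : Word d // wlen α ≤ m}) ?_]
      · show vWord V [] f x * iterInt g (fun _ => 1) s [] s = f x
        have : iterInt g (fun _ => 1) s [] s = 1 := rfl
        rw [this]
        show f x * 1 = f x
        rw [mul_one]
      · rintro ⟨α, hα⟩ hne
        have hαne : α ≠ [] := by
          intro e
          exact hne (Subtype.ext (by simp [e]))
        show vWord V α f x * iterInt g (fun _ => 1) s α s = 0
        rw [iterInt_ne_nil_same g _ s hαne, mul_zero]
    have h2 : (∑' α : {α : Word d // InRemainder d m α},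
        iterInt g (fun r => vWord V α.1 f (X r)) s α.1 s) = 0 := by
      have hz : ∀ α : {α : Word d // InRemainder d m α},
          iterInt g (fun r => vWord V α.1 f (X r)) s α.1 s = 0 := by
        rintro ⟨α, i₀, tl, rfl, -, -⟩
        exact iterInt_ne_nil_same g _ s (by simp)
      rw [tsum_congr hz, tsum_zero]
    rw [h1, h2, add_zero, hXs]
  · -- main case s < t
    set K := C * Real.sqrt (χ s t) / (t - s) with hKdef
    have hK : 0 ≤ K := by
      apply div_nonneg (mul_nonneg hC.le (Real.sqrt_nonneg _))
      linarith
    have hmain := taylor_main hst hg.1 hK hg.2 hV hX hf m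
    rw [tsum_subtype_finset (fun α => wlen α ≤ m) (AmSet d m) (fun a => mem_AmSet.symm)
      (fun α => vWord V α f x * iterInt g (fun _ => 1) s α t),
      tsum_subtype_finset (InRemainder d m) (RmSet d m) (fun a => mem_RmSet.symm)
      (fun α => iterInt g (fun r => vWord V α f (X r)) s α t)]
    exact hmain
end
end
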